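/- arXiv:1509.08276 — 9 statements merged into one kernel-verified Lean document; each statement's English description precedes it below -/
import Mathlib

section
/- Let n be an odd integer, n ≥ 3, and let Q be a family of 3-element subsets of [n]. If there exist two distinct balls x,y ∈ [n] whose co-degree satisfies d_Q(x,y) < (n−2)/2, then Q does not determine a non-minority ball; that is, there exists an answer function a for Q admitting at least one legal coloring such that for every ball b ∈ [n] there is a coloring legal for a under which b is not a non-minority ball of [n]. -/
/-!
Write `n = 2m + 1`. Fewer than `m` queries contain both `x` and `y`, so some set `A` of `m - 1`
balls other than `x, y` contains the third ball of each of them. Let `B` be the `m` remaining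
balls and take the three colorings whose `true` classes are `{x} ∪ A`, `{y} ∪ A` and `B`: each
ball lies in a `true` class, i.e. in a minority of size `m`, under one of them. In every query
some ball is a majority ball under all three colorings; this only depends on the types
(`x`, `y`, `A`, `B`) of its three balls, and fails only for the pattern `{x, y, b}` with `b ∈ B`,
which the choice of `A` excludes. Answering such a ball makes all three colorings legal.
-/

/-- `b` is a majority ball of `A` under coloring `c`:
strictly more than `|A|/2` balls of `A` have color `c b`. -/
def majBall {n : ℕ} (c : Fin n → Bool) (A : Finset (Fin n)) (b : Fin n) : Prop :=
  b ∈ A ∧ A.card < 2 * (A.filter fun x => c x = c b).card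

/-- `b` is a non-minority ball of `A` under coloring `c`:
at least `|A|/2` balls of `A` have color `c b`. -/
def nonMinBall {n : ℕ} (c : Fin n → Bool) (A : Finset (Fin n)) (b : Fin n) : Prop :=
  b ∈ A ∧ A.card ≤ 2 * (A.filter fun x => c x = c b).card

/-- A coloring `c` is legal for the answer function `a` on the query set `Q`. -/
def Legal {n : ℕ} (Q : Finset (Finset (Fin n))) (a : Finset (Fin n) → Fin n)
    (c : Fin n → Bool) : Prop :=
  ∀ T ∈ Q, majBall c T (a T)

/-- The query set `Q` determines a non-minority ball. -/
def Determines {n : ℕ} (Q : Finset (Finset (Fin n))) : Prop :=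
  ∀ a : Finset (Fin n) → Fin n, (∀ T ∈ Q, a T ∈ T) → (∃ c, Legal Q a c) →
    ∃ b : Fin n, ∀ c : Fin n → Bool, Legal Q a c → nonMinBall c Finset.univ b

/-- Co-degree: the number of queries of `Q` containing both `x` and `y`. -/
def codeg {n : ℕ} (Q : Finset (Finset (Fin n))) (x y : Fin n) : ℕ :=
  (Q.filter fun T => x ∈ T ∧ y ∈ T).card

open Finset

section Majority

variable {n : ℕ}

lemma majBall_triple_iff {c : Fin n → Bool} {p q r : Fin n} (hpq : p ≠ q) (hpr : p ≠ r)
    (hqr : q ≠ r) : majBall c {p, q, r} p ↔ c q = c p ∨ c r = c p := by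
  unfold majBall
  rw [card_eq_three.2 ⟨p, q, r, hpq, hpr, hqr, rfl⟩, filter_insert, filter_insert,
    filter_singleton]
  by_cases hq : c q = c p <;> by_cases hr : c r = c p <;>
    simp [hq, hr, hpq, hpr, hqr]

lemma not_nonMinBall_univ {c : Fin n → Bool} {b : Fin n}
    (h : 2 * #{v | c v = c b} < n) : ¬ nonMinBall c univ b := by
  rintro ⟨-, hle⟩
  rw [card_univ, Fintype.card_fin] at hle
  omega

lemma exists_answer_legal_forall [NeZero n] {ι : Type*} (Q : Finset (Finset (Fin n)))
    (C : ι → Fin n → Bool) (h : ∀ T ∈ Q, ∃ u ∈ T, ∀ i, majBall (C i) T u) :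
    ∃ a : Finset (Fin n) → Fin n, (∀ T ∈ Q, a T ∈ T) ∧ ∀ i, Legal Q a (C i) := by
  choose! a haT ha using h
  exact ⟨a, haT, fun i T hT => ha T hT i⟩

end Majority

section BallTypes

/-- Row `i` is the `i`-th coloring of the construction, column `t` the balls of type `t`:
`x`, `y`, the set `A`, and the remaining balls. -/
def typeColoring : Fin 3 → Fin 4 → Bool :=
  ![![true, false, true, false],
    ![false, true, true, false],
    ![false, false, false, true]]

lemma typeColoring_common_majority :
    ∀ s t u : Fin 4, ¬ ({0, 1, 3} : Finset (Fin 4)) ⊆ {s, t, u} →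
      (∀ i, typeColoring i t = typeColoring i s ∨ typeColoring i u = typeColoring i s) ∨
      (∀ i, typeColoring i s = typeColoring i t ∨ typeColoring i u = typeColoring i t) ∨
      (∀ i, typeColoring i s = typeColoring i u ∨ typeColoring i t = typeColoring i u) := by
  decide

lemma exists_typeColoring_eq_true : ∀ t : Fin 4, ∃ i, typeColoring i t = true := by
  decide

variable {n : ℕ} (x y : Fin n) (A : Finset (Fin n))

def ballType (v : Fin n) : Fin 4 :=
  if v = x then 0 else if v = y then 1 else if v ∈ A then 2 else 3

variable {x y A}

lemma ballType_eq_zero_iff {v : Fin n} : ballType x y A v = 0 ↔ v = x := by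
  unfold ballType; split_ifs <;> simp_all

lemma ballType_eq_one_iff (hxy : x ≠ y) {v : Fin n} : ballType x y A v = 1 ↔ v = y := by
  unfold ballType; split_ifs <;> simp_all

lemma ballType_eq_two_iff (hxA : x ∉ A) (hyA : y ∉ A) {v : Fin n} :
    ballType x y A v = 2 ↔ v ∈ A := by
  unfold ballType; split_ifs <;> simp_all

lemma ballType_eq_three_iff {v : Fin n} :
    ballType x y A v = 3 ↔ v ∉ insert x (insert y A) := by
  unfold ballType; split_ifs <;> simp_all

end BallTypes

section Construction

variable {n : ℕ} {Q : Finset (Finset (Fin n))} {x y : Fin n} {A : Finset (Fin n)}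

lemma exists_cover_of_codeg_le (hQ3 : ∀ T ∈ Q, #T = 3) (hxy : x ≠ y) {k : ℕ}
    (hk : codeg Q x y ≤ k) (hkn : k + 2 ≤ n) :
    ∃ A : Finset (Fin n), x ∉ A ∧ y ∉ A ∧ #A = k ∧
      ∀ T ∈ Q, x ∈ T → y ∈ T → T ⊆ insert x (insert y A) := by
  set Z := {T ∈ Q | x ∈ T ∧ y ∈ T}.biUnion (· \ {x, y})
  have hZcard : #Z ≤ k := by
    refine (card_biUnion_le_card_mul _ _ 1 fun T hT => ?_).trans (by simpa [codeg] using hk)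
    obtain ⟨hTQ, hxT, hyT⟩ := mem_filter.1 hT
    rw [card_sdiff_of_subset (by simp [insert_subset_iff, hxT, hyT]), hQ3 T hTQ, card_pair hxy]
  have hZ : Z ⊆ univ \ {x, y} := fun v hv => by
    obtain ⟨T, -, hvT⟩ := mem_biUnion.1 hv
    exact mem_sdiff.2 ⟨mem_univ v, (mem_sdiff.1 hvT).2⟩
  have hcompl : #(univ \ {x, y} : Finset (Fin n)) = n - 2 := by
    rw [card_sdiff_of_subset (subset_univ _), card_univ, Fintype.card_fin, card_pair hxy]
  obtain ⟨A, hZA, hA, hAcard⟩ := exists_subsuperset_card_eq hZ hZcard (by omega)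
  refine ⟨A, fun hx => by simpa using hA hx, fun hy => by simpa using hA hy, hAcard, ?_⟩
  intro T hT hxT hyT v hvT
  by_cases hv : v ∈ ({x, y} : Finset (Fin n))
  · simp only [mem_insert, mem_singleton] at hv ⊢
    tauto
  · exact mem_insert_of_mem (mem_insert_of_mem
      (hZA (mem_biUnion.2 ⟨T, mem_filter.2 ⟨hT, hxT, hyT⟩, mem_sdiff.2 ⟨hvT, hv⟩⟩)))

lemma not_subset_image_ballType (hxy : x ≠ y)
    (hA : ∀ T ∈ Q, x ∈ T → y ∈ T → T ⊆ insert x (insert y A)) {T : Finset (Fin n)}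
    (hT : T ∈ Q) : ¬ ({0, 1, 3} : Finset (Fin 4)) ⊆ T.image (ballType x y A) := by
  intro hsub
  obtain ⟨x', hx'T, hx'⟩ := mem_image.1 (hsub (by simp : (0 : Fin 4) ∈ _))
  obtain ⟨y', hy'T, hy'⟩ := mem_image.1 (hsub (by simp : (1 : Fin 4) ∈ _))
  obtain ⟨z, hzT, hz⟩ := mem_image.1 (hsub (by simp : (3 : Fin 4) ∈ _))
  rw [ballType_eq_zero_iff] at hx'
  rw [ballType_eq_one_iff hxy] at hy'
  subst hx' hy'
  exact ballType_eq_three_iff.1 hz (hA T hT hx'T hy'T hzT)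

lemma exists_majBall_typeColoring (hQ3 : ∀ T ∈ Q, #T = 3) (hxy : x ≠ y)
    (hA : ∀ T ∈ Q, x ∈ T → y ∈ T → T ⊆ insert x (insert y A)) :
    ∀ T ∈ Q, ∃ u ∈ T, ∀ i, majBall (fun v => typeColoring i (ballType x y A v)) T u := by
  intro T hT
  have hforb := not_subset_image_ballType hxy hA hT
  obtain ⟨p, q, r, hpq, hpr, hqr, rfl⟩ := card_eq_three.1 (hQ3 T hT)
  simp only [image_insert, image_singleton] at hforb
  rcases typeColoring_common_majority _ _ _ hforb with h | h | h
  · exact ⟨p, by simp, fun i => (majBall_triple_iff hpq hpr hqr).2 (h i)⟩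
  · refine ⟨q, by simp, fun i => ?_⟩
    rw [insert_comm]
    exact (majBall_triple_iff hpq.symm hqr hpr).2 (h i)
  · refine ⟨r, by simp, fun i => ?_⟩
    rw [pair_comm, insert_comm]
    exact (majBall_triple_iff hpr.symm hqr.symm hpq).2 (h i)

lemma card_typeColoring_eq_true {m : ℕ} (hn : n = 2 * m + 1) (hxy : x ≠ y) (hxA : x ∉ A)
    (hyA : y ∉ A) (hAcard : #A + 1 = m) (i : Fin 3) :
    #{v | typeColoring i (ballType x y A v) = true} = m := by
  set fibre := fun t : Fin 4 => #{v | ballType x y A v = t}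
  have h0 : fibre 0 = 1 := by simp [fibre, ballType_eq_zero_iff, filter_eq']
  have h1 : fibre 1 = 1 := by simp [fibre, ballType_eq_one_iff hxy, filter_eq']
  have h2 : fibre 2 = #A := by simp [fibre, ballType_eq_two_iff hxA hyA]
  have hsum : n = ∑ t, fibre t := by
    simpa using card_eq_sum_card_fiberwise (s := univ) (t := univ)
      (f := ballType x y A) (fun _ _ => mem_coe.2 (mem_univ _))
  have hclass : #{v | typeColoring i (ballType x y A v) = true} =
      ∑ t with typeColoring i t = true, fibre t := by
    rw [sum_card_fiberwise_eq_card_filter]; simp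
  rw [Fin.sum_univ_four] at hsum
  rw [hclass, sum_filter, Fin.sum_univ_four]
  fin_cases i <;> simp [typeColoring] <;> omega

end Construction

theorem stmt_0_general (n : ℕ) (hodd : Odd n) (Q : Finset (Finset (Fin n)))
    (hQ3 : ∀ T ∈ Q, T.card = 3) (x y : Fin n) (hxy : x ≠ y)
    (hcod : 2 * codeg Q x y < n - 2) :
    ∃ a : Finset (Fin n) → Fin n, (∀ T ∈ Q, a T ∈ T) ∧ (∃ c, Legal Q a c) ∧
      ∀ b : Fin n, ∃ c : Fin n → Bool, Legal Q a c ∧ ¬ nonMinBall c Finset.univ b := by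
  obtain ⟨m, hm⟩ := hodd
  have : NeZero n := ⟨by omega⟩
  obtain ⟨A, hxA, hyA, hAcard, hA⟩ :=
    exists_cover_of_codeg_le hQ3 hxy (k := m - 1) (by omega) (by omega)
  obtain ⟨a, haT, hlegal⟩ := exists_answer_legal_forall Q
    (fun i v => typeColoring i (ballType x y A v)) (exists_majBall_typeColoring hQ3 hxy hA)
  refine ⟨a, haT, ⟨_, hlegal 0⟩, fun b => ?_⟩
  obtain ⟨i, hi⟩ := exists_typeColoring_eq_true (ballType x y A b)
  refine ⟨_, hlegal i, not_nonMinBall_univ ?_⟩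
  rw [hi, card_typeColoring_eq_true hm hxy hxA hyA (by omega)]
  omega

theorem stmt_0 (n : ℕ) (hodd : Odd n) (hn : 3 ≤ n) (Q : Finset (Finset (Fin n)))
    (hQ3 : ∀ T ∈ Q, T.card = 3) (x y : Fin n) (hxy : x ≠ y)
    (hcod : 2 * codeg Q x y < n - 2) :
    ∃ a : Finset (Fin n) → Fin n, (∀ T ∈ Q, a T ∈ T) ∧ (∃ c, Legal Q a c) ∧
      ∀ b : Fin n, ∃ c : Fin n → Bool, Legal Q a c ∧ ¬ nonMinBall c Finset.univ b :=
  stmt_0_general n hodd Q hQ3 x y hxy hcod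
end

section
/- For every integer n ≥ 5 there exists a family Q of 3-element subsets of [n] with δ₂(Q) = ⌊n/2⌋ + 1 that determines a non-minority ball. (Such a family is Q = all 3-subsets of [n] except those entirely contained in the complement of a fixed set S of size ⌊n/2⌋+1.) -/
open Finset

/-- The filter of a 3-element set on "same color as `p`" is `{p}` when the other
two elements have different colors from `p`. -/
lemma triple_filter {α : Type*} [DecidableEq α] (c : α → Bool) {p q z : α}
    (hpq : p ≠ q) (hpz : p ≠ z) (hq : ¬ (c q = c p)) (hz : ¬ (c z = c p)) :
    (insert p (insert q ({z} : Finset α))).filter (fun x => c x = c p) = {p} := by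
  ext w
  simp only [mem_filter, mem_insert, mem_singleton]
  constructor
  · rintro ⟨(rfl | rfl | rfl), hc⟩
    · rfl
    · exact absurd hc hq
    · exact absurd hc hz
  · rintro rfl
    exact ⟨Or.inl rfl, rfl⟩

lemma triple_card {α : Type*} [DecidableEq α] {p q z : α}
    (hpq : p ≠ q) (hpz : p ≠ z) (hqz : q ≠ z) :
    (insert p (insert q ({z} : Finset α))).card = 3 := by
  rw [card_insert_of_notMem (by simp [hpq, hpz]),
    card_insert_of_notMem (by simp [hqz]), card_singleton]

/-- If `c` is legal, the answer to a query `{p,q,z}` cannot be `p` when `q` and `z`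
both have the opposite color to `p`. -/
lemma not_ans {n : ℕ} {Q : Finset (Finset (Fin n))} {a : Finset (Fin n) → Fin n}
    {c : Fin n → Bool} (hL : Legal Q a c) {T : Finset (Fin n)} (hT : T ∈ Q)
    {p q z : Fin n} (hTeq : T = insert p (insert q ({z} : Finset (Fin n))))
    (hpq : p ≠ q) (hpz : p ≠ z) (hqz : q ≠ z)
    (hq : ¬ (c q = c p)) (hz : ¬ (c z = c p)) : a T ≠ p := by
  intro hap
  obtain ⟨-, hlt⟩ := hL T hT
  rw [hap, hTeq, triple_filter c hpq hpz hq hz, triple_card hpq hpz hqz] at hlt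
  simp at hlt

set_option maxHeartbeats 2000000 in
theorem stmt_1 (n : ℕ) (hn : 5 ≤ n) :
    ∃ Q : Finset (Finset (Fin n)), (∀ T ∈ Q, T.card = 3) ∧
      (∀ x y : Fin n, x ≠ y → n / 2 + 1 ≤ codeg Q x y) ∧
      (∃ x y : Fin n, x ≠ y ∧ codeg Q x y = n / 2 + 1) ∧
      Determines Q := by
  classical
  set m := n / 2 with hm
  have hmba : m + 1 ≤ n := by omega
  set S : Finset (Fin n) := (Finset.range (m + 1)).attachFin
    (fun i hi => by simp only [Finset.mem_range] at hi; omega) with hS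
  have hSmem : ∀ x : Fin n, x ∈ S ↔ (x : ℕ) ≤ m := by
    intro x
    simp [hS, Finset.mem_attachFin, Nat.lt_succ_iff]
  have hScard : S.card = m + 1 := by
    simp [hS, Finset.card_attachFin]
  set Q : Finset (Finset (Fin n)) :=
    (Finset.univ.powersetCard 3).filter (fun T => (T ∩ S).Nonempty) with hQ
  have hQmem : ∀ T : Finset (Fin n), T ∈ Q ↔ T.card = 3 ∧ (T ∩ S).Nonempty := by
    intro T
    simp [hQ, Finset.mem_powersetCard, Finset.subset_univ]
  -- codegree formula
  have codeg_eq : ∀ x y : Fin n, x ≠ y →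
      codeg Q x y = (Finset.univ.filter (fun z => z ≠ x ∧ z ≠ y ∧
        ((insert x (insert y ({z} : Finset (Fin n)))) ∩ S).Nonempty)).card := by
    intro x y hxy
    have himg : Q.filter (fun T => x ∈ T ∧ y ∈ T) =
        (Finset.univ.filter (fun z => z ≠ x ∧ z ≠ y ∧
          ((insert x (insert y ({z} : Finset (Fin n)))) ∩ S).Nonempty)).image
          (fun z => insert x (insert y ({z} : Finset (Fin n)))) := by
      ext T
      simp only [mem_filter, mem_image, mem_univ, true_and]
      constructor
      · rintro ⟨hTQ, hxT, hyT⟩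
        obtain ⟨hT3, hTS⟩ := (hQmem T).1 hTQ
        have hyx : y ∈ T.erase x := mem_erase.2 ⟨hxy.symm, hyT⟩
        have h1 : ((T.erase x).erase y).card = 1 := by
          rw [card_erase_of_mem hyx, card_erase_of_mem hxT, hT3]
        obtain ⟨z, hz⟩ := Finset.card_eq_one.1 h1
        have hzx : z ≠ x := by
          have := hz ▸ mem_singleton_self z
          exact (mem_erase.1 (mem_of_mem_erase this)).1
        have hzy : z ≠ y := by
          have := hz ▸ mem_singleton_self z
          exact (mem_erase.1 this).1
        have hTeq : T = insert x (insert y ({z} : Finset (Fin n))) := by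
          ext w
          simp only [mem_insert, mem_singleton]
          constructor
          · intro hwT
            by_cases hwx : w = x
            · exact Or.inl hwx
            by_cases hwy : w = y
            · exact Or.inr (Or.inl hwy)
            have : w ∈ (T.erase x).erase y := mem_erase.2 ⟨hwy, mem_erase.2 ⟨hwx, hwT⟩⟩
            rw [hz, mem_singleton] at this
            exact Or.inr (Or.inr this)
          · rintro (rfl | rfl | hwz)
            · exact hxT
            · exact hyT
            · rw [hwz]
              have hzz : z ∈ (T.erase x).erase y := by
                rw [hz]; exact mem_singleton_self z
              exact mem_of_mem_erase (mem_of_mem_erase hzz)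
        exact ⟨z, ⟨hzx, hzy, by rw [← hTeq]; exact hTS⟩, hTeq.symm⟩
      · rintro ⟨z, ⟨hzx, hzy, hne⟩, rfl⟩
        refine ⟨(hQmem _).2 ⟨triple_card hxy (Ne.symm hzx) (Ne.symm hzy), hne⟩, ?_, ?_⟩
        · exact mem_insert_self _ _
        · exact mem_insert_of_mem (mem_insert_self _ _)
    unfold codeg
    rw [himg]
    apply Finset.card_image_of_injOn
    intro z hz z' hz' heq
    simp only [Finset.coe_filter, Set.mem_setOf_eq, mem_univ, true_and] at hz hz'
    have heq2 : (insert x (insert y ({z} : Finset (Fin n)))) =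
        insert x (insert y ({z'} : Finset (Fin n))) := heq
    have : z ∈ insert x (insert y ({z'} : Finset (Fin n))) := by
      rw [← heq2]; simp
    rcases mem_insert.1 this with h | h
    · exact absurd h hz.1
    rcases mem_insert.1 h with h | h
    · exact absurd h hz.2.1
    · exact mem_singleton.1 h
  -- case: one of x, y in S
  have codeg_inS : ∀ x y : Fin n, x ≠ y → (x ∈ S ∨ y ∈ S) → codeg Q x y = n - 2 := by
    intro x y hxy hins
    rw [codeg_eq x y hxy]
    have : (Finset.univ.filter (fun z => z ≠ x ∧ z ≠ y ∧
        ((insert x (insert y ({z} : Finset (Fin n)))) ∩ S).Nonempty)) =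
        (Finset.univ.erase x).erase y := by
      ext z
      rw [mem_filter, mem_erase, mem_erase]
      constructor
      · rintro ⟨-, h1, h2, -⟩; exact ⟨h2, h1, mem_univ z⟩
      · rintro ⟨h2, h1, -⟩
        refine ⟨mem_univ z, h1, h2, ?_⟩
        rcases hins with h | h
        · exact ⟨x, mem_inter.2 ⟨mem_insert_self _ _, h⟩⟩
        · exact ⟨y, mem_inter.2 ⟨mem_insert_of_mem (mem_insert_self _ _), h⟩⟩
    rw [this, card_erase_of_mem (mem_erase.2 ⟨hxy.symm, mem_univ y⟩),
      card_erase_of_mem (mem_univ x), card_univ, Fintype.card_fin]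
    omega
  -- case: both outside S
  have codeg_outS : ∀ x y : Fin n, x ≠ y → x ∉ S → y ∉ S → codeg Q x y = m + 1 := by
    intro x y hxy hxS hyS
    rw [codeg_eq x y hxy]
    have : (Finset.univ.filter (fun z => z ≠ x ∧ z ≠ y ∧
        ((insert x (insert y ({z} : Finset (Fin n)))) ∩ S).Nonempty)) = S := by
      ext z
      simp only [mem_filter, mem_univ, true_and]
      constructor
      · rintro ⟨-, -, w, hw⟩
        rw [mem_inter] at hw
        rcases mem_insert.1 hw.1 with rfl | h
        · exact absurd hw.2 hxS
        rcases mem_insert.1 h with rfl | h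
        · exact absurd hw.2 hyS
        · rw [mem_singleton] at h; exact h ▸ hw.2
      · intro hzS
        have hzx : z ≠ x := fun h => hxS (h ▸ hzS)
        have hzy : z ≠ y := fun h => hyS (h ▸ hzS)
        exact ⟨hzx, hzy, ⟨z, mem_inter.2 ⟨by simp, hzS⟩⟩⟩
    rw [this, hScard]
  refine ⟨Q, ?_, ?_, ?_, ?_⟩
  · -- all queries have size 3
    intro T hT
    exact ((hQmem T).1 hT).1
  · -- min codegree
    intro x y hxy
    by_cases hx : x ∈ S
    · rw [codeg_inS x y hxy (Or.inl hx)]; omega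
    by_cases hy : y ∈ S
    · rw [codeg_inS x y hxy (Or.inr hy)]; omega
    · rw [codeg_outS x y hxy hx hy]
  · -- codegree equality witness
    have h1 : m + 1 < n := by omega
    have h2 : m + 2 < n := by omega
    refine ⟨⟨m + 1, h1⟩, ⟨m + 2, h2⟩, ?_, ?_⟩
    · intro h
      have := Fin.mk.injEq (m+1) h1 (m+2) h2 ▸ h
      simp at this
    · have hx : (⟨m + 1, h1⟩ : Fin n) ∉ S := by
        rw [hSmem]; simp
      have hy : (⟨m + 2, h2⟩ : Fin n) ∉ S := by
        rw [hSmem]; simp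
      have hxy : (⟨m + 1, h1⟩ : Fin n) ≠ ⟨m + 2, h2⟩ := by
        intro h
        have : m + 1 = m + 2 := Fin.mk.inj_iff.1 h
        omega
      rw [codeg_outS _ _ hxy hx hy]
  · -- Determines
    intro a ha _
    by_contra hno
    push_neg at hno
    -- for each ball, a legal coloring where it is in a strictly small class
    choose cc hLeg hSmall using hno
    -- the family of small legal classes
    set G : Finset (Finset (Fin n)) :=
      Finset.univ.image (fun b => Finset.univ.filter (fun w => cc b w = cc b b)) with hG
    have hGprop : ∀ B ∈ G, ∃ b : Fin n,
        B = Finset.univ.filter (fun w => cc b w = cc b b) := by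
      intro B hB
      obtain ⟨b, -, hb⟩ := Finset.mem_image.1 hB
      exact ⟨b, hb.symm⟩
    have hGsmall : ∀ B ∈ G, 2 * B.card ≤ n - 1 := by
      intro B hB
      obtain ⟨b, rfl⟩ := hGprop B hB
      have := hSmall b
      rw [nonMinBall] at this
      push_neg at this
      have h2 := this (mem_univ b)
      rw [card_univ, Fintype.card_fin] at h2
      omega
    have hGcov : ∀ x : Fin n, ∃ B ∈ G, x ∈ B := by
      intro x
      refine ⟨Finset.univ.filter (fun w => cc x w = cc x x), ?_, ?_⟩
      · exact Finset.mem_image.2 ⟨x, mem_univ x, rfl⟩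
      · simp
    -- minimal subcover
    set 𝒞 : Finset (Finset (Finset (Fin n))) :=
      G.powerset.filter (fun F => ∀ x : Fin n, ∃ B ∈ F, x ∈ B) with h𝒞
    have hG𝒞 : G ∈ 𝒞 := by
      rw [h𝒞, mem_filter]
      exact ⟨Finset.mem_powerset.2 (Finset.Subset.refl G), hGcov⟩
    obtain ⟨F, hF𝒞, hFmin⟩ := Finset.exists_min_image 𝒞 Finset.card ⟨G, hG𝒞⟩
    rw [h𝒞, mem_filter] at hF𝒞
    have hFG : F ⊆ G := Finset.mem_powerset.1 hF𝒞.1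
    have cover_F : ∀ x : Fin n, ∃ B ∈ F, x ∈ B := hF𝒞.2
    -- private elements
    have hpriv : ∀ B ∈ F, ∃ p, p ∈ B ∧ ∀ B' ∈ F, B' ≠ B → p ∉ B' := by
      intro B hB
      by_contra hcon
      push_neg at hcon
      have herase : ∀ x : Fin n, ∃ B' ∈ F.erase B, x ∈ B' := by
        intro x
        obtain ⟨B', hB', hxB'⟩ := cover_F x
        by_cases hBB : B' = B
        · subst hBB
          obtain ⟨B'', hB'', hne, hx⟩ := hcon x hxB'
          exact ⟨B'', mem_erase.2 ⟨hne, hB''⟩, hx⟩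
        · exact ⟨B', mem_erase.2 ⟨hBB, hB'⟩, hxB'⟩
      have hmem𝒞 : F.erase B ∈ 𝒞 := by
        rw [h𝒞, mem_filter]
        exact ⟨Finset.mem_powerset.2 ((Finset.erase_subset _ _).trans hFG), herase⟩
      have := hFmin _ hmem𝒞
      have hlt : (F.erase B).card < F.card := Finset.card_erase_lt_of_mem hB
      omega
    -- |F| >= 3
    have hbiu : (Finset.univ : Finset (Fin n)) ⊆ F.biUnion id := by
      intro x _
      obtain ⟨B, hB, hxB⟩ := cover_F x
      exact Finset.mem_biUnion.2 ⟨B, hB, hxB⟩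
    have hnle : n ≤ ∑ B ∈ F, B.card := by
      calc n = (Finset.univ : Finset (Fin n)).card := by
              rw [card_univ, Fintype.card_fin]
        _ ≤ (F.biUnion id).card := Finset.card_le_card hbiu
        _ ≤ ∑ B ∈ F, (id B).card := Finset.card_biUnion_le
    have hsumsmall : 2 * (∑ B ∈ F, B.card) ≤ F.card * (n - 1) := by
      calc 2 * (∑ B ∈ F, B.card) = ∑ B ∈ F, 2 * B.card := by rw [Finset.mul_sum]
        _ ≤ ∑ _B ∈ F, (n - 1) := Finset.sum_le_sum (fun B hB => hGsmall B (hFG hB))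
        _ = F.card * (n - 1) := by rw [Finset.sum_const, smul_eq_mul]
    have hf3 : 3 ≤ F.card := by
      by_contra hf
      push_neg at hf
      have : F.card * (n - 1) ≤ 2 * (n - 1) := by
        apply Nat.mul_le_mul_right
        omega
      omega
    -- S ⊆ B ∪ B' for distinct members of F
    have P2 : ∀ B ∈ F, ∀ B' ∈ F, B ≠ B' → ∀ z ∈ S, z ∈ B ∨ z ∈ B' := by
      intro B hB B' hB' hne z hzS
      by_contra hz
      push_neg at hz
      obtain ⟨hzB, hzB'⟩ := hz
      obtain ⟨p, hpB, hp⟩ := hpriv B hB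
      obtain ⟨p', hp'B', hp'⟩ := hpriv B' hB'
      obtain ⟨Bl, hBl, hzBl⟩ := cover_F z
      have hBlB : Bl ≠ B := fun h => hzB (h ▸ hzBl)
      have hBlB' : Bl ≠ B' := fun h => hzB' (h ▸ hzBl)
      have hp'B : p' ∉ B := hp' B hB hne
      have hpB' : p ∉ B' := hp B' hB' (Ne.symm hne)
      have hpBl : p ∉ Bl := hp Bl hBl hBlB
      have hp'Bl : p' ∉ Bl := hp' Bl hBl hBlB'
      have hps : p ≠ p' := fun h => hp'B (h ▸ hpB)
      have hpz : p ≠ z := fun h => hzB (h ▸ hpB)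
      have hp'z : p' ≠ z := fun h => hzB' (h ▸ hp'B')
      set T : Finset (Fin n) := insert p (insert p' ({z} : Finset (Fin n))) with hT
      have hTQ : T ∈ Q := by
        rw [hQmem]
        refine ⟨triple_card hps hpz hp'z, ⟨z, mem_inter.2 ⟨?_, hzS⟩⟩⟩
        simp [hT]
      have haT : a T ∈ T := ha T hTQ
      obtain ⟨b, hbeq⟩ := hGprop B (hFG hB)
      obtain ⟨b', hb'eq⟩ := hGprop B' (hFG hB')
      obtain ⟨bl, hbleq⟩ := hGprop Bl (hFG hBl)
      have memB : ∀ w : Fin n, w ∈ B ↔ cc b w = cc b b := by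
        intro w; rw [hbeq]; simp
      have memB' : ∀ w : Fin n, w ∈ B' ↔ cc b' w = cc b' b' := by
        intro w; rw [hb'eq]; simp
      have memBl : ∀ w : Fin n, w ∈ Bl ↔ cc bl w = cc bl bl := by
        intro w; rw [hbleq]; simp
      rw [hT] at haT
      rcases mem_insert.1 haT with hcase | hcase
      · -- a T = p : contradiction with coloring of B
        refine not_ans (hLeg b) hTQ hT hps hpz hp'z ?_ ?_ hcase
        · intro h
          exact (fun hx => hp'B ((memB p').2 hx)) (h.trans ((memB p).1 hpB))
        · intro h
          exact (fun hx => hzB ((memB z).2 hx)) (h.trans ((memB p).1 hpB))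
      rcases mem_insert.1 hcase with hcase2 | hcase2
      · -- a T = p' : contradiction with coloring of B'
        have hT2 : T = insert p' (insert p ({z} : Finset (Fin n))) := by
          ext w; simp only [hT, mem_insert, mem_singleton]; tauto
        refine not_ans (hLeg b') hTQ hT2 (Ne.symm hps) hp'z hpz ?_ ?_ hcase2
        · intro h
          exact (fun hx => hpB' ((memB' p).2 hx)) (h.trans ((memB' p').1 hp'B'))
        · intro h
          exact (fun hx => hzB' ((memB' z).2 hx)) (h.trans ((memB' p').1 hp'B'))
      · -- a T = z : contradiction with coloring of Bl
        rw [mem_singleton] at hcase2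
        have hT3 : T = insert z (insert p ({p'} : Finset (Fin n))) := by
          ext w; simp only [hT, mem_insert, mem_singleton]; tauto
        refine not_ans (hLeg bl) hTQ hT3 (Ne.symm hpz) (Ne.symm hp'z) hps ?_ ?_ hcase2
        · intro h
          exact (fun hx => hpBl ((memBl p).2 hx)) (h.trans ((memBl z).1 hzBl))
        · intro h
          exact (fun hx => hp'Bl ((memBl p').2 hx)) (h.trans ((memBl z).1 hzBl))
    -- degree bounds
    have degS : ∀ z ∈ S, F.card - 1 ≤ (F.filter (fun B => z ∈ B)).card := by
      intro z hz
      have hle1 : (F.filter (fun B => z ∉ B)).card ≤ 1 := by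
        by_contra hc
        push_neg at hc
        obtain ⟨B, hB, B', hB', hne⟩ := Finset.one_lt_card.1 hc
        rw [mem_filter] at hB hB'
        rcases P2 B hB.1 B' hB'.1 hne z hz with h | h
        · exact hB.2 h
        · exact hB'.2 h
      have hsplit := Finset.card_filter_add_card_filter_not
        (s := F) (p := fun B => z ∈ B)
      omega
    have deg1 : ∀ x : Fin n, 1 ≤ (F.filter (fun B => x ∈ B)).card := by
      intro x
      obtain ⟨B, hB, hxB⟩ := cover_F x
      exact Finset.card_pos.2 ⟨B, mem_filter.2 ⟨hB, hxB⟩⟩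
    -- double counting
    have hA : ∑ B ∈ F, B.card = ∑ x : Fin n, (F.filter (fun B => x ∈ B)).card := by
      have h1 : ∀ B ∈ F, B.card = ∑ x : Fin n, if x ∈ B then 1 else 0 := by
        intro B _
        rw [← Finset.card_filter]
        congr 1
        ext w; simp
      rw [Finset.sum_congr rfl h1, Finset.sum_comm]
      exact Finset.sum_congr rfl (fun x _ => (Finset.card_filter _ _).symm)
    have hsdiffcard : (Finset.univ \ S).card = n - (m + 1) := by
      rw [Finset.card_sdiff_of_subset (Finset.subset_univ S), card_univ, Fintype.card_fin, hScard]
    have hlowS : (m + 1) * (F.card - 1) ≤ ∑ x ∈ S, (F.filter (fun B => x ∈ B)).card := by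
      calc (m + 1) * (F.card - 1) = ∑ _x ∈ S, (F.card - 1) := by
            rw [Finset.sum_const, smul_eq_mul, hScard]
        _ ≤ _ := Finset.sum_le_sum degS
    have hlowO : n - (m + 1) ≤ ∑ x ∈ Finset.univ \ S, (F.filter (fun B => x ∈ B)).card := by
      calc n - (m + 1) = ∑ _x ∈ Finset.univ \ S, 1 := by
            rw [Finset.sum_const, smul_eq_mul, hsdiffcard, mul_one]
        _ ≤ _ := Finset.sum_le_sum (fun x _ => deg1 x)
    have hsum_split : ∑ x ∈ Finset.univ \ S, (F.filter (fun B => x ∈ B)).card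
        + ∑ x ∈ S, (F.filter (fun B => x ∈ B)).card
        = ∑ x : Fin n, (F.filter (fun B => x ∈ B)).card :=
      Finset.sum_sdiff (Finset.subset_univ S)
    have hlow : (m + 1) * (F.card - 1) + (n - (m + 1)) ≤ ∑ B ∈ F, B.card := by
      rw [hA, ← hsum_split]
      omega
    -- final arithmetic contradiction
    obtain ⟨k, hk⟩ : ∃ k, F.card = k + 3 := ⟨F.card - 3, by omega⟩
    rcases (by omega : n = 2 * m + 1 ∨ n = 2 * m) with he | he
    · have e1 : n - (m + 1) = m := by omega
      have e2 : n - 1 = 2 * m := by omega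
      have e3 : F.card - 1 = k + 2 := by omega
      rw [e1, e3] at hlow
      rw [e2, hk] at hsumsmall
      nlinarith [hlow, hsumsmall]
    · have hm3 : 3 ≤ m := by omega
      obtain ⟨c, hc⟩ : ∃ c, m = c + 3 := ⟨m - 3, by omega⟩
      have e1 : n - (m + 1) = c + 2 := by omega
      have e2 : n - 1 = 2 * c + 5 := by omega
      have e3 : F.card - 1 = k + 2 := by omega
      have e4 : m + 1 = c + 4 := by omega
      rw [e1, e3, e4] at hlow
      rw [e2, hk] at hsumsmall
      nlinarith [hlow, hsumsmall]
end

section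
/- Let n be an even integer, n ≥ 8, and let Q be a family of 3-element subsets of [n]. If there exist four pairwise distinct balls x,y,u,v ∈ [n] with d_Q(x,u) + d_Q(x,v) + d_Q(y,u) + d_Q(y,v) ≤ n/2 − 3, then Q does not determine a non-minority ball. -/
namespace Stmt2Aux

def Vtab : Fin 4 → Fin 5 → Bool :=
  ![![false, false, false, true, false],
    ![false, false, true, true, false],
    ![false, true, false, false, true],
    ![false, true, true, true, false]]

lemma core : ∀ i j l : Fin 5,
    ¬ ((i = 0 ∨ j = 0 ∨ l = 0) ∧ (i = 1 ∨ j = 1 ∨ l = 1) ∧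
       (i = 2 ∨ j = 2 ∨ l = 2 ∨ i = 3 ∨ j = 3 ∨ l = 3)) →
    ∃ m : Fin 3, ∀ t : Fin 4, ∃ m' : Fin 3, m' ≠ m ∧
      Vtab t (![i, j, l] m') = Vtab t (![i, j, l] m) := by decide

end Stmt2Aux

open Finset Stmt2Aux

set_option maxHeartbeats 4000000 in
theorem stmt_2 (n : ℕ) (heven : Even n) (hn : 8 ≤ n) (Q : Finset (Finset (Fin n)))
    (hQ3 : ∀ T ∈ Q, T.card = 3) (x y u v : Fin n)
    (hdist : [x, y, u, v].Pairwise (· ≠ ·))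
    (hcod : codeg Q x u + codeg Q x v + codeg Q y u + codeg Q y v + 3 ≤ n / 2) :
    ¬ Determines Q := by
  classical
  intro hdet
  rw [List.pairwise_cons] at hdist
  obtain ⟨h1, hdist⟩ := hdist
  rw [List.pairwise_cons] at hdist
  obtain ⟨h2, hdist⟩ := hdist
  rw [List.pairwise_cons] at hdist
  obtain ⟨h3, -⟩ := hdist
  have hxy : x ≠ y := h1 y (by simp)
  have hxu : x ≠ u := h1 u (by simp)
  have hxv : x ≠ v := h1 v (by simp)
  have hyu : y ≠ u := h2 u (by simp)
  have hyv : y ≠ v := h2 v (by simp)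
  have huv : u ≠ v := h3 v (by simp)
  clear h1 h2 h3
  obtain ⟨m, hm2⟩ := heven
  have hm : 4 ≤ m := by omega
  have hdiv : n / 2 = m := by omega
  rw [hdiv] at hcod
  set Xs : Finset (Fin n) := {x, y} with hXs
  set Us : Finset (Fin n) := {u, v} with hUs
  have hXcard : Xs.card = 2 := by
    rw [hXs, card_insert_of_notMem (by simp [hxy]), card_singleton]
  have hUcard : Us.card = 2 := by
    rw [hUs, card_insert_of_notMem (by simp [huv]), card_singleton]
  set P : Finset (Fin n) := Xs ∪ Us with hP
  have hmemP : ∀ z, z ∈ P ↔ (z = x ∨ z = y) ∨ (z = u ∨ z = v) := by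
    intro z
    simp only [hP, hXs, hUs, mem_union, mem_insert, mem_singleton]
    try tauto
  have hXUdisj : Disjoint Xs Us := by
    rw [disjoint_left]
    intro z hzX hzU
    rw [hXs, mem_insert, mem_singleton] at hzX
    rw [hUs, mem_insert, mem_singleton] at hzU
    rcases hzX with rfl | rfl <;> rcases hzU with rfl | rfl
    exacts [hxu rfl, hxv rfl, hyu rfl, hyv rfl]
  have hPcard : P.card = 4 := by
    rw [hP, card_union_of_disjoint hXUdisj, hXcard, hUcard]
  -- cross queries
  set crossQ : Finset (Finset (Fin n)) := Q.filter
    (fun T => (x ∈ T ∧ u ∈ T) ∨ (x ∈ T ∧ v ∈ T) ∨ (y ∈ T ∧ u ∈ T) ∨ (y ∈ T ∧ v ∈ T))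
    with hcrossQ
  have hcross_card : crossQ.card ≤ m - 3 := by
    have hsub : crossQ ⊆ ((Q.filter fun T => x ∈ T ∧ u ∈ T) ∪
        (Q.filter fun T => x ∈ T ∧ v ∈ T)) ∪
        ((Q.filter fun T => y ∈ T ∧ u ∈ T) ∪ (Q.filter fun T => y ∈ T ∧ v ∈ T)) := by
      intro T hT
      simp only [hcrossQ, mem_filter, mem_union] at *
      tauto
    have hc1 := card_le_card hsub
    have hc2 := card_union_le ((Q.filter fun T => x ∈ T ∧ u ∈ T) ∪
        (Q.filter fun T => x ∈ T ∧ v ∈ T))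
        ((Q.filter fun T => y ∈ T ∧ u ∈ T) ∪ (Q.filter fun T => y ∈ T ∧ v ∈ T))
    have hc3 := card_union_le (Q.filter fun T => x ∈ T ∧ u ∈ T)
        (Q.filter fun T => x ∈ T ∧ v ∈ T)
    have hc4 := card_union_le (Q.filter fun T => y ∈ T ∧ u ∈ T)
        (Q.filter fun T => y ∈ T ∧ v ∈ T)
    simp only [codeg] at hcod
    omega
  -- W = third balls of cross queries
  set W : Finset (Fin n) := crossQ.biUnion (fun T => T \ P) with hW
  have hWcard : W.card ≤ m - 3 := by
    have hb1 : W.card ≤ ∑ T ∈ crossQ, (T \ P).card := card_biUnion_le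
    have hb2 : ∑ T ∈ crossQ, (T \ P).card ≤ ∑ T ∈ crossQ, 1 := by
      apply sum_le_sum
      intro T hT
      rw [hcrossQ, mem_filter] at hT
      obtain ⟨hTQ, hcr⟩ := hT
      have hinter := card_inter_add_card_sdiff T P
      rw [hQ3 T hTQ] at hinter
      have h2le : ∀ p q : Fin n, p ≠ q → p ∈ T → q ∈ T → p ∈ P → q ∈ P →
          2 ≤ (T ∩ P).card := by
        intro p q hpq hpT hqT hpP hqP
        have hss : ({p, q} : Finset (Fin n)) ⊆ T ∩ P := by
          intro z hz
          simp only [mem_insert, mem_singleton] at hz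
          rcases hz with rfl | rfl <;> simp [mem_inter, hpT, hqT, hpP, hqP]
        have hpq2 : ({p, q} : Finset (Fin n)).card = 2 := by
          rw [card_insert_of_notMem (by simp [hpq]), card_singleton]
        have := card_le_card hss
        omega
      have hxP : x ∈ P := by rw [hmemP]; tauto
      have hyP : y ∈ P := by rw [hmemP]; tauto
      have huP : u ∈ P := by rw [hmemP]; tauto
      have hvP : v ∈ P := by rw [hmemP]; tauto
      rcases hcr with ⟨ha', hb'⟩ | ⟨ha', hb'⟩ | ⟨ha', hb'⟩ | ⟨ha', hb'⟩
      · have := h2le x u hxu ha' hb' hxP huP; omega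
      · have := h2le x v hxv ha' hb' hxP hvP; omega
      · have := h2le y u hyu ha' hb' hyP huP; omega
      · have := h2le y v hyv ha' hb' hyP hvP; omega
    have hb3 : ∑ T ∈ crossQ, 1 = crossQ.card := by simp
    omega
  have hWsub : W ⊆ univ \ P := by
    intro w hw
    rw [hW, mem_biUnion] at hw
    obtain ⟨T, -, hwT⟩ := hw
    rw [mem_sdiff] at hwT
    exact mem_sdiff.2 ⟨mem_univ _, hwT.2⟩
  have hOcard : (univ \ P).card = n - 4 := by
    rw [card_sdiff_of_subset (subset_univ P), hPcard, card_fin]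
  -- choose Hs ⊇ W with card m - 3
  obtain ⟨Hs, hWHs, hHsub, hHcard⟩ :=
    exists_subsuperset_card_eq hWsub hWcard (by omega : m - 3 ≤ (univ \ P).card)
  set rest : Finset (Fin n) := (univ \ P) \ Hs with hrest
  have hrest_card : rest.card = m - 1 := by
    rw [hrest, card_sdiff_of_subset hHsub, hOcard, hHcard]; omega
  obtain ⟨g1, hg1, g2, hg2, hgg⟩ := one_lt_card.1 (by omega : 1 < rest.card)
  set Gs : Finset (Fin n) := {g1, g2} with hGs
  have hGcard : Gs.card = 2 := by
    rw [hGs, card_insert_of_notMem (by simp [hgg]), card_singleton]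
  have hGrest : Gs ⊆ rest := by
    intro z hz; rw [hGs, mem_insert, mem_singleton] at hz
    rcases hz with rfl | rfl <;> assumption
  set Ls : Finset (Fin n) := rest \ Gs with hLs
  have hLcard : Ls.card = m - 3 := by
    rw [hLs, card_sdiff_of_subset hGrest, hrest_card, hGcard]; omega
  have hLrest : Ls ⊆ rest := by rw [hLs]; exact sdiff_subset
  -- disjointness facts
  have hrestP : ∀ z ∈ rest, z ∉ P := by
    intro z hz; rw [hrest, mem_sdiff, mem_sdiff] at hz; exact hz.1.2
  have hrestH : ∀ z ∈ rest, z ∉ Hs := by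
    intro z hz; rw [hrest, mem_sdiff] at hz; exact hz.2
  have hHsP : ∀ z ∈ Hs, z ∉ P := by
    intro z hz; have := hHsub hz; rw [mem_sdiff] at this; exact this.2
  have hXsP : ∀ z ∈ Xs, z ∈ P := fun z hz => hP ▸ mem_union_left _ hz
  have hUsP : ∀ z ∈ Us, z ∈ P := fun z hz => hP ▸ mem_union_right _ hz
  -- the class function
  set K : Fin n → Fin 5 := fun z =>
    if z ∈ Xs then 0 else if z ∈ Us then 1 else if z ∈ Gs then 2
    else if z ∈ Ls then 3 else 4 with hK
  have hkX : ∀ z ∈ Xs, K z = 0 := by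
    intro z hz; rw [hK]; simp [hz]
  have hkU : ∀ z ∈ Us, K z = 1 := by
    intro z hz; rw [hK]
    have : z ∉ Xs := fun hzX => (disjoint_left.mp hXUdisj) hzX hz
    simp [hz, this]
  have hkG : ∀ z ∈ Gs, K z = 2 := by
    intro z hz
    have hzP := hrestP z (hGrest hz)
    have h1 : z ∉ Xs := fun h => hzP (hXsP z h)
    have h2 : z ∉ Us := fun h => hzP (hUsP z h)
    rw [hK]; simp [hz, h1, h2]
  have hkL : ∀ z ∈ Ls, K z = 3 := by
    intro z hz
    have hzP := hrestP z (hLrest hz)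
    have h1 : z ∉ Xs := fun h => hzP (hXsP z h)
    have h2 : z ∉ Us := fun h => hzP (hUsP z h)
    have h3 : z ∉ Gs := by rw [hLs, mem_sdiff] at hz; exact hz.2
    rw [hK]; simp [hz, h1, h2, h3]
  have hkH : ∀ z ∈ Hs, K z = 4 := by
    intro z hz
    have hzP := hHsP z hz
    have h1 : z ∉ Xs := fun h => hzP (hXsP z h)
    have h2 : z ∉ Us := fun h => hzP (hUsP z h)
    have h3 : z ∉ Gs := fun h => hrestH z (hGrest h) hz
    have h4 : z ∉ Ls := fun h => hrestH z (hLrest h) hz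
    rw [hK]; simp [h1, h2, h3, h4]
  have hclass : ∀ z : Fin n, (z ∈ Xs ∧ K z = 0) ∨ (z ∈ Us ∧ K z = 1) ∨
      (z ∈ Gs ∧ K z = 2) ∨ (z ∈ Ls ∧ K z = 3) ∨ (z ∈ Hs ∧ K z = 4) := by
    intro z
    by_cases hzX : z ∈ Xs
    · exact Or.inl ⟨hzX, hkX z hzX⟩
    by_cases hzU : z ∈ Us
    · exact Or.inr (Or.inl ⟨hzU, hkU z hzU⟩)
    by_cases hzG : z ∈ Gs
    · exact Or.inr (Or.inr (Or.inl ⟨hzG, hkG z hzG⟩))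
    by_cases hzL : z ∈ Ls
    · exact Or.inr (Or.inr (Or.inr (Or.inl ⟨hzL, hkL z hzL⟩)))
    have hzP : z ∉ P := by
      intro hzP
      rw [hP, mem_union] at hzP
      tauto
    have hzH : z ∈ Hs := by
      by_contra hzH
      have hzrest : z ∈ rest := by
        rw [hrest, mem_sdiff, mem_sdiff]
        exact ⟨⟨mem_univ _, hzP⟩, hzH⟩
      have : z ∈ Ls := by rw [hLs, mem_sdiff]; exact ⟨hzrest, hzG⟩
      exact hzL this
    exact Or.inr (Or.inr (Or.inr (Or.inr ⟨hzH, hkH z hzH⟩)))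
  -- the colorings
  set col : Fin 4 → Fin n → Bool := fun t z => Vtab t (K z) with hcol
  -- every query has a "good" answer ball
  have exGood : ∀ T ∈ Q, ∃ b ∈ T,
      ∀ t : Fin 4, ∃ z ∈ T, z ≠ b ∧ col t z = col t b := by
    intro T hT
    obtain ⟨a₁, a₂, a₃, h12, h13, h23, rfl⟩ := card_eq_three.mp (hQ3 T hT)
    have hnotbad : ¬ ((K a₁ = 0 ∨ K a₂ = 0 ∨ K a₃ = 0) ∧
        (K a₁ = 1 ∨ K a₂ = 1 ∨ K a₃ = 1) ∧
        (K a₁ = 2 ∨ K a₂ = 2 ∨ K a₃ = 2 ∨ K a₁ = 3 ∨ K a₂ = 3 ∨ K a₃ = 3)) := by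
      rintro ⟨hb0, hb1, hb23⟩
      have hinvX : ∀ p : Fin n, K p = 0 → p ∈ Xs := by
        intro p hp
        rcases hclass p with ⟨h, hk⟩ | ⟨h, hk⟩ | ⟨h, hk⟩ | ⟨h, hk⟩ | ⟨h, hk⟩
        · exact h
        all_goals (rw [hp] at hk; exact absurd hk (by decide))
      have hinvU : ∀ p : Fin n, K p = 1 → p ∈ Us := by
        intro p hp
        rcases hclass p with ⟨h, hk⟩ | ⟨h, hk⟩ | ⟨h, hk⟩ | ⟨h, hk⟩ | ⟨h, hk⟩
        · rw [hp] at hk; exact absurd hk (by decide)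
        · exact h
        all_goals (rw [hp] at hk; exact absurd hk (by decide))
      have hinvGL : ∀ p : Fin n, K p = 2 ∨ K p = 3 → p ∈ Gs ∪ Ls := by
        intro p hp
        rcases hclass p with ⟨h, hk⟩ | ⟨h, hk⟩ | ⟨h, hk⟩ | ⟨h, hk⟩ | ⟨h, hk⟩
        · rcases hp with hp | hp <;> (rw [hp] at hk; exact absurd hk (by decide))
        · rcases hp with hp | hp <;> (rw [hp] at hk; exact absurd hk (by decide))
        · exact mem_union_left _ h
        · exact mem_union_right _ h
        · rcases hp with hp | hp <;> (rw [hp] at hk; exact absurd hk (by decide))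
      -- extract the three witnesses
      have hmem1 : a₁ ∈ ({a₁, a₂, a₃} : Finset (Fin n)) := by simp
      have hmem2 : a₂ ∈ ({a₁, a₂, a₃} : Finset (Fin n)) := by simp
      have hmem3 : a₃ ∈ ({a₁, a₂, a₃} : Finset (Fin n)) := by simp
      obtain ⟨p, hpT, hpX⟩ : ∃ p ∈ ({a₁, a₂, a₃} : Finset (Fin n)), p ∈ Xs := by
        rcases hb0 with h | h | h
        exacts [⟨a₁, hmem1, hinvX _ h⟩, ⟨a₂, hmem2, hinvX _ h⟩, ⟨a₃, hmem3, hinvX _ h⟩]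
      obtain ⟨q, hqT, hqU⟩ : ∃ q ∈ ({a₁, a₂, a₃} : Finset (Fin n)), q ∈ Us := by
        rcases hb1 with h | h | h
        exacts [⟨a₁, hmem1, hinvU _ h⟩, ⟨a₂, hmem2, hinvU _ h⟩, ⟨a₃, hmem3, hinvU _ h⟩]
      obtain ⟨w, hwT, hwGL⟩ : ∃ w ∈ ({a₁, a₂, a₃} : Finset (Fin n)), w ∈ Gs ∪ Ls := by
        rcases hb23 with h | h | h | h | h | h
        exacts [⟨a₁, hmem1, hinvGL _ (Or.inl h)⟩, ⟨a₂, hmem2, hinvGL _ (Or.inl h)⟩,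
          ⟨a₃, hmem3, hinvGL _ (Or.inl h)⟩, ⟨a₁, hmem1, hinvGL _ (Or.inr h)⟩,
          ⟨a₂, hmem2, hinvGL _ (Or.inr h)⟩, ⟨a₃, hmem3, hinvGL _ (Or.inr h)⟩]
      -- the query is a cross query
      have hTcross : ({a₁, a₂, a₃} : Finset (Fin n)) ∈ crossQ := by
        rw [hcrossQ, mem_filter]
        refine ⟨hT, ?_⟩
        rw [hXs, mem_insert, mem_singleton] at hpX
        rw [hUs, mem_insert, mem_singleton] at hqU
        rcases hpX with rfl | rfl <;> rcases hqU with rfl | rfl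
        · exact Or.inl ⟨hpT, hqT⟩
        · exact Or.inr (Or.inl ⟨hpT, hqT⟩)
        · exact Or.inr (Or.inr (Or.inl ⟨hpT, hqT⟩))
        · exact Or.inr (Or.inr (Or.inr ⟨hpT, hqT⟩))
      -- w is in W hence in Hs, contradiction
      have hwrest : w ∈ rest := by
        rw [mem_union] at hwGL
        rcases hwGL with h | h
        exacts [hGrest h, hLrest h]
      have hwW : w ∈ W := by
        rw [hW, mem_biUnion]
        exact ⟨_, hTcross, mem_sdiff.2 ⟨hwT, hrestP w hwrest⟩⟩
      exact hrestH w hwrest (hWHs hwW)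
    obtain ⟨mm, hmm⟩ := core (K a₁) (K a₂) (K a₃) hnotbad
    have hvecmem : ∀ p : Fin 3, (![a₁, a₂, a₃] p) ∈ ({a₁, a₂, a₃} : Finset (Fin n)) := by
      intro p; fin_cases p <;> simp
    have hvecne : ∀ p q : Fin 3, p ≠ q → (![a₁, a₂, a₃] p) ≠ (![a₁, a₂, a₃] q) := by
      intro p q hpq
      fin_cases p <;> fin_cases q <;>
        simp only [Matrix.cons_val_zero, Matrix.cons_val_one, Matrix.head_cons,
          Matrix.cons_val_two, Matrix.tail_cons] <;>
        first
          | exact absurd rfl hpq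
          | exact h12 | exact h13 | exact h23
          | exact h12.symm | exact h13.symm | exact h23.symm
    have hveck : ∀ p : Fin 3, K (![a₁, a₂, a₃] p) = ![K a₁, K a₂, K a₃] p := by
      intro p
      fin_cases p <;> rfl
    refine ⟨![a₁, a₂, a₃] mm, hvecmem mm, ?_⟩
    intro t
    obtain ⟨m', hne, heq⟩ := hmm t
    refine ⟨![a₁, a₂, a₃] m', hvecmem m', hvecne m' mm hne, ?_⟩
    simp only [hcol]
    rw [hveck m', hveck mm]
    exact heq
  -- the answer function
  have exGood' : ∀ T : Finset (Fin n), ∃ b : Fin n, T ∈ Q →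
      b ∈ T ∧ ∀ t : Fin 4, ∃ z ∈ T, z ≠ b ∧ col t z = col t b := by
    intro T
    by_cases hT : T ∈ Q
    · obtain ⟨b, hb, hg⟩ := exGood T hT
      exact ⟨b, fun _ => ⟨hb, hg⟩⟩
    · exact ⟨x, fun h => absurd h hT⟩
  choose a ha using exGood'
  have haT : ∀ T ∈ Q, a T ∈ T := fun T hT => (ha T hT).1
  have hLegal : ∀ t : Fin 4, Legal Q a (col t) := by
    intro t T hT
    obtain ⟨z, hzT, hzne, hzeq⟩ := (ha T hT).2 t
    refine ⟨haT T hT, ?_⟩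
    rw [hQ3 T hT]
    have hsub : ({z, a T} : Finset (Fin n)) ⊆ T.filter (fun w => col t w = col t (a T)) := by
      intro w hw
      rw [mem_insert, mem_singleton] at hw
      rcases hw with rfl | rfl
      · exact mem_filter.2 ⟨hzT, hzeq⟩
      · exact mem_filter.2 ⟨haT T hT, rfl⟩
    have hcard2 : ({z, a T} : Finset (Fin n)).card = 2 := by
      rw [card_insert_of_notMem (by simp [hzne]), card_singleton]
    have := card_le_card hsub
    omega
  -- apply Determines and derive a contradiction
  obtain ⟨b, hb⟩ := hdet a haT ⟨col 0, hLegal 0⟩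
  -- for each class, a coloring where b's class is a strict minority
  have hfincard : (univ : Finset (Fin n)).card = n := card_fin n
  have key : ∀ t : Fin 4, ∀ S : Finset (Fin n),
      ((univ : Finset (Fin n)).filter fun z => col t z = col t b) ⊆ S →
      S.card ≤ m - 1 → False := by
    intro t S hsubS hScard
    have hnm := hb (col t) (hLegal t)
    have hle := hnm.2
    have hcle : ((univ : Finset (Fin n)).filter fun z => col t z = col t b).card ≤ m - 1 :=
      le_trans (card_le_card hsubS) hScard
    rw [hfincard] at hle
    omega
  -- helper: the filter is contained in the union of classes with matching color
  have hfilt : ∀ t : Fin 4, ∀ z : Fin n, ∀ i : Fin 5, K z = i →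
      col t z = Vtab t i := by
    intro t z i hi; rw [hcol]; simp only; rw [hi]
  rcases hclass b with ⟨hbc, hbk⟩ | ⟨hbc, hbk⟩ | ⟨hbc, hbk⟩ | ⟨hbc, hbk⟩ | ⟨hbc, hbk⟩
  · -- b ∈ Xs : use coloring 3, side Xs ∪ Hs
    refine key 3 (Xs ∪ Hs) ?_ ?_
    · intro z hz
      obtain ⟨-, hzeq⟩ := mem_filter.mp hz
      rw [hfilt 3 b 0 hbk] at hzeq
      rcases hclass z with ⟨hzc, hzk⟩ | ⟨hzc, hzk⟩ | ⟨hzc, hzk⟩ | ⟨hzc, hzk⟩ | ⟨hzc, hzk⟩ <;>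
        rw [hfilt 3 z _ hzk] at hzeq
      · exact mem_union_left _ hzc
      · exact absurd hzeq (by decide)
      · exact absurd hzeq (by decide)
      · exact absurd hzeq (by decide)
      · exact mem_union_right _ hzc
    · have := card_union_le Xs Hs
      omega
  · -- b ∈ Us : use coloring 2, side Us ∪ Hs
    refine key 2 (Us ∪ Hs) ?_ ?_
    · intro z hz
      obtain ⟨-, hzeq⟩ := mem_filter.mp hz
      rw [hfilt 2 b 1 hbk] at hzeq
      rcases hclass z with ⟨hzc, hzk⟩ | ⟨hzc, hzk⟩ | ⟨hzc, hzk⟩ | ⟨hzc, hzk⟩ | ⟨hzc, hzk⟩ <;>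
        rw [hfilt 2 z _ hzk] at hzeq
      · exact absurd hzeq (by decide)
      · exact mem_union_left _ hzc
      · exact absurd hzeq (by decide)
      · exact absurd hzeq (by decide)
      · exact mem_union_right _ hzc
    · have := card_union_le Us Hs
      omega
  · -- b ∈ Gs : use coloring 1, side Gs ∪ Ls
    refine key 1 (Gs ∪ Ls) ?_ ?_
    · intro z hz
      obtain ⟨-, hzeq⟩ := mem_filter.mp hz
      rw [hfilt 1 b 2 hbk] at hzeq
      rcases hclass z with ⟨hzc, hzk⟩ | ⟨hzc, hzk⟩ | ⟨hzc, hzk⟩ | ⟨hzc, hzk⟩ | ⟨hzc, hzk⟩ <;>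
        rw [hfilt 1 z _ hzk] at hzeq
      · exact absurd hzeq (by decide)
      · exact absurd hzeq (by decide)
      · exact mem_union_left _ hzc
      · exact mem_union_right _ hzc
      · exact absurd hzeq (by decide)
    · have := card_union_le Gs Ls
      omega
  · -- b ∈ Ls : use coloring 0, side Ls
    refine key 0 Ls ?_ ?_
    · intro z hz
      obtain ⟨-, hzeq⟩ := mem_filter.mp hz
      rw [hfilt 0 b 3 hbk] at hzeq
      rcases hclass z with ⟨hzc, hzk⟩ | ⟨hzc, hzk⟩ | ⟨hzc, hzk⟩ | ⟨hzc, hzk⟩ | ⟨hzc, hzk⟩ <;>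
        rw [hfilt 0 z _ hzk] at hzeq
      · exact absurd hzeq (by decide)
      · exact absurd hzeq (by decide)
      · exact absurd hzeq (by decide)
      · exact hzc
      · exact absurd hzeq (by decide)
    · omega
  · -- b ∈ Hs : use coloring 2, side Us ∪ Hs
    refine key 2 (Us ∪ Hs) ?_ ?_
    · intro z hz
      obtain ⟨-, hzeq⟩ := mem_filter.mp hz
      rw [hfilt 2 b 4 hbk] at hzeq
      rcases hclass z with ⟨hzc, hzk⟩ | ⟨hzc, hzk⟩ | ⟨hzc, hzk⟩ | ⟨hzc, hzk⟩ | ⟨hzc, hzk⟩ <;>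
        rw [hfilt 2 z _ hzk] at hzeq
      · exact absurd hzeq (by decide)
      · exact mem_union_left _ hzc
      · exact absurd hzeq (by decide)
      · exact absurd hzeq (by decide)
      · exact mem_union_right _ hzc
    · have := card_union_le Us Hs
      omega
end

section
/- Let n ≥ 3 and let Q be a family of 3-element subsets of [n]. If 6·δ₂(Q) > 5n, i.e., every pair of distinct balls is contained in strictly more than 5n/6 queries of Q, then Q determines a non-minority ball. -/
private lemma helper_notMaj {n : ℕ} {c : Fin n → Bool} {T : Finset (Fin n)} {w : Fin n}
    (h3 : T.card = 3) (hodd : ∀ u ∈ T, u ≠ w → c u ≠ c w) :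
    ¬ majBall c T w := by
  rintro ⟨hwT, hlt⟩
  have hsub : T.filter (fun x => c x = c w) ⊆ {w} := by
    intro u hu
    rcases Finset.mem_filter.1 hu with ⟨huT, hcu⟩
    by_contra hne
    exact hodd u huT (by simpa using hne) hcu
  have hle := Finset.card_le_card hsub
  rw [Finset.card_singleton] at hle
  omega

private lemma pt_lin (d : ℕ) : 3 * d ≤ d ^ 2 + 2 := by
  rcases Nat.lt_or_ge d 3 with h | h
  · interval_cases d <;> simp
  · calc 3 * d ≤ d * d := Nat.mul_le_mul_right d h
    _ ≤ d ^ 2 + 2 := by rw [pow_two]; omega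

private lemma exists_big_pair {n : ℕ} (hn : 3 ≤ n) (M : Fin n → Finset (Fin n))
    (hM : ∀ b, n + 1 ≤ 2 * (M b).card)
    (G : Finset (Fin n)) (hP : ∀ x : Fin n, ∃ i ∈ G, x ∉ M i) :
    ∃ i ∈ G, ∃ j ∈ G, i ≠ j ∧ n ≤ 6 * (M i ∩ M j).card + 12 := by
  classical
  by_contra hcon
  push_neg at hcon
  -- hcon : ∀ i ∈ G, ∀ j ∈ G, i ≠ j → 6 * (M i ∩ M j).card + 12 < n
  set k := G.card with hk
  set d : Fin n → ℕ := fun x => (G.filter fun i => x ∈ M i).card with hd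
  set S : ℕ := ∑ i ∈ G, (M i).card with hS
  set A : ℕ := ∑ i ∈ G, ∑ j ∈ G, (M i ∩ M j).card with hA
  -- double counting S
  have hcard_eq : ∀ (t : Finset (Fin n)), t.card = ∑ x : Fin n, (if x ∈ t then 1 else 0) := by
    intro t
    rw [Finset.sum_boole]
    congr 1
    simp [Finset.filter_mem_eq_inter]
  have hc1 : S = ∑ x : Fin n, d x := by
    rw [hS]
    calc ∑ i ∈ G, (M i).card = ∑ i ∈ G, ∑ x : Fin n, (if x ∈ M i then 1 else 0) := by
          exact Finset.sum_congr rfl fun i _ => hcard_eq (M i)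
    _ = ∑ x : Fin n, ∑ i ∈ G, (if x ∈ M i then 1 else 0) := Finset.sum_comm
    _ = ∑ x : Fin n, d x := by
          refine Finset.sum_congr rfl fun x _ => ?_
          rw [Finset.sum_boole]
          simp [hd]
  have hc2 : A = ∑ x : Fin n, d x ^ 2 := by
    rw [hA]
    have inter_eq : ∀ i j : Fin n, (M i ∩ M j).card
        = ∑ x : Fin n, (if x ∈ M i then 1 else 0) * (if x ∈ M j then 1 else 0) := by
      intro i j
      rw [hcard_eq (M i ∩ M j)]
      refine Finset.sum_congr rfl fun x _ => ?_
      by_cases h1 : x ∈ M i <;> by_cases h2 : x ∈ M j <;> simp [h1, h2]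
    calc ∑ i ∈ G, ∑ j ∈ G, (M i ∩ M j).card
        = ∑ i ∈ G, ∑ j ∈ G, ∑ x : Fin n,
            (if x ∈ M i then 1 else 0) * (if x ∈ M j then 1 else 0) := by
          exact Finset.sum_congr rfl fun i _ => Finset.sum_congr rfl fun j _ => inter_eq i j
    _ = ∑ i ∈ G, ∑ x : Fin n, ∑ j ∈ G,
            (if x ∈ M i then 1 else 0) * (if x ∈ M j then 1 else 0) := by
          exact Finset.sum_congr rfl fun i _ => Finset.sum_comm
    _ = ∑ x : Fin n, ∑ i ∈ G, ∑ j ∈ G,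
            (if x ∈ M i then 1 else 0) * (if x ∈ M j then 1 else 0) := Finset.sum_comm
    _ = ∑ x : Fin n, d x ^ 2 := by
          refine Finset.sum_congr rfl fun x _ => ?_
          rw [← Finset.sum_mul_sum, Finset.sum_boole]
          simp [hd, pow_two]
  -- k ≥ 1 and list of arithmetic facts
  have hc3 : k * (n + 1) ≤ 2 * S := by
    rw [hS, Finset.mul_sum]
    calc k * (n+1) = ∑ _i ∈ G, (n+1) := by rw [Finset.sum_const, smul_eq_mul]
    _ ≤ ∑ i ∈ G, 2 * (M i).card := Finset.sum_le_sum fun i _ => hM i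
  have hc4 : ∀ x : Fin n, d x + 1 ≤ k := by
    intro x
    obtain ⟨i, hiG, hi⟩ := hP x
    have hsub : (G.filter fun m => x ∈ M m) ⊆ G.erase i := by
      intro m hm
      rcases Finset.mem_filter.1 hm with ⟨hmG, hmx⟩
      exact Finset.mem_erase.2 ⟨fun h => hi (h ▸ hmx), hmG⟩
    have h1 : d x ≤ (G.erase i).card := Finset.card_le_card hsub
    have h2 : (G.erase i).card = k - 1 := Finset.card_erase_of_mem hiG
    have h3 : 1 ≤ k := Finset.card_pos.2 ⟨i, hiG⟩
    omega
  have hc5 : S + n ≤ n * k := by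
    have : ∑ x : Fin n, (d x + 1) ≤ ∑ _x : Fin n, k :=
      Finset.sum_le_sum fun x _ => hc4 x
    rw [Finset.sum_add_distrib, Finset.sum_const, Finset.sum_const] at this
    simpa [← hc1, mul_comm] using this
  have hc8 : 3 * S ≤ A + 2 * n := by
    have : ∑ x : Fin n, 3 * d x ≤ ∑ x : Fin n, (d x ^ 2 + 2) :=
      Finset.sum_le_sum fun x _ => pt_lin (d x)
    rw [Finset.sum_add_distrib, Finset.sum_const, ← Finset.mul_sum] at this
    simpa [← hc1, ← hc2, mul_comm] using this
  -- pass to integers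
  have hc6 : (6:ℤ) * A ≤ 6 * S + k * (k-1) * (n-13) := by
    have hrow : ∀ i ∈ G, (6:ℤ) * ∑ j ∈ G, ((M i ∩ M j).card : ℤ)
        ≤ 6 * ((M i).card : ℤ) + ((k:ℤ)-1) * ((n:ℤ)-13) := by
      intro i hiG
      have hk1 : 1 ≤ k := Finset.card_pos.2 ⟨i, hiG⟩
      have hsplit : ∑ j ∈ G, ((M i ∩ M j).card : ℤ)
          = ((M i).card : ℤ) + ∑ j ∈ G.erase i, ((M i ∩ M j).card : ℤ) := by
        rw [← Finset.insert_erase hiG, Finset.sum_insert (Finset.notMem_erase _ _),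
          Finset.inter_self, Finset.insert_erase hiG]
      have hbd : ∑ j ∈ G.erase i, ((M i ∩ M j).card : ℤ) * 6
          ≤ ∑ _j ∈ G.erase i, ((n:ℤ) - 13) := by
        refine Finset.sum_le_sum fun j hj => ?_
        rcases Finset.mem_erase.1 hj with ⟨hne, hjG⟩
        have := hcon i hiG j hjG (fun h => hne (h.symm))
        omega
      rw [Finset.sum_const, nsmul_eq_mul, Finset.card_erase_of_mem hiG] at hbd
      rw [← Finset.sum_mul] at hbd
      have hcast : (((k:ℕ) - 1 : ℕ) : ℤ) = (k:ℤ) - 1 := by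
        omega
      rw [hcast] at hbd
      rw [hsplit]
      linarith [hbd]
    have h1 : (6:ℤ) * A = ∑ i ∈ G, 6 * ∑ j ∈ G, ((M i ∩ M j).card : ℤ) := by
      rw [hA]; push_cast; rw [Finset.mul_sum]
    have h2 : ∑ i ∈ G, (6 * ((M i).card : ℤ) + ((k:ℤ)-1) * ((n:ℤ)-13))
        = 6 * (S:ℤ) + k * ((k:ℤ)-1) * ((n:ℤ)-13) := by
      rw [Finset.sum_add_distrib, Finset.sum_const, ← Finset.mul_sum, hS, nsmul_eq_mul]
      push_cast
      ring
    rw [h1, ← h2]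
    exact Finset.sum_le_sum hrow
  have hc7 : (S:ℤ) ^ 2 ≤ n * A := by
    have h := sq_sum_le_card_mul_sum_sq (s := (Finset.univ : Finset (Fin n)))
      (f := fun x => (d x : ℤ))
    rw [Finset.card_univ, Fintype.card_fin] at h
    calc (S:ℤ)^2 = (∑ x : Fin n, (d x : ℤ))^2 := by rw [hc1]; push_cast; ring
    _ ≤ n * ∑ x : Fin n, (d x : ℤ)^2 := h
    _ = n * A := by rw [hc2]; push_cast; ring
  have hk3 : 3 ≤ k := by
    rcases Nat.lt_or_ge k 3 with h | h
    · interval_cases k <;> omega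
    · exact h
  have c3 : (k:ℤ) * (n+1) ≤ 2 * S := by exact_mod_cast hc3
  have c8 : (3:ℤ) * S ≤ A + 2 * n := by exact_mod_cast hc8
  have hN : (3:ℤ) ≤ n := by exact_mod_cast hn
  rcases Nat.lt_or_ge k 5 with hk5 | hk5
  · -- k = 3 or 4 : linear bound
    have hkk : k = 3 ∨ k = 4 := by omega
    rcases hkk with h | h <;> rw [h] at c3 hc6 <;> push_cast at c3 hc6 <;> linarith
  · -- k ≥ 5 : Cauchy-Schwarz
    have c5 : (5:ℤ) ≤ (k:ℤ) := by exact_mod_cast hk5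
    have hN0 : (0:ℤ) ≤ n := by linarith
    have hK0 : (0:ℤ) ≤ k := by linarith
    have hs0 : (0:ℤ) ≤ 2 * S := by
      have := Int.natCast_nonneg S
      linarith
    have hmid : (0:ℤ) ≤ (k:ℤ) * ((n:ℤ)+1) - 2*n := by
      have h5 : 5*((n:ℤ)+1) ≤ (k:ℤ)*((n:ℤ)+1) := by
        exact mul_le_mul_of_nonneg_right c5 (by linarith)
      linarith
    have hmul : ((k:ℤ) * (n+1)) * ((k:ℤ)*(n+1) - 2*n) ≤ 4*((S:ℤ)^2 - n*S) := by
      have h1 : (k:ℤ)*(n+1) - 2*n ≤ 2*S - 2*n := by linarith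
      have h2 := mul_le_mul c3 h1 hmid hs0
      nlinarith [h2]
    have hQ : 6 * ((S:ℤ)^2 - n*S) ≤ (n:ℤ) * ((k:ℤ) * ((k:ℤ)-1) * ((n:ℤ)-13)) := by
      have t1 : (S:ℤ)^2 - n*S ≤ n*A - n*S := by linarith [hc7]
      have t3 : (n:ℤ)*(6*A - 6*S) ≤ n*((k:ℤ)*((k:ℤ)-1)*((n:ℤ)-13)) :=
        mul_le_mul_of_nonneg_left (by linarith [hc6]) hN0
      nlinarith [t1, t3]
    have hfin : 6*((k:ℤ) * ((n:ℤ)+1) * ((k:ℤ)*((n:ℤ)+1) - 2*(n:ℤ)))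
        ≤ 4*((n:ℤ) * ((k:ℤ) * ((k:ℤ)-1) * ((n:ℤ)-13))) := by linarith [hmul, hQ]
    nlinarith [hfin,
      mul_nonneg (mul_nonneg (by linarith : (0:ℤ) ≤ (k:ℤ) - 4) hK0) (sq_nonneg (n:ℤ)),
      mul_nonneg (mul_nonneg (by linarith : (0:ℤ) ≤ 64*(k:ℤ) - 64) hK0) hN0,
      mul_pos (by linarith : (0:ℤ) < (k:ℤ)) (by linarith : (0:ℤ) < (k:ℤ))]


theorem stmt_3 (n : ℕ) (hn : 3 ≤ n) (Q : Finset (Finset (Fin n)))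
    (hQ3 : ∀ T ∈ Q, T.card = 3)
    (hcod : ∀ x y : Fin n, x ≠ y → 5 * n < 6 * codeg Q x y) :
    Determines Q := by
  intro a ha _hex
  by_contra hno
  push_neg at hno
  -- hno : ∀ b, ∃ c, Legal Q a c ∧ ¬ nonMinBall c univ b
  choose γ hleg hmin using hno
  set M : Fin n → Finset (Fin n) :=
    fun b => Finset.univ.filter (fun x => ¬ (γ b x = γ b b)) with hMdef
  have hMiff : ∀ b x : Fin n, x ∈ M b ↔ ¬ (γ b x = γ b b) := by
    intro b x; simp [hMdef]
  have hMb : ∀ b, b ∉ M b := by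
    intro b; rw [hMiff]; simp
  have hMcard : ∀ b, n + 1 ≤ 2 * (M b).card := by
    intro b
    have hsplit := Finset.card_filter_add_card_filter_not
      (s := (Finset.univ : Finset (Fin n))) (p := fun x => γ b x = γ b b)
    rw [Finset.card_univ, Fintype.card_fin] at hsplit
    have hmin' := hmin b
    rw [nonMinBall] at hmin'
    push_neg at hmin'
    have h2 := hmin' (Finset.mem_univ b)
    rw [Finset.card_univ, Fintype.card_fin] at h2
    have : (M b).card = (Finset.univ.filter (fun x => ¬ (γ b x = γ b b))).card := by
      rw [hMdef]
    omega
  -- minimal covering family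
  set P : Finset (Fin n) → Prop := fun H => ∀ x : Fin n, ∃ i ∈ H, x ∉ M i with hPdef
  have hPuniv : P Finset.univ := fun x => ⟨x, Finset.mem_univ x, hMb x⟩
  obtain ⟨G, hGmem, hGmin⟩ := Finset.exists_min_image
    ((Finset.univ : Finset (Finset (Fin n))).filter P) Finset.card
    ⟨Finset.univ, Finset.mem_filter.2 ⟨Finset.mem_univ _, hPuniv⟩⟩
  have hPG : P G := (Finset.mem_filter.1 hGmem).2
  have hGmin' : ∀ H, P H → G.card ≤ H.card := by
    intro H hH
    exact hGmin H (Finset.mem_filter.2 ⟨Finset.mem_univ _, hH⟩)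
  have hwit : ∀ i ∈ G, ∃ x : Fin n, ∀ m ∈ G.erase i, x ∈ M m := by
    intro i hi
    by_contra h
    push_neg at h
    have hPe : P (G.erase i) := by
      intro x
      obtain ⟨m, hm1, hm2⟩ := h x
      exact ⟨m, hm1, hm2⟩
    have := hGmin' _ hPe
    rw [Finset.card_erase_of_mem hi] at this
    have hk1 : 1 ≤ G.card := Finset.card_pos.2 ⟨i, hi⟩
    omega
  obtain ⟨i, hiG, j, hjG, hij, hbig⟩ := exists_big_pair hn M hMcard G hPG
  obtain ⟨xi, hxi⟩ := hwit i hiG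
  obtain ⟨xj, hxj⟩ := hwit j hjG
  have hxii : xi ∉ M i := by
    intro h
    obtain ⟨m, hmG, hm⟩ := hPG xi
    rcases eq_or_ne m i with rfl | hne
    · exact hm h
    · exact hm (hxi m (Finset.mem_erase.2 ⟨hne, hmG⟩))
  have hxjj : xj ∉ M j := by
    intro h
    obtain ⟨m, hmG, hm⟩ := hPG xj
    rcases eq_or_ne m j with rfl | hne
    · exact hm h
    · exact hm (hxj m (Finset.mem_erase.2 ⟨hne, hmG⟩))
  have hxji : xj ∈ M i := hxj i (Finset.mem_erase.2 ⟨hij, hiG⟩)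
  have hxij : xi ∈ M j := hxi j (Finset.mem_erase.2 ⟨hij.symm, hjG⟩)
  have hnex : xi ≠ xj := by
    intro h
    exact hxii (h ▸ hxji)
  -- the target set for third elements
  set tgt : Finset (Fin n) :=
    ((Finset.univ \ (M i ∩ M j)).erase xi).erase xj with htgt
  have hsub : Q.filter (fun T => xi ∈ T ∧ xj ∈ T)
      ⊆ tgt.image (fun z => insert xi (insert xj {z})) := by
    intro T hT
    rcases Finset.mem_filter.1 hT with ⟨hTQ, hxiT, hxjT⟩
    have h3 : T.card = 3 := hQ3 T hTQ
    have hxjT' : xj ∈ T.erase xi := Finset.mem_erase.2 ⟨hnex.symm, hxjT⟩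
    have hcard1 : ((T.erase xi).erase xj).card = 1 := by
      rw [Finset.card_erase_of_mem hxjT', Finset.card_erase_of_mem hxiT, h3]
    obtain ⟨z, hz⟩ := Finset.card_eq_one.1 hcard1
    have hzmem : z ∈ (T.erase xi).erase xj := by
      rw [hz]; exact Finset.mem_singleton_self z
    have hzj : z ≠ xj := (Finset.mem_erase.1 hzmem).1
    have hzi : z ≠ xi := (Finset.mem_erase.1 (Finset.mem_erase.1 hzmem).2).1
    have hTeq : T = insert xi (insert xj {z}) := by
      rw [← hz, Finset.insert_erase hxjT', Finset.insert_erase hxiT]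
    have hzMM : z ∉ M i ∩ M j := by
      intro hzin
      rcases Finset.mem_inter.1 hzin with ⟨hzMi, hzMj⟩
      obtain ⟨l, hlG, hzl⟩ := hPG z
      have hli : l ≠ i := fun h => hzl (h ▸ hzMi)
      have hlj : l ≠ j := fun h => hzl (h ▸ hzMj)
      have hxil : xi ∈ M l := hxi l (Finset.mem_erase.2 ⟨hli, hlG⟩)
      have hxjl : xj ∈ M l := hxj l (Finset.mem_erase.2 ⟨hlj, hlG⟩)
      have haT : a T ∈ T := ha T hTQ
      have hmem3 : a T = xi ∨ a T = xj ∨ a T = z := by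
        have h' : a T ∈ insert xi (insert xj ({z} : Finset (Fin n))) := by
          rw [← hTeq]; exact haT
        simpa using h'
      have huniv : ∀ u ∈ T, u = xi ∨ u = xj ∨ u = z := by
        intro u hu
        have h' : u ∈ insert xi (insert xj ({z} : Finset (Fin n))) := by
          rw [← hTeq]; exact hu
        simpa using h'
      rcases hmem3 with h | h | h
      · -- answer xi, coloring γ i makes xi the odd one
        refine helper_notMaj h3 ?_ (h ▸ hleg i T hTQ)
        intro u huT hune
        have hxieq : γ i xi = γ i i := by
          have := hxii; rw [hMiff] at this; simpa using this
        rcases huniv u huT with rfl | rfl | rfl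
        · exact absurd rfl hune
        · have := hxji; rw [hMiff] at this; rw [hxieq]; exact this
        · have := hzMi; rw [hMiff] at this; rw [hxieq]; exact this
      · -- answer xj, coloring γ j
        refine helper_notMaj h3 ?_ (h ▸ hleg j T hTQ)
        intro u huT hune
        have hxjeq : γ j xj = γ j j := by
          have := hxjj; rw [hMiff] at this; simpa using this
        rcases huniv u huT with rfl | rfl | rfl
        · have := hxij; rw [hMiff] at this; rw [hxjeq]; exact this
        · exact absurd rfl hune
        · have := hzMj; rw [hMiff] at this; rw [hxjeq]; exact this
      · -- answer z, coloring γ l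
        refine helper_notMaj h3 ?_ (h ▸ hleg l T hTQ)
        intro u huT hune
        have hzeq : γ l z = γ l l := by
          have := hzl; rw [hMiff] at this; simpa using this
        rcases huniv u huT with rfl | rfl | rfl
        · have := hxil; rw [hMiff] at this; rw [hzeq]; exact this
        · have := hxjl; rw [hMiff] at this; rw [hzeq]; exact this
        · exact absurd rfl hune
    refine Finset.mem_image.2 ⟨z, ?_, hTeq.symm⟩
    rw [htgt]
    refine Finset.mem_erase.2 ⟨hzj, Finset.mem_erase.2 ⟨hzi, ?_⟩⟩
    exact Finset.mem_sdiff.2 ⟨Finset.mem_univ z, hzMM⟩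
  -- cardinality bookkeeping
  have hcle : codeg Q xi xj ≤ tgt.card := by
    have h1 : (Q.filter (fun T => xi ∈ T ∧ xj ∈ T)).card ≤ tgt.card :=
      le_trans (Finset.card_le_card hsub) Finset.card_image_le
    simpa [codeg] using h1
  have hxiS : xi ∈ Finset.univ \ (M i ∩ M j) := by
    refine Finset.mem_sdiff.2 ⟨Finset.mem_univ xi, fun h => hxii (Finset.mem_inter.1 h).1⟩
  have hxjS : xj ∈ (Finset.univ \ (M i ∩ M j)).erase xi := by
    refine Finset.mem_erase.2 ⟨hnex.symm, ?_⟩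
    exact Finset.mem_sdiff.2 ⟨Finset.mem_univ xj, fun h => hxjj (Finset.mem_inter.1 h).2⟩
  have htc : tgt.card = n - (M i ∩ M j).card - 1 - 1 := by
    rw [htgt, Finset.card_erase_of_mem hxjS, Finset.card_erase_of_mem hxiS,
      Finset.card_sdiff_of_subset (Finset.subset_univ _), Finset.card_univ, Fintype.card_fin]
  have hcap : (M i ∩ M j).card ≤ n := by
    have := Finset.card_le_card (Finset.subset_univ (M i ∩ M j))
    rwa [Finset.card_univ, Fintype.card_fin] at this
  have hfinal := hcod xi xj hnex
  omega
end

section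
/- Let n be an even integer, n ≥ 4. Every family Q of 3-element subsets of [n] that determines a non-minority ball satisfies 8·|Q| ≥ C(n−2,3), i.e., |Q| ≥ (1/8)·binomial(n−2,3). -/
/-!
Adversary: for disjoint pairs `D`, `P` and a set `B` with `|B| < n/2 < |B ∪ D|, |B ∪ P|`, colour
the balls by membership in `B`, in `B ∪ D` and in `B ∪ P`. If no query meets `D`, `P` and `B` at
once, every query has a ball that is a majority ball of it under all three colourings, while a
ball that is a non-minority ball of `[n]` under all three would lie in `D ∩ P`. So a determining
`Q` joins any two disjoint pairs through many balls: `n ≤ 2 ∑_{d ∈ D, p ∈ P} codeg d p + 4`.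
Taking for `D` the two balls of smallest degree and then for `P` the two balls outside `D` with
the fewest co-degrees into `D`, the cross sum is at most `24 |Q| / (n (n - 2))`, so
`n (n - 2) (n - 4) ≤ 48 |Q|`.
-/

open Finset

lemma exists_card_two_subset_card_mul_sum_le {α : Type*} [DecidableEq α] (f : α → ℕ)
    {s : Finset α} (hs : 2 ≤ s.card) :
    ∃ t ⊆ s, t.card = 2 ∧ s.card * ∑ x ∈ t, f x ≤ 2 * ∑ x ∈ s, f x := by
  obtain ⟨x, hx, hxmin⟩ := exists_min_image s f (card_pos.mp (by omega))
  obtain ⟨y, hy, hymin⟩ := exists_min_image (s.erase x) f (card_pos.mp (by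
    rw [card_erase_of_mem hx]; omega))
  have hxy : x ≠ y := (ne_of_mem_erase hy).symm
  refine ⟨{x, y}, insert_subset hx (singleton_subset_iff.mpr (mem_of_mem_erase hy)),
    card_pair hxy, ?_⟩
  have hrest : (s.card - 1) * f y ≤ ∑ z ∈ s.erase x, f z := by
    simpa [card_erase_of_mem hx] using card_nsmul_le_sum (s.erase x) f (f y) hymin
  have hfxy := hxmin y (mem_of_mem_erase hy)
  rw [sum_pair hxy, ← add_sum_erase s f hx]
  obtain ⟨k, hk⟩ : ∃ k, s.card = k + 2 := ⟨s.card - 2, by omega⟩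
  rw [hk] at hrest ⊢
  rw [show k + 2 - 1 = k + 1 by omega] at hrest
  nlinarith

lemma card_sdiff_pair_le_one {α : Type*} [DecidableEq α] {T : Finset α} (hT : T.card = 3)
    {d p : α} (hdp : d ≠ p) (hd : d ∈ T) (hp : p ∈ T) : (T \ {d, p}).card ≤ 1 := by
  rw [card_sdiff_of_subset (insert_subset hd (singleton_subset_iff.mpr hp)), card_pair hdp, hT]

lemma sum_erase_ite_mem_and_mem {α : Type*} [Fintype α] [DecidableEq α] (T : Finset α) (x : α) :
    ∑ y ∈ univ.erase x, (if x ∈ T ∧ y ∈ T then 1 else 0) =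
      if x ∈ T then (T.erase x).card else 0 := by
  by_cases hx : x ∈ T
  · simp only [hx, true_and, if_true, sum_boole, Nat.cast_id]
    congr 1
    ext y
    simp [and_comm]
  · simp [hx]

lemma choose_three_mul_six (k : ℕ) : k.choose 3 * 6 = k * (k - 1) * (k - 2) := by
  rw [mul_comm, show 6 = Nat.factorial 3 from rfl, ← Nat.descFactorial_eq_factorial_mul_choose]
  rcases k with _ | _ | _ | k <;> simp [Nat.descFactorial_succ]
  ring

section

variable {n : ℕ}

def memColoring (S : Finset (Fin n)) : Fin n → Bool := fun w => decide (w ∈ S)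

lemma filter_memColoring_eq (S : Finset (Fin n)) (b : Fin n) :
    univ.filter (fun x => memColoring S x = memColoring S b) = if b ∈ S then S else Sᶜ := by
  ext x
  by_cases hb : b ∈ S <;> simp [memColoring, hb]

lemma notMem_of_nonMinBall_memColoring {S : Finset (Fin n)} {b : Fin n}
    (h : nonMinBall (memColoring S) univ b) (hS : 2 * S.card < n) : b ∉ S := by
  intro hb
  have := h.2
  rw [filter_memColoring_eq, if_pos hb, card_univ, Fintype.card_fin] at this
  omega

lemma mem_of_nonMinBall_memColoring {S : Finset (Fin n)} {b : Fin n}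
    (h : nonMinBall (memColoring S) univ b) (hS : n < 2 * S.card) : b ∈ S := by
  by_contra hb
  have := h.2
  have hSn := card_le_univ S
  rw [filter_memColoring_eq, if_neg hb, card_compl, card_univ] at this
  rw [Fintype.card_fin] at this hSn
  omega

lemma majBall_triple_of_eq_or_eq {c : Fin n → Bool} {x y z : Fin n} (hxy : x ≠ y) (hxz : x ≠ z)
    (hyz : y ≠ z) (h : c x = c y ∨ c x = c z) : majBall c {x, y, z} x := by
  refine ⟨mem_insert_self _ _, ?_⟩
  obtain ⟨o, ho, hox, hco⟩ : ∃ o ∈ ({x, y, z} : Finset (Fin n)), o ≠ x ∧ c o = c x := by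
    rcases h with h | h
    · exact ⟨y, by simp, hxy.symm, h.symm⟩
    · exact ⟨z, by simp, hxz.symm, h.symm⟩
  have hsub : {o, x} ⊆ ({x, y, z} : Finset (Fin n)).filter fun w => c w = c x := by
    intro w hw
    rcases mem_insert.mp hw with rfl | hw
    · exact mem_filter.mpr ⟨ho, hco⟩
    · rw [mem_singleton.mp hw]; simp
  have := card_le_card hsub
  rw [card_pair hox] at this
  rw [card_eq_three.mpr ⟨x, y, z, hxy, hxz, hyz, rfl⟩]
  omega

def HasPartner (a b c : Bool × Bool × Bool) : Prop :=
  (a.1 = b.1 ∨ a.1 = c.1) ∧ (a.2.1 = b.2.1 ∨ a.2.1 = c.2.1) ∧ (a.2.2 = b.2.2 ∨ a.2.2 = c.2.2)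

instance (a b c : Bool × Bool × Bool) : Decidable (HasPartner a b c) := by
  unfold HasPartner; infer_instance

/-- Profiles encode `(w ∈ B, w ∈ B ∪ D, w ∈ B ∪ P)` for disjoint `D`, `P`; the last disjunct
says that the three balls meet `B`, `D \ B` and `P \ B`. -/
lemma hasPartner_or_meets_all (a b c : Bool × Bool × Bool) (ha : a.1 = (a.2.1 && a.2.2))
    (hb : b.1 = (b.2.1 && b.2.2)) (hc : c.1 = (c.2.1 && c.2.2)) :
    HasPartner a b c ∨ HasPartner b a c ∨ HasPartner c a b ∨
      ((a.1 ∨ b.1 ∨ c.1) ∧ (a.2.1 && !a.1 ∨ b.2.1 && !b.1 ∨ c.2.1 && !c.1) ∧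
        (a.2.2 && !a.1 ∨ b.2.2 && !b.1 ∨ c.2.2 && !c.1)) := by
  revert a b c; decide

lemma majBall_of_hasPartner {π : Fin n → Bool × Bool × Bool} {x y z : Fin n} (hxy : x ≠ y)
    (hxz : x ≠ z) (hyz : y ≠ z) (h : HasPartner (π x) (π y) (π z)) :
    majBall (fun w => (π w).1) {x, y, z} x ∧ majBall (fun w => (π w).2.1) {x, y, z} x ∧
      majBall (fun w => (π w).2.2) {x, y, z} x :=
  ⟨majBall_triple_of_eq_or_eq hxy hxz hyz h.1, majBall_triple_of_eq_or_eq hxy hxz hyz h.2.1,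
    majBall_triple_of_eq_or_eq hxy hxz hyz h.2.2⟩

lemma exists_majBall_memColoring_of_card_eq_three {B D P T : Finset (Fin n)} (hDP : Disjoint D P)
    (hT : T.card = 3) (hfree : ∀ d ∈ D, ∀ p ∈ P, ∀ b ∈ B, d ∈ T → p ∈ T → b ∉ T) :
    ∃ t ∈ T, majBall (memColoring B) T t ∧ majBall (memColoring (B ∪ D)) T t ∧
      majBall (memColoring (B ∪ P)) T t := by
  set π : Fin n → Bool × Bool × Bool :=
    fun w => (memColoring B w, memColoring (B ∪ D) w, memColoring (B ∪ P) w)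
  have hprof (w : Fin n) : (π w).1 = ((π w).2.1 && (π w).2.2) := by
    have : w ∈ D → w ∉ P := fun h => disjoint_left.mp hDP h
    by_cases hB : w ∈ B
    · simp [π, memColoring, hB]
    · simp only [π, memColoring, hB, decide_false, mem_union, false_or, Bool.false_eq,
        Bool.and_eq_false_imp, decide_eq_true_eq, decide_eq_false_iff_not]
      exact this
  obtain ⟨x, y, z, hxy, hxz, hyz, rfl⟩ := card_eq_three.mp hT
  rcases hasPartner_or_meets_all (π x) (π y) (π z) (hprof x) (hprof y) (hprof z) with
    h | h | h | ⟨hb, hd, hp⟩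
  · exact ⟨x, by simp, majBall_of_hasPartner hxy hxz hyz h⟩
  · rw [insert_comm]
    exact ⟨y, by simp, majBall_of_hasPartner hxy.symm hyz hxz h⟩
  · rw [pair_comm, insert_comm]
    exact ⟨z, by simp, majBall_of_hasPartner hxz.symm hyz.symm hxy h⟩
  · obtain ⟨b, hbT, hbB⟩ : ∃ b ∈ ({x, y, z} : Finset (Fin n)), (π b).1 := by simpa using hb
    obtain ⟨d, hdT, hdD⟩ : ∃ d ∈ ({x, y, z} : Finset (Fin n)), (π d).2.1 && !(π d).1 := by
      simpa using hd
    obtain ⟨p, hpT, hpP⟩ : ∃ p ∈ ({x, y, z} : Finset (Fin n)), (π p).2.2 && !(π p).1 := by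
      simpa using hp
    simp only [π, memColoring, Bool.and_eq_true, Bool.not_eq_eq_eq_not, Bool.not_true,
      decide_eq_true_eq, decide_eq_false_iff_not, mem_union] at hbB hdD hpP
    exact (hfree d (hdD.1.resolve_left hdD.2) p (hpP.1.resolve_left hpP.2) b hbB hdT hpT hbT).elim

theorem not_determines_of_forall_not_mem {Q : Finset (Finset (Fin n))}
    (hQ3 : ∀ T ∈ Q, T.card = 3) {B D P : Finset (Fin n)} (hDP : Disjoint D P)
    (hB : 2 * B.card < n) (hBD : n < 2 * (B ∪ D).card) (hBP : n < 2 * (B ∪ P).card)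
    (hfree : ∀ T ∈ Q, ∀ d ∈ D, ∀ p ∈ P, ∀ b ∈ B, d ∈ T → p ∈ T → b ∉ T) :
    ¬ Determines Q := by
  intro hdet
  have : Nonempty (Fin n) := ⟨⟨0, by omega⟩⟩
  choose! a haT ha using fun T hT =>
    exists_majBall_memColoring_of_card_eq_three hDP (hQ3 T hT) (hfree T hT)
  obtain ⟨b, hb⟩ := hdet a haT ⟨memColoring B, fun T hT => (ha T hT).1⟩
  have hbB := notMem_of_nonMinBall_memColoring (hb _ fun T hT => (ha T hT).1) hB
  have hbD := mem_of_nonMinBall_memColoring (hb _ fun T hT => (ha T hT).2.1) hBD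
  have hbP := mem_of_nonMinBall_memColoring (hb _ fun T hT => (ha T hT).2.2) hBP
  rw [mem_union] at hbD hbP
  exact disjoint_left.mp hDP (hbD.resolve_left hbB) (hbP.resolve_left hbB)

theorem le_two_mul_sum_codeg_add_four {Q : Finset (Finset (Fin n))} (hQ3 : ∀ T ∈ Q, T.card = 3)
    (hdet : Determines Q) {D P : Finset (Fin n)} (hDP : Disjoint D P) (hD : D.card = 2)
    (hP : P.card = 2) : n ≤ 2 * ∑ d ∈ D, ∑ p ∈ P, codeg Q d p + 4 := by
  by_contra! hlt
  set J := D.biUnion fun d => P.biUnion fun p =>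
    (Q.filter fun T => d ∈ T ∧ p ∈ T).biUnion fun T => T \ {d, p}
  have hJ : J.card ≤ ∑ d ∈ D, ∑ p ∈ P, codeg Q d p := by
    refine card_biUnion_le.trans (sum_le_sum fun d hd => card_biUnion_le.trans
      (sum_le_sum fun p hp => card_biUnion_le.trans ?_))
    rw [codeg, card_eq_sum_ones]
    refine sum_le_sum fun T hT => ?_
    rw [mem_filter] at hT
    exact card_sdiff_pair_le_one (hQ3 T hT.1) (disjoint_left.mp hDP hd <| · ▸ hp) hT.2.1 hT.2.2
  set R := (D ∪ P ∪ J)ᶜ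
  have hR : n - 4 - J.card ≤ R.card := by
    have := card_union_le (D ∪ P) J
    have := card_union_le D P
    rw [card_compl, Fintype.card_fin]
    omega
  -- `|B| = ⌊(n - 2) / 2⌋` is the size with `2 |B| < n < 2 (|B| + 2)`.
  obtain ⟨B, hBR, hB⟩ := exists_subset_card_eq (s := R) (n := (n - 2) / 2) (by omega)
  have hBD : Disjoint B D := disjoint_left.mpr fun b hb hbD => by
    have := hBR hb; simp [R, hbD] at this
  have hBP : Disjoint B P := disjoint_left.mpr fun b hb hbP => by
    have := hBR hb; simp [R, hbP] at this
  refine not_determines_of_forall_not_mem hQ3 hDP (B := B) (by omega)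
    (by rw [card_union_of_disjoint hBD]; omega) (by rw [card_union_of_disjoint hBP]; omega)
    (fun T hT d hd p hp b hb hdT hpT hbT => ?_) hdet
  have hbJ : b ∈ J := by
    simp only [J, mem_biUnion, mem_filter, mem_sdiff, mem_insert, mem_singleton]
    exact ⟨d, hd, p, hp, T, ⟨hT, hdT, hpT⟩, hbT, by
      rintro (rfl | rfl)
      exacts [disjoint_left.mp hBD hb hd, disjoint_left.mp hBP hb hp]⟩
  have := hBR hb
  simp [R, hbJ] at this

lemma sum_sum_erase_codeg (Q : Finset (Finset (Fin n))) :
    ∑ x, ∑ y ∈ univ.erase x, codeg Q x y = ∑ T ∈ Q, T.card * (T.card - 1) := by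
  simp only [codeg, card_filter]
  rw [sum_congr rfl fun x _ => sum_comm, sum_comm]
  refine sum_congr rfl fun T _ => ?_
  simp only [sum_erase_ite_mem_and_mem, sum_ite_mem, univ_inter]
  rw [sum_congr rfl fun x hx => card_erase_of_mem hx, sum_const, smul_eq_mul]

end

theorem stmt_6_general (n : ℕ) (hn : 4 ≤ n) (Q : Finset (Finset (Fin n)))
    (hQ3 : ∀ T ∈ Q, T.card = 3) (hdet : Determines Q) :
    (n - 2).choose 3 ≤ 8 * Q.card := by
  set deg : Fin n → ℕ := fun x => ∑ y ∈ univ.erase x, codeg Q x y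
  have hdeg : ∑ x, deg x = 6 * Q.card := by
    rw [sum_sum_erase_codeg, sum_congr rfl fun T hT => by rw [hQ3 T hT], sum_const, smul_eq_mul,
      mul_comm]
  obtain ⟨D, -, hD, hDdeg⟩ :=
    exists_card_two_subset_card_mul_sum_le deg (s := univ) (by simp; omega)
  set cross : Fin n → ℕ := fun p => ∑ d ∈ D, codeg Q d p
  obtain ⟨P, hPD, hP, hPcross⟩ := exists_card_two_subset_card_mul_sum_le cross (s := Dᶜ)
    (by rw [card_compl, Fintype.card_fin]; omega)
  have hDP : Disjoint D P := disjoint_left.mpr fun x hxD hxP => mem_compl.mp (hPD hxP) hxD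
  have hcross : ∑ p ∈ Dᶜ, cross p ≤ ∑ d ∈ D, deg d := by
    rw [sum_comm]
    exact sum_le_sum fun d hd => sum_le_sum_of_subset fun p hp =>
      mem_erase.mpr ⟨fun h => mem_compl.mp hp (h ▸ hd), mem_univ p⟩
  have hkey : n ≤ 2 * ∑ p ∈ P, cross p + 4 := by
    rw [sum_comm]; exact le_two_mul_sum_codeg_add_four hQ3 hdet hDP hD hP
  rw [card_compl, Fintype.card_fin, hD] at hPcross
  rw [card_univ, Fintype.card_fin, hdeg] at hDdeg
  refine Nat.le_of_mul_le_mul_right ?_ (by norm_num : 0 < 6)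
  calc (n - 2).choose 3 * 6 = (n - 2) * (n - 3) * (n - 4) := by
        rw [choose_three_mul_six, Nat.sub_sub, Nat.sub_sub]
    _ ≤ n * (n - 2) * (2 * ∑ p ∈ P, cross p) := by gcongr <;> omega
    _ = 2 * n * ((n - 2) * ∑ p ∈ P, cross p) := by ring
    _ ≤ 2 * n * (2 * ∑ d ∈ D, deg d) :=
        Nat.mul_le_mul_left _ (hPcross.trans (Nat.mul_le_mul_left 2 hcross))
    _ = 4 * (n * ∑ d ∈ D, deg d) := by ring
    _ ≤ 4 * (2 * (6 * Q.card)) := by gcongr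
    _ = 8 * Q.card * 6 := by ring

theorem stmt_6 (n : ℕ) (heven : Even n) (hn : 4 ≤ n) (Q : Finset (Finset (Fin n)))
    (hQ3 : ∀ T ∈ Q, T.card = 3) (hdet : Determines Q) :
    (n - 2).choose 3 ≤ 8 * Q.card :=
  stmt_6_general n hn Q hQ3 hdet
end

section
/- For every real ε > 0 there exists n₀ such that for every n ≥ n₀ there exists a family Q of 3-element subsets of [n] that determines a non-minority ball and satisfies |Q| ≤ (5/6 + ε)·binomial(n,3). -/
open Finset

/-- The strict minority set of a coloring. -/
def mset {n : ℕ} (c : Fin n → Bool) : Finset (Fin n) :=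
  univ.filter fun x => 2 * (univ.filter fun y => c y = c x).card < n

lemma mem_mset {n : ℕ} {c : Fin n → Bool} {x : Fin n} :
    x ∈ mset c ↔ 2 * (univ.filter fun y => c y = c x).card < n := by
  simp [mset]

lemma mset_congr {n : ℕ} {c : Fin n → Bool} {x y : Fin n} (h : c x = c y) (hx : x ∈ mset c) :
    y ∈ mset c := by
  rw [mem_mset] at hx ⊢
  have he : (univ.filter fun w => c w = c y) = univ.filter fun w => c w = c x := by
    ext w; simp [h]
  rw [he]; exact hx

lemma mset_same {n : ℕ} {c : Fin n → Bool} {x y : Fin n} (hx : x ∈ mset c) (hy : y ∈ mset c) :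
    c x = c y := by
  by_contra hne
  rw [mem_mset] at hx hy
  have hsub : (univ.filter fun w => ¬ (c w = c x)) ⊆ univ.filter fun w => c w = c y := by
    intro w hw
    simp only [mem_filter, mem_univ, true_and] at hw ⊢
    cases hcx : c x <;> cases hcy : c y <;> cases hcw : c w <;> simp_all
  have h1 := Finset.card_filter_add_card_filter_not (s := (univ : Finset (Fin n)))
      (p := fun w => c w = c x)
  have h2 : (univ : Finset (Fin n)).card = n := by simp
  have h3 := Finset.card_le_card hsub
  omega

lemma sing_of {n : ℕ} {c : Fin n → Bool} {x y z : Fin n} (hx : x ∈ mset c) (hy : y ∉ mset c)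
    (hz : z ∉ mset c) : c x ≠ c y ∧ c y = c z := by
  have h1 : c x ≠ c y := fun h => hy (mset_congr h hx)
  have h2 : c x ≠ c z := fun h => hz (mset_congr h hx)
  constructor
  · exact h1
  · cases hcx : c x <;> cases hcy : c y <;> cases hcz : c z <;> simp_all

lemma mset_small {n : ℕ} {c : Fin n → Bool} {x : Fin n} (hx : x ∈ mset c) :
    2 * (mset c).card < n := by
  have hsub : mset c ⊆ univ.filter fun y => c y = c x := by
    intro w hw
    simp only [mem_filter, mem_univ, true_and]
    exact mset_same hw hx
  have h1 := Finset.card_le_card hsub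
  rw [mem_mset] at hx
  omega

lemma card_triple {n : ℕ} {x y z : Fin n} (hxy : x ≠ y) (hxz : x ≠ z) (hyz : y ≠ z) :
    ({x, y, z} : Finset (Fin n)).card = 3 := by
  rw [Finset.card_insert_of_notMem (by simp [hxy, hxz]),
    Finset.card_insert_of_notMem (by simp [hyz]), Finset.card_singleton]

lemma bad_triple {n : ℕ} {Q : Finset (Finset (Fin n))} {a : Finset (Fin n) → Fin n}
    (ha : ∀ T ∈ Q, a T ∈ T) {c1 c2 c3 : Fin n → Bool}
    (h1 : Legal Q a c1) (h2 : Legal Q a c2) (h3 : Legal Q a c3)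
    {x y z : Fin n} (hxy : x ≠ y) (hxz : x ≠ z) (hyz : y ≠ z)
    (hTQ : ({x, y, z} : Finset (Fin n)) ∈ Q)
    (s1a : c1 x ≠ c1 y) (s1b : c1 y = c1 z)
    (s2a : c2 y ≠ c2 x) (s2b : c2 x = c2 z)
    (s3a : c3 z ≠ c3 x) (s3b : c3 x = c3 y) : False := by
  have hcard : ({x, y, z} : Finset (Fin n)).card = 3 := card_triple hxy hxz hyz
  have haT := ha _ hTQ
  rw [mem_insert, mem_insert, mem_singleton] at haT
  rcases haT with h | h | h
  · have hm := (h1 _ hTQ).2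
    rw [h] at hm
    have hf : (({x, y, z} : Finset (Fin n)).filter fun w => c1 w = c1 x) = {x} := by
      ext w
      simp only [mem_filter, mem_insert, mem_singleton]
      constructor
      · rintro ⟨(rfl | rfl | rfl), hc⟩
        · rfl
        · exact absurd hc.symm s1a
        · exact absurd (s1b.trans hc).symm s1a
      · rintro rfl; exact ⟨Or.inl rfl, rfl⟩
    rw [hf, hcard, Finset.card_singleton] at hm
    omega
  · have hm := (h2 _ hTQ).2
    rw [h] at hm
    have hf : (({x, y, z} : Finset (Fin n)).filter fun w => c2 w = c2 y) = {y} := by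
      ext w
      simp only [mem_filter, mem_insert, mem_singleton]
      constructor
      · rintro ⟨(rfl | rfl | rfl), hc⟩
        · exact absurd hc.symm s2a
        · rfl
        · exact absurd (s2b.trans hc).symm s2a
      · rintro rfl; exact ⟨Or.inr (Or.inl rfl), rfl⟩
    rw [hf, hcard, Finset.card_singleton] at hm
    omega
  · have hm := (h3 _ hTQ).2
    rw [h] at hm
    have hf : (({x, y, z} : Finset (Fin n)).filter fun w => c3 w = c3 z) = {z} := by
      ext w
      simp only [mem_filter, mem_insert, mem_singleton]
      constructor
      · rintro ⟨(rfl | rfl | rfl), hc⟩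
        · exact absurd hc.symm s3a
        · exact absurd (s3b.trans hc).symm s3a
        · rfl
      · rintro rfl; exact ⟨Or.inr (Or.inr rfl), rfl⟩
    rw [hf, hcard, Finset.card_singleton] at hm
    omega

lemma exists_min_cover {α : Type*} [DecidableEq α] :
    ∀ S : Finset (Finset α), (∀ x : α, ∃ s ∈ S, x ∈ s) →
      ∃ T ⊆ S, (∀ x : α, ∃ t ∈ T, x ∈ t) ∧
        ∀ t ∈ T, ∃ p, p ∈ t ∧ ∀ t' ∈ T, t' ≠ t → p ∉ t' := by
  intro S
  induction S using Finset.strongInduction with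
  | _ S ih =>
    intro hcov
    by_cases h : ∀ t ∈ S, ∃ p, p ∈ t ∧ ∀ t' ∈ S, t' ≠ t → p ∉ t'
    · exact ⟨S, Finset.Subset.refl S, hcov, h⟩
    · push_neg at h
      obtain ⟨t, ht, hno⟩ := h
      have hcov' : ∀ x : α, ∃ s ∈ S.erase t, x ∈ s := by
        intro x
        obtain ⟨s, hs, hxs⟩ := hcov x
        by_cases hst : s = t
        · subst hst
          obtain ⟨t', ht', hne, hxt'⟩ := hno x hxs
          exact ⟨t', Finset.mem_erase.mpr ⟨hne, ht'⟩, hxt'⟩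
        · exact ⟨s, Finset.mem_erase.mpr ⟨hst, hs⟩, hxs⟩
      obtain ⟨T, hTsub, hTcov, hTpriv⟩ := ih (S.erase t) (Finset.erase_ssubset ht) hcov'
      exact ⟨T, hTsub.trans (Finset.erase_subset _ _), hTcov, hTpriv⟩
lemma key_contra {n : ℕ} (hn : 30 ≤ n)
    {Q : Finset (Finset (Fin n))} {a : Finset (Fin n) → Fin n}
    (ha : ∀ T ∈ Q, a T ∈ T)
    (S S' : Finset (Fin n))
    (hcompl : ∀ x : Fin n, x ∈ S' ↔ x ∉ S)
    (hcard : S.card + S'.card = n)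
    (hbal : S.card ≤ S'.card + 1)
    (hQmem : ∀ x y z : Fin n, x ≠ y → x ≠ z → y ≠ z →
       ∀ u v : Fin n, u ∈ ({x, y, z} : Finset (Fin n)) → v ∈ ({x, y, z} : Finset (Fin n)) →
       u ∈ S → v ∈ S' → ({x, y, z} : Finset (Fin n)) ∈ Q)
    (𝓣 : Finset (Finset (Fin n)))
    (hTcov : ∀ x : Fin n, ∃ t ∈ 𝓣, x ∈ t)
    (hTleg : ∀ t ∈ 𝓣, ∃ c, Legal Q a c ∧ mset c = t)
    (hTpriv : ∀ t ∈ 𝓣, ∃ p, p ∈ t ∧ p ∈ S ∧ ∀ t' ∈ 𝓣, t' ≠ t → p ∉ t')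
    (hj3 : 3 ≤ 𝓣.card) : False := by
  classical
  choose col hcolleg hcolm using hTleg
  choose priv hprivmem hprivS hprivuniq using hTpriv
  have hTsize : ∀ t (ht : t ∈ 𝓣), 2 * t.card < n := by
    intro t ht
    have hx : priv t ht ∈ mset (col t ht) := by
      rw [hcolm t ht]; exact hprivmem t ht
    have := mset_small hx
    rwa [hcolm t ht] at this
  -- MULT: no element of S' is missed by two distinct members of 𝓣
  have hmult : ∀ u : Fin n, u ∈ S' → ∀ t1 (ht1 : t1 ∈ 𝓣), ∀ t2 (ht2 : t2 ∈ 𝓣),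
      t1 ≠ t2 → u ∉ t1 → u ∉ t2 → False := by
    intro u huS' t1 ht1 t2 ht2 hne hu1 hu2
    obtain ⟨t3, ht3, hu3⟩ := hTcov u
    have hne31 : t3 ≠ t1 := by rintro rfl; exact hu1 hu3
    have hne32 : t3 ≠ t2 := by rintro rfl; exact hu2 hu3
    have hp2n1 : priv t2 ht2 ∉ t1 := hprivuniq t2 ht2 t1 ht1 hne
    have hp1n2 : priv t1 ht1 ∉ t2 := hprivuniq t1 ht1 t2 ht2 hne.symm
    have hp1n3 : priv t1 ht1 ∉ t3 := hprivuniq t1 ht1 t3 ht3 hne31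
    have hp2n3 : priv t2 ht2 ∉ t3 := hprivuniq t2 ht2 t3 ht3 hne32
    have hp1p2 : priv t1 ht1 ≠ priv t2 ht2 := by
      intro h; rw [h] at hp1n2; exact hp1n2 (hprivmem t2 ht2)
    have hp1u : priv t1 ht1 ≠ u := by
      intro h; exact ((hcompl u).mp huS') (h ▸ hprivS t1 ht1)
    have hp2u : priv t2 ht2 ≠ u := by
      intro h; exact ((hcompl u).mp huS') (h ▸ hprivS t2 ht2)
    have hmQ : ({priv t1 ht1, priv t2 ht2, u} : Finset (Fin n)) ∈ Q :=
      hQmem _ _ _ hp1p2 hp1u hp2u (priv t1 ht1) u (by simp) (by simp)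
        (hprivS t1 ht1) huS'
    have hs1 := sing_of (c := col t1 ht1) (x := priv t1 ht1) (y := priv t2 ht2) (z := u)
      (by rw [hcolm t1 ht1]; exact hprivmem t1 ht1)
      (by rw [hcolm t1 ht1]; exact hp2n1) (by rw [hcolm t1 ht1]; exact hu1)
    have hs2 := sing_of (c := col t2 ht2) (x := priv t2 ht2) (y := priv t1 ht1) (z := u)
      (by rw [hcolm t2 ht2]; exact hprivmem t2 ht2)
      (by rw [hcolm t2 ht2]; exact hp1n2) (by rw [hcolm t2 ht2]; exact hu2)
    have hs3 := sing_of (c := col t3 ht3) (x := u) (y := priv t1 ht1) (z := priv t2 ht2)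
      (by rw [hcolm t3 ht3]; exact hu3)
      (by rw [hcolm t3 ht3]; exact hp1n3) (by rw [hcolm t3 ht3]; exact hp2n3)
    exact bad_triple ha (hcolleg t1 ht1) (hcolleg t2 ht2) (hcolleg t3 ht3)
      hp1p2 hp1u hp2u hmQ hs1.1 hs1.2 hs2.1 hs2.2 hs3.1 hs3.2
  -- counting
  have hmult' : ∀ u ∈ S', 𝓣.card - 1 ≤ (𝓣.filter (fun t => u ∈ t)).card := by
    intro u hu
    have hle1 : (𝓣.filter (fun t => ¬ u ∈ t)).card ≤ 1 := by
      apply Finset.card_le_one.mpr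
      intro t1 h1 t2 h2
      rw [mem_filter] at h1 h2
      by_contra hne
      exact hmult u hu t1 h1.1 t2 h2.1 hne h1.2 h2.2
    have heq := Finset.card_filter_add_card_filter_not (s := 𝓣) (p := fun t => u ∈ t)
    omega
  have hsum1 : S.card ≤ ∑ t ∈ 𝓣, (S.filter (fun x => x ∈ t)).card := by
    have h1 : S ⊆ 𝓣.biUnion (fun t => S.filter (fun x => x ∈ t)) := by
      intro x hx
      obtain ⟨t, ht, hxt⟩ := hTcov x
      exact Finset.mem_biUnion.mpr ⟨t, ht, Finset.mem_filter.mpr ⟨hx, hxt⟩⟩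
    exact (Finset.card_le_card h1).trans Finset.card_biUnion_le
  have hsum2 : (𝓣.card - 1) * S'.card ≤ ∑ t ∈ 𝓣, (S'.filter (fun x => x ∈ t)).card := by
    have hswap : ∑ t ∈ 𝓣, (S'.filter (fun x => x ∈ t)).card
        = ∑ x ∈ S', (𝓣.filter (fun t => x ∈ t)).card := by
      simp only [Finset.card_filter]
      exact Finset.sum_comm
    rw [hswap]
    calc (𝓣.card - 1) * S'.card = ∑ _x ∈ S', (𝓣.card - 1) := by
          rw [Finset.sum_const, smul_eq_mul, mul_comm]
    _ ≤ _ := Finset.sum_le_sum (fun x hx => hmult' x hx)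
  have hsum3 : ∀ t ∈ 𝓣, (S.filter (fun x => x ∈ t)).card + (S'.filter (fun x => x ∈ t)).card
      ≤ t.card := by
    intro t ht
    have hdis : Disjoint (S.filter (fun x => x ∈ t)) (S'.filter (fun x => x ∈ t)) := by
      rw [Finset.disjoint_left]
      intro x hx hx'
      rw [mem_filter] at hx hx'
      exact ((hcompl x).mp hx'.1) hx.1
    rw [← Finset.card_union_of_disjoint hdis]
    apply Finset.card_le_card
    intro x hx
    rcases Finset.mem_union.mp hx with h | h
    · exact (mem_filter.mp h).2
    · exact (mem_filter.mp h).2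
  have htot : S.card + (𝓣.card - 1) * S'.card ≤ ∑ t ∈ 𝓣, t.card := by
    calc S.card + (𝓣.card - 1) * S'.card
        ≤ (∑ t ∈ 𝓣, (S.filter (fun x => x ∈ t)).card)
          + ∑ t ∈ 𝓣, (S'.filter (fun x => x ∈ t)).card := add_le_add hsum1 hsum2
    _ = ∑ t ∈ 𝓣, ((S.filter (fun x => x ∈ t)).card + (S'.filter (fun x => x ∈ t)).card) :=
        Finset.sum_add_distrib.symm
    _ ≤ ∑ t ∈ 𝓣, t.card := Finset.sum_le_sum hsum3
  have hbig : 2 * (∑ t ∈ 𝓣, t.card) + 𝓣.card ≤ 𝓣.card * n := by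
    have h1 : ∑ t ∈ 𝓣, (2 * t.card + 1) ≤ ∑ t ∈ 𝓣, n :=
      Finset.sum_le_sum (fun t ht => by have := hTsize t ht; omega)
    rw [Finset.sum_add_distrib, Finset.sum_const, Finset.sum_const, smul_eq_mul,
      smul_eq_mul, mul_one, ← Finset.mul_sum] at h1
    exact h1
  -- final arithmetic
  obtain ⟨k, hk⟩ : ∃ k, 𝓣.card = k + 3 := ⟨𝓣.card - 3, by omega⟩
  rw [hk] at htot hbig
  have h2 : (k + 3) - 1 = k + 2 := by omega
  rw [h2] at htot
  have h5 : (k + 1) * S.card ≤ (k + 1) * S'.card + (k + 1) := by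
    calc (k + 1) * S.card ≤ (k + 1) * (S'.card + 1) := Nat.mul_le_mul_left _ hbal
    _ = (k + 1) * S'.card + (k + 1) := by ring
  have h6 : 2 * (S.card + (k + 2) * S'.card) + (k + 3) ≤ (k + 3) * S.card + (k + 3) * S'.card := by
    calc 2 * (S.card + (k + 2) * S'.card) + (k + 3)
        ≤ 2 * (∑ t ∈ 𝓣, t.card) + (k + 3) := by
          have := Nat.mul_le_mul_left 2 htot; omega
    _ ≤ (k + 3) * n := hbig
    _ = (k + 3) * (S.card + S'.card) := by rw [hcard]
    _ = (k + 3) * S.card + (k + 3) * S'.card := by ring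
  nlinarith [h5, h6]
lemma main_det {n : ℕ} (hn : 30 ≤ n) (W : Finset (Fin n))
    (hWlow : n ≤ 2 * W.card + 1) (hWhigh : 2 * W.card ≤ n + 1) :
    Determines ((Finset.powersetCard 3 (univ : Finset (Fin n))).filter
      (fun T => ¬ T ⊆ W ∧ ¬ T ⊆ (univ \ W))) := by
  classical
  set Q := (Finset.powersetCard 3 (univ : Finset (Fin n))).filter
      (fun T => ¬ T ⊆ W ∧ ¬ T ⊆ (univ \ W)) with hQdef
  intro a ha hex
  by_contra hcon
  push_neg at hcon
  have H : ∀ b : Fin n, ∃ c, Legal Q a c ∧ b ∈ mset c := by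
    intro b
    obtain ⟨c, hc, hnm⟩ := hcon b
    refine ⟨c, hc, ?_⟩
    rw [mem_mset]
    by_contra hlt
    push_neg at hlt
    refine hnm ⟨mem_univ b, ?_⟩
    simpa using hlt
  choose F hFleg hFm using H
  have hS0cov : ∀ x : Fin n, ∃ s ∈ univ.image (fun b => mset (F b)), x ∈ s := fun x =>
    ⟨mset (F x), mem_image_of_mem _ (mem_univ x), hFm x⟩
  obtain ⟨𝓣, hTsub, hTcov, hTpriv⟩ := exists_min_cover _ hS0cov
  have hTleg : ∀ t ∈ 𝓣, ∃ c, Legal Q a c ∧ mset c = t := by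
    intro t ht
    obtain ⟨b, _, hb⟩ := Finset.mem_image.mp (hTsub ht)
    exact ⟨F b, hFleg b, hb⟩
  -- sizes of members
  have hTsize : ∀ t ∈ 𝓣, 2 * t.card < n := by
    intro t ht
    obtain ⟨c, _, hc⟩ := hTleg t ht
    obtain ⟨p, hp, _⟩ := hTpriv t ht
    subst hc
    exact mset_small hp
  -- j ≥ 3
  have hcovcard : n ≤ ∑ t ∈ 𝓣, t.card := by
    have h1 : (univ : Finset (Fin n)) ⊆ 𝓣.biUnion id := by
      intro x _
      obtain ⟨t, ht, hxt⟩ := hTcov x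
      exact Finset.mem_biUnion.mpr ⟨t, ht, hxt⟩
    calc n = (univ : Finset (Fin n)).card := by simp
    _ ≤ (𝓣.biUnion id).card := Finset.card_le_card h1
    _ ≤ ∑ t ∈ 𝓣, t.card := by simpa using Finset.card_biUnion_le (s := 𝓣) (t := id)
  have hsumsmall : 2 * (∑ t ∈ 𝓣, t.card) + 𝓣.card ≤ 𝓣.card * n := by
    have h1 : ∑ t ∈ 𝓣, (2 * t.card + 1) ≤ ∑ t ∈ 𝓣, n :=
      Finset.sum_le_sum (fun t ht => by have := hTsize t ht; omega)
    rw [Finset.sum_add_distrib, Finset.sum_const, Finset.sum_const, smul_eq_mul,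
      smul_eq_mul, mul_one, ← Finset.mul_sum] at h1
    exact h1
  have hj3 : 3 ≤ 𝓣.card := by
    by_contra hj
    push_neg at hj
    interval_cases h : 𝓣.card <;> omega
  -- membership in Q for spanning triples
  have hQmem_gen : ∀ x y z u v : Fin n, x ≠ y → x ≠ z → y ≠ z →
      u ∈ ({x, y, z} : Finset (Fin n)) → v ∈ ({x, y, z} : Finset (Fin n)) →
      u ∈ W → v ∉ W → ({x, y, z} : Finset (Fin n)) ∈ Q := by
    intro x y z u v hxy hxz hyz hu hv huW hvW
    rw [hQdef, mem_filter, Finset.mem_powersetCard]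
    refine ⟨⟨Finset.subset_univ _, card_triple hxy hxz hyz⟩, fun hsub => hvW (hsub hv),
      fun hsub => ?_⟩
    have := hsub hu
    rw [Finset.mem_sdiff] at this
    exact this.2 huW
  -- privates
  choose priv hprivmem hprivuniq using hTpriv
  have hside : (∀ t (ht : t ∈ 𝓣), priv t ht ∈ W) ∨ (∀ t (ht : t ∈ 𝓣), priv t ht ∉ W) := by
    by_contra hc
    push_neg at hc
    obtain ⟨⟨t2, ht2, hp2⟩, t1, ht1, hp1⟩ := hc
    have hne : t1 ≠ t2 := by
      rintro rfl
      exact hp2 hp1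
    obtain ⟨t3, ht3, hne31, hne32⟩ : ∃ t3 ∈ 𝓣, t3 ≠ t1 ∧ t3 ≠ t2 := by
      have hc1 : 1 ≤ ((𝓣.erase t1).erase t2).card := by
        rw [Finset.card_erase_of_mem (Finset.mem_erase.mpr ⟨hne.symm, ht2⟩),
          Finset.card_erase_of_mem ht1]
        omega
      obtain ⟨t3, ht3⟩ := Finset.card_pos.mp (show 0 < ((𝓣.erase t1).erase t2).card by omega)
      rw [Finset.mem_erase, Finset.mem_erase] at ht3
      exact ⟨t3, ht3.2.2, ht3.2.1, ht3.1⟩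
    obtain ⟨c1, hc1leg, hc1m⟩ := hTleg t1 ht1
    obtain ⟨c2, hc2leg, hc2m⟩ := hTleg t2 ht2
    obtain ⟨c3, hc3leg, hc3m⟩ := hTleg t3 ht3
    have hp2n1 : priv t2 ht2 ∉ t1 := hprivuniq t2 ht2 t1 ht1 hne
    have hp1n2 : priv t1 ht1 ∉ t2 := hprivuniq t1 ht1 t2 ht2 hne.symm
    have hp1n3 : priv t1 ht1 ∉ t3 := hprivuniq t1 ht1 t3 ht3 hne31
    have hp2n3 : priv t2 ht2 ∉ t3 := hprivuniq t2 ht2 t3 ht3 hne32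
    have hp3n1 : priv t3 ht3 ∉ t1 := hprivuniq t3 ht3 t1 ht1 hne31.symm
    have hp3n2 : priv t3 ht3 ∉ t2 := hprivuniq t3 ht3 t2 ht2 hne32.symm
    have h12 : priv t1 ht1 ≠ priv t2 ht2 := by
      intro h; rw [h] at hp1n2; exact hp1n2 (hprivmem t2 ht2)
    have h13 : priv t1 ht1 ≠ priv t3 ht3 := by
      intro h; rw [h] at hp1n3; exact hp1n3 (hprivmem t3 ht3)
    have h23 : priv t2 ht2 ≠ priv t3 ht3 := by
      intro h; rw [h] at hp2n3; exact hp2n3 (hprivmem t3 ht3)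
    have hmQ : ({priv t1 ht1, priv t2 ht2, priv t3 ht3} : Finset (Fin n)) ∈ Q :=
      hQmem_gen _ _ _ (priv t1 ht1) (priv t2 ht2) h12 h13 h23 (by simp) (by simp) hp1 hp2
    have hs1 := sing_of (c := c1) (x := priv t1 ht1) (y := priv t2 ht2) (z := priv t3 ht3)
      (by rw [hc1m]; exact hprivmem t1 ht1) (by rw [hc1m]; exact hp2n1)
      (by rw [hc1m]; exact hp3n1)
    have hs2 := sing_of (c := c2) (x := priv t2 ht2) (y := priv t1 ht1) (z := priv t3 ht3)
      (by rw [hc2m]; exact hprivmem t2 ht2) (by rw [hc2m]; exact hp1n2)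
      (by rw [hc2m]; exact hp3n2)
    have hs3 := sing_of (c := c3) (x := priv t3 ht3) (y := priv t1 ht1) (z := priv t2 ht2)
      (by rw [hc3m]; exact hprivmem t3 ht3) (by rw [hc3m]; exact hp1n3)
      (by rw [hc3m]; exact hp2n3)
    exact bad_triple ha hc1leg hc2leg hc3leg h12 h13 h23 hmQ hs1.1 hs1.2 hs2.1 hs2.2 hs3.1 hs3.2
  have hWc : (univ \ W).card = n - W.card := by
    rw [Finset.card_sdiff_of_subset (Finset.subset_univ W)]
    simp
  have hWcard_le : W.card ≤ n := by
    have := Finset.card_le_card (Finset.subset_univ W)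
    simpa using this
  rcases hside with hall | hall
  · -- privates in W ; S = W, S' = univ \ W
    refine key_contra hn ha W (univ \ W) (fun x => by simp) (by omega) (by omega)
      (fun x y z hxy hxz hyz u v hu hv huS hvS' =>
        hQmem_gen x y z u v hxy hxz hyz hu hv huS (by rw [Finset.mem_sdiff] at hvS'; exact hvS'.2))
      𝓣 hTcov hTleg ?_ hj3
    intro t ht
    exact ⟨priv t ht, hprivmem t ht, hall t ht, hprivuniq t ht⟩
  · -- privates outside W ; S = univ \ W, S' = W
    refine key_contra hn ha (univ \ W) W (fun x => by simp) (by omega) (by omega)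
      (fun x y z hxy hxz hyz u v hu hv huS hvS' =>
        hQmem_gen x y z v u hxy hxz hyz hv hu hvS' (by rw [Finset.mem_sdiff] at huS; exact huS.2))
      𝓣 hTcov hTleg ?_ hj3
    intro t ht
    refine ⟨priv t ht, hprivmem t ht, ?_, hprivuniq t ht⟩
    rw [Finset.mem_sdiff]
    exact ⟨mem_univ _, hall t ht⟩
lemma two_mul_choose_two : ∀ q : ℕ, 2 * ((q + 2).choose 2) = (q + 2) * (q + 1) := by
  intro q
  induction q with
  | zero => decide
  | succ q ih =>
    have h : (q + 3).choose 2 = (q + 2).choose 1 + (q + 2).choose 2 := Nat.choose_succ_succ' _ _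
    rw [show q + 1 + 2 = q + 3 from rfl, h, Nat.choose_one_right]
    ring_nf
    ring_nf at ih
    omega

lemma six_mul_choose_three : ∀ q : ℕ, 6 * ((q + 3).choose 3) = (q + 3) * (q + 2) * (q + 1) := by
  intro q
  induction q with
  | zero => decide
  | succ q ih =>
    have h : (q + 4).choose 3 = (q + 3).choose 2 + (q + 3).choose 3 := Nat.choose_succ_succ' _ _
    have h2 := two_mul_choose_two (q + 1)
    rw [show q + 1 + 3 = q + 4 from rfl, h]
    have : 6 * ((q + 3).choose 2 + (q + 3).choose 3)
        = 3 * (2 * ((q + 1 + 2).choose 2)) + 6 * ((q + 3).choose 3) := by ring_nf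
    rw [this, h2, ih]
    ring
lemma choose_bound {n : ℕ} (hn : 30 ≤ n) :
    n.choose 3 ≤ 6 * ((n / 2).choose 3 + (n - n / 2).choose 3) := by
  obtain ⟨m, hm⟩ : ∃ m, n / 2 = m := ⟨n / 2, rfl⟩
  have hmod := Nat.div_add_mod n 2
  have hm15 : 15 ≤ m := by omega
  obtain ⟨q, hq⟩ : ∃ q, m = q + 3 := ⟨m - 3, by omega⟩
  have hpar : n = 2 * m ∨ n = 2 * m + 1 := by omega
  rcases hpar with h | h
  · have hnm : n - m = m := by omega
    rw [hm, hnm]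
    have key : 6 * (n.choose 3) ≤ 6 * (6 * (m.choose 3 + m.choose 3)) := by
      have e1 : 6 * (n.choose 3) = (2 * q + 6) * (2 * q + 5) * (2 * q + 4) := by
        have : n = (2 * q + 3) + 3 := by omega
        rw [this, six_mul_choose_three]
        try ring
      have e2 : 6 * (6 * (m.choose 3 + m.choose 3)) = 12 * ((q + 3) * (q + 2) * (q + 1)) := by
        rw [hq]
        have := six_mul_choose_three q
        ring_nf
        ring_nf at this
        omega
      rw [e1, e2]
      nlinarith [hm15]
    exact Nat.le_of_mul_le_mul_left key (by norm_num)
  · have hnm : n - m = m + 1 := by omega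
    rw [hm, hnm]
    have key : 6 * (n.choose 3) ≤ 6 * (6 * (m.choose 3 + (m + 1).choose 3)) := by
      have e1 : 6 * (n.choose 3) = (2 * q + 7) * (2 * q + 6) * (2 * q + 5) := by
        have : n = (2 * q + 4) + 3 := by omega
        rw [this, six_mul_choose_three]
        try ring
      have e2 : 6 * (6 * (m.choose 3 + (m + 1).choose 3))
          = 6 * ((q + 3) * (q + 2) * (q + 1)) + 6 * ((q + 4) * (q + 3) * (q + 2)) := by
        rw [hq]
        have h1 := six_mul_choose_three q
        have h2 := six_mul_choose_three (q + 1)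
        ring_nf
        ring_nf at h1 h2
        omega
      rw [e1, e2]
      nlinarith [hm15]
    exact Nat.le_of_mul_le_mul_left key (by norm_num)

theorem stmt_7 (ε : ℝ) (hε : 0 < ε) :
    ∃ n₀ : ℕ, ∀ n : ℕ, n₀ ≤ n →
      ∃ Q : Finset (Finset (Fin n)), (∀ T ∈ Q, T.card = 3) ∧ Determines Q ∧
        (Q.card : ℝ) ≤ (5 / 6 + ε) * (n.choose 3) := by
  classical
  refine ⟨30, fun n hn => ?_⟩
  set W : Finset (Fin n) := (Finset.range (n / 2)).attachFin
    (fun m hm => lt_of_lt_of_le (Finset.mem_range.mp hm) (Nat.div_le_self n 2)) with hWdef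
  have hWcard : W.card = n / 2 := by
    rw [hWdef, Finset.card_attachFin, Finset.card_range]
  set Q := (Finset.powersetCard 3 (univ : Finset (Fin n))).filter
      (fun T => ¬ T ⊆ W ∧ ¬ T ⊆ (univ \ W)) with hQdef
  refine ⟨Q, ?_, ?_, ?_⟩
  · intro T hT
    rw [hQdef, mem_filter, Finset.mem_powersetCard] at hT
    exact hT.1.2
  · exact main_det hn W (by omega) (by omega)
  · -- cardinality bound
    have hWc : (univ \ W).card = n - n / 2 := by
      rw [Finset.card_sdiff_of_subset (Finset.subset_univ W)]
      simp [hWcard]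
    have hsplit := Finset.card_filter_add_card_filter_not
      (s := Finset.powersetCard 3 (univ : Finset (Fin n)))
      (p := fun T => ¬ T ⊆ W ∧ ¬ T ⊆ (univ \ W))
    have hUcard : (Finset.powersetCard 3 (univ : Finset (Fin n))).card = n.choose 3 := by
      rw [Finset.card_powersetCard]
      simp
    have hsub : (Finset.powersetCard 3 W) ∪ (Finset.powersetCard 3 (univ \ W)) ⊆
        (Finset.powersetCard 3 (univ : Finset (Fin n))).filter
          (fun T => ¬ (¬ T ⊆ W ∧ ¬ T ⊆ (univ \ W))) := by
      intro T hT
      rw [Finset.mem_union] at hT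
      rcases hT with h | h <;> rw [Finset.mem_powersetCard] at h <;>
        rw [mem_filter, Finset.mem_powersetCard] <;>
        refine ⟨⟨Finset.subset_univ _, h.2⟩, ?_⟩
      · intro hcon; exact hcon.1 h.1
      · intro hcon; exact hcon.2 h.1
    have hdisj : Disjoint (Finset.powersetCard 3 W) (Finset.powersetCard 3 (univ \ W)) := by
      rw [Finset.disjoint_left]
      intro T h1 h2
      rw [Finset.mem_powersetCard] at h1 h2
      have h3 : T ⊆ W ∩ (univ \ W) := Finset.subset_inter h1.1 h2.1
      rw [Finset.inter_sdiff_self] at h3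
      have h4 : T = ∅ := Finset.subset_empty.mp h3
      rw [h4] at h2
      simp at h2
    have hcards : (n / 2).choose 3 + (n - n / 2).choose 3 ≤
        ((Finset.powersetCard 3 (univ : Finset (Fin n))).filter
          (fun T => ¬ (¬ T ⊆ W ∧ ¬ T ⊆ (univ \ W)))).card := by
      calc (n / 2).choose 3 + (n - n / 2).choose 3
          = (Finset.powersetCard 3 W).card + (Finset.powersetCard 3 (univ \ W)).card := by
            rw [Finset.card_powersetCard, Finset.card_powersetCard, hWcard, hWc]
      _ = ((Finset.powersetCard 3 W) ∪ (Finset.powersetCard 3 (univ \ W))).card :=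
            (Finset.card_union_of_disjoint hdisj).symm
      _ ≤ _ := Finset.card_le_card hsub
    have hchoose := choose_bound hn
    have h6Q : 6 * Q.card ≤ 5 * n.choose 3 := by
      have e1 : Q.card + ((Finset.powersetCard 3 (univ : Finset (Fin n))).filter
          (fun T => ¬ (¬ T ⊆ W ∧ ¬ T ⊆ (univ \ W)))).card = n.choose 3 := by
        rw [hQdef, ← hUcard]
        exact hsplit
      obtain ⟨A, hA⟩ : ∃ A, (n / 2).choose 3 = A := ⟨_, rfl⟩
      obtain ⟨B, hB⟩ : ∃ B, (n - n / 2).choose 3 = B := ⟨_, rfl⟩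
      rw [hA, hB] at hcards hchoose
      omega
    have hC0 : (0 : ℝ) ≤ (n.choose 3 : ℝ) := Nat.cast_nonneg _
    have h1 : (Q.card : ℝ) ≤ 5 / 6 * (n.choose 3 : ℝ) := by
      have : (6 : ℝ) * Q.card ≤ 5 * (n.choose 3 : ℝ) := by exact_mod_cast h6Q
      linarith
    calc (Q.card : ℝ) ≤ 5 / 6 * (n.choose 3 : ℝ) := h1
    _ ≤ (5 / 6 + ε) * (n.choose 3 : ℝ) := by nlinarith
end

section
/- For every integer l ≥ 1 there exists a real constant c > 0 such that for every n ≥ 3, every family Q of (2l+1)-element subsets of [n] that determines a non-minority ball satisfies |Q| ≥ c·n³. -/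
open Finset

section Coloring

variable {n : ℕ}

def coloringOf (R : Finset (Fin n)) : Fin n → Bool := fun z => decide (z ∈ R)

variable {A R : Finset (Fin n)} {b : Fin n}

lemma filter_coloringOf_of_mem (hb : b ∈ R) :
    A.filter (fun z => coloringOf R z = coloringOf R b) = A ∩ R := by
  ext z; simp [coloringOf, hb]

lemma filter_coloringOf_of_notMem (hb : b ∉ R) :
    A.filter (fun z => coloringOf R z = coloringOf R b) = A \ R := by
  ext z; simp [coloringOf, hb]

lemma majBall_coloringOf_iff (hA : Odd A.card) (hb : b ∈ A) :
    majBall (coloringOf R) A b ↔ (b ∈ R ↔ A.card < 2 * (A ∩ R).card) := by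
  obtain ⟨k, hk⟩ := hA
  have hsplit := card_sdiff_add_card_inter A R
  by_cases hbR : b ∈ R
  · simp [majBall, hb, hbR, filter_coloringOf_of_mem hbR]
  · simp only [majBall, hb, hbR, filter_coloringOf_of_notMem hbR, true_and, false_iff]
    omega

lemma notMem_of_nonMinBall_coloringOf (h : nonMinBall (coloringOf R) univ b)
    (hR : 2 * R.card < n) : b ∉ R := by
  intro hbR
  have := h.2
  rw [filter_coloringOf_of_mem hbR, univ_inter, card_univ, Fintype.card_fin] at this
  omega

lemma mem_of_nonMinBall_coloringOf (h : nonMinBall (coloringOf R) univ b)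
    (hR : n < 2 * R.card) : b ∈ R := by
  by_contra hbR
  have := h.2
  rw [filter_coloringOf_of_notMem hbR, ← compl_eq_univ_sdiff, card_compl, card_univ,
    Fintype.card_fin] at this
  have := card_le_univ R
  rw [Fintype.card_fin] at this
  omega

end Coloring

section CommonMajority

variable {n : ℕ} {T S P₁ P₂ : Finset (Fin n)}

lemma exists_mem_notMem_of_card_inter_lt {R R' : Finset (Fin n)}
    (h : (T ∩ R').card < (T ∩ R).card) : ∃ b ∈ T, b ∈ R ∧ b ∉ R' := by
  obtain ⟨b, hb, hb'⟩ := exists_mem_notMem_of_card_lt_card h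
  rw [mem_inter] at hb hb'
  exact ⟨b, hb.1, hb.2, fun h => hb' ⟨hb.1, h⟩⟩

lemma inter_nonempty_of_majorities (hP : Disjoint P₁ P₂)
    (h₁ : T.card < 2 * (T ∩ (S ∪ P₁)).card) (h₂ : T.card < 2 * (T ∩ (S ∪ P₂)).card)
    (h₃ : ¬ T.card < 2 * (T ∩ S).card) :
    (T ∩ S).Nonempty ∧ (T ∩ P₁).Nonempty ∧ (T ∩ P₂).Nonempty := by
  have hsub : (T ∩ (S ∪ P₁)) ∩ (T ∩ (S ∪ P₂)) ⊆ T ∩ S := by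
    intro z hz
    simp only [mem_inter, mem_union] at hz ⊢
    refine ⟨hz.1.1, ?_⟩
    rcases hz with ⟨⟨-, hS | h₁⟩, -, hS' | h₂⟩
    all_goals first | assumption | exact absurd h₂ (disjoint_left.mp hP h₁)
  have hcount := card_union_add_card_inter (T ∩ (S ∪ P₁)) (T ∩ (S ∪ P₂))
  have hunion := card_le_card (union_subset (inter_subset_left (s₁ := T) (s₂ := S ∪ P₁))
    (inter_subset_left (s₁ := T) (s₂ := S ∪ P₂)))
  have hS := card_le_card hsub
  have hP₁ : (T ∩ S).card < (T ∩ (S ∪ P₁)).card := by omega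
  have hP₂ : (T ∩ S).card < (T ∩ (S ∪ P₂)).card := by omega
  obtain ⟨b₁, hb₁, hb₁R, hb₁S⟩ := exists_mem_notMem_of_card_inter_lt hP₁
  obtain ⟨b₂, hb₂, hb₂R, hb₂S⟩ := exists_mem_notMem_of_card_inter_lt hP₂
  exact ⟨card_pos.mp (by omega),
    ⟨b₁, mem_inter.mpr ⟨hb₁, (mem_union.mp hb₁R).resolve_left hb₁S⟩⟩,
    ⟨b₂, mem_inter.mpr ⟨hb₂, (mem_union.mp hb₂R).resolve_left hb₂S⟩⟩⟩

lemma exists_common_majBall (hT : Odd T.card) (hP : Disjoint P₁ P₂)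
    (hmiss : ¬ ((T ∩ S).Nonempty ∧ (T ∩ P₁).Nonempty ∧ (T ∩ P₂).Nonempty)) :
    ∃ b ∈ T, majBall (coloringOf (S ∪ P₁)) T b ∧ majBall (coloringOf (S ∪ P₂)) T b ∧
      majBall (coloringOf S) T b := by
  suffices ∃ b ∈ T, (b ∈ S ∪ P₁ ↔ T.card < 2 * (T ∩ (S ∪ P₁)).card) ∧
      (b ∈ S ∪ P₂ ↔ T.card < 2 * (T ∩ (S ∪ P₂)).card) ∧
      (b ∈ S ↔ T.card < 2 * (T ∩ S).card) by
    obtain ⟨b, hb, h⟩ := this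
    exact ⟨b, hb, by simpa only [majBall_coloringOf_iff hT hb] using h⟩
  have hmono₁ : (T ∩ S).card ≤ (T ∩ (S ∪ P₁)).card :=
    card_le_card (inter_subset_inter_left subset_union_left)
  have hmono₂ : (T ∩ S).card ≤ (T ∩ (S ∪ P₂)).card :=
    card_le_card (inter_subset_inter_left subset_union_left)
  have notMem_S {b : Fin n} {P : Finset (Fin n)} (hb : b ∉ S ∪ P) : b ∉ S :=
    fun h => hb (mem_union_left _ h)
  by_cases h₃ : T.card < 2 * (T ∩ S).card
  · obtain ⟨b, hb⟩ := card_pos.mp (by omega : 0 < (T ∩ S).card)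
    rw [mem_inter] at hb
    exact ⟨b, hb.1, iff_of_true (mem_union_left _ hb.2) (by omega),
      iff_of_true (mem_union_left _ hb.2) (by omega), iff_of_true hb.2 h₃⟩
  by_cases h₁ : T.card < 2 * (T ∩ (S ∪ P₁)).card <;>
    by_cases h₂ : T.card < 2 * (T ∩ (S ∪ P₂)).card
  · exact absurd (inter_nonempty_of_majorities hP h₁ h₂ h₃) hmiss
  · obtain ⟨b, hb, hb₁, hb₂⟩ :=
      exists_mem_notMem_of_card_inter_lt (T := T) (R := S ∪ P₁) (R' := S ∪ P₂) (by omega)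
    exact ⟨b, hb, iff_of_true hb₁ h₁, iff_of_false hb₂ h₂, iff_of_false (notMem_S hb₂) h₃⟩
  · obtain ⟨b, hb, hb₂, hb₁⟩ :=
      exists_mem_notMem_of_card_inter_lt (T := T) (R := S ∪ P₂) (R' := S ∪ P₁) (by omega)
    exact ⟨b, hb, iff_of_false hb₁ h₁, iff_of_true hb₂ h₂, iff_of_false (notMem_S hb₁) h₃⟩
  · -- `T` is odd, so two minorities cannot cover it
    have hcover : (T ∩ ((S ∪ P₁) ∪ (S ∪ P₂))).card < (T ∩ univ).card := by
      obtain ⟨k, hk⟩ := hT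
      rw [inter_univ, inter_union_distrib_left]
      have := card_union_le (T ∩ (S ∪ P₁)) (T ∩ (S ∪ P₂))
      omega
    obtain ⟨b, hb, -, hbR⟩ := exists_mem_notMem_of_card_inter_lt hcover
    rw [mem_union, not_or] at hbR
    exact ⟨b, hb, iff_of_false hbR.1 h₁, iff_of_false hbR.2 h₂, iff_of_false (notMem_S hbR.1) h₃⟩

end CommonMajority

namespace Determines

variable {n : ℕ} {Q : Finset (Finset (Fin n))}

lemma exists_nonMinBall [Nonempty (Fin n)] (hdet : Determines Q) {C : Set (Fin n → Bool)}
    (hC : C.Nonempty) (h : ∀ T ∈ Q, ∃ b ∈ T, ∀ c ∈ C, majBall c T b) :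
    ∃ b, ∀ c ∈ C, nonMinBall c univ b := by
  choose! a ha using h
  obtain ⟨c₀, hc₀⟩ := hC
  obtain ⟨b, hb⟩ := hdet a (fun T hT => (ha T hT).1) ⟨c₀, fun T hT => (ha T hT).2 c₀ hc₀⟩
  exact ⟨b, fun c hc => hb c fun T hT => (ha T hT).2 c hc⟩

lemma nonempty (hdet : Determines Q) (hn : 3 ≤ n) : Q.Nonempty := by
  rw [nonempty_iff_ne_empty]
  rintro rfl
  have : Nonempty (Fin n) := ⟨⟨0, by omega⟩⟩
  obtain ⟨b, hb⟩ := hdet.exists_nonMinBall (C := Set.univ) Set.univ_nonempty (by simp)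
  have := notMem_of_nonMinBall_coloringOf (hb (coloringOf {b}) trivial) (by simp; omega)
  simp at this

lemma exists_inter_nonempty (hdet : Determines Q) (hQ : ∀ T ∈ Q, Odd T.card)
    {S P₁ P₂ : Finset (Fin n)} (hP : Disjoint P₁ P₂) (hS : 2 * S.card < n)
    (hSP₁ : n < 2 * (S ∪ P₁).card) (hSP₂ : n < 2 * (S ∪ P₂).card) :
    ∃ T ∈ Q, (T ∩ S).Nonempty ∧ (T ∩ P₁).Nonempty ∧ (T ∩ P₂).Nonempty := by
  by_contra hmiss
  have : Nonempty (Fin n) := ⟨⟨0, by omega⟩⟩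
  obtain ⟨b, hb⟩ := hdet.exists_nonMinBall
    (C := {coloringOf (S ∪ P₁), coloringOf (S ∪ P₂), coloringOf S}) (Set.insert_nonempty _ _)
    fun T hT => by
      obtain ⟨b, hbT, h₁, h₂, h₃⟩ :=
        exists_common_majBall (hQ T hT) hP fun h => hmiss ⟨T, hT, h⟩
      exact ⟨b, hbT, by simp [h₁, h₂, h₃]⟩
  have hb₁ := mem_of_nonMinBall_coloringOf (hb _ (by simp)) hSP₁
  have hb₂ := mem_of_nonMinBall_coloringOf (hb _ (by simp)) hSP₂
  have hbS := notMem_of_nonMinBall_coloringOf (hb _ (by simp)) hS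
  exact disjoint_left.mp hP ((mem_union.mp hb₁).resolve_left hbS)
    ((mem_union.mp hb₂).resolve_left hbS)

lemma le_card_filter_inter_nonempty {l : ℕ} (hdet : Determines Q)
    (hQ : ∀ T ∈ Q, T.card = 2 * l + 1) (hn : 12 ≤ n) {P₁ P₂ : Finset (Fin n)}
    (hP : Disjoint P₁ P₂) (hP₁ : P₁.card = 2) (hP₂ : P₂.card = 2) :
    n ≤ 4 * (2 * l + 1) * (Q.filter fun T => (T ∩ P₁).Nonempty ∧ (T ∩ P₂).Nonempty).card := by
  set F := Q.filter fun T => (T ∩ P₁).Nonempty ∧ (T ∩ P₂).Nonempty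
  set W := F.biUnion id ∪ P₁ ∪ P₂
  have hW : W.card ≤ (2 * l + 1) * F.card + 4 := by
    have := card_biUnion_le_card_mul F id (2 * l + 1) fun T hT => (hQ T (mem_filter.mp hT).1).le
    have := card_union_le (F.biUnion id ∪ P₁) P₂
    have := card_union_le (F.biUnion id) P₁
    rw [mul_comm]
    show (F.biUnion id ∪ P₁ ∪ P₂).card ≤ _
    omega
  by_contra hlt
  rw [mul_assoc] at hlt
  obtain ⟨S, hSW, hS⟩ := exists_subset_card_eq (s := Wᶜ) (n := (n - 1) / 2) (by
    rw [card_compl, Fintype.card_fin]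
    omega)
  have hdisj {P : Finset (Fin n)} (hPW : P ⊆ W) : Disjoint S P :=
    disjoint_of_subset_left hSW (disjoint_compl_left.mono_right hPW)
  have hcard {P : Finset (Fin n)} (hPW : P ⊆ W) (hP : P.card = 2) : n < 2 * (S ∪ P).card := by
    rw [card_union_of_disjoint (hdisj hPW)]
    omega
  obtain ⟨T, hTQ, hTS, hTP₁, hTP₂⟩ := hdet.exists_inter_nonempty
    (fun T hT => (hQ T hT) ▸ odd_two_mul_add_one l) hP (by omega)
    (hcard (by intro; simp +contextual [W]) hP₁) (hcard (by intro; simp +contextual [W]) hP₂)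
  have hTW : T ⊆ W := fun z hz =>
    mem_union_left _ (mem_union_left _ (mem_biUnion.mpr ⟨T, mem_filter.mpr ⟨hTQ, hTP₁, hTP₂⟩, hz⟩))
  exact (disjoint_iff_inter_eq_empty.mp (hdisj hTW).symm ▸ hTS).ne_empty rfl

end Determines

section Counting

variable {n : ℕ}

lemma pow_four_le_two_mul_descFactorial (hn : 12 ≤ n) : n ^ 4 ≤ 2 * n.descFactorial 4 := by
  obtain ⟨m, rfl⟩ := Nat.exists_eq_add_of_le hn
  simp only [Nat.descFactorial_succ, Nat.descFactorial_zero]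
  rw [show 12 + m - 1 = m + 11 by omega, show 12 + m - 2 = m + 10 by omega,
    show 12 + m - 3 = m + 9 by omega, Nat.sub_zero]
  nlinarith [Nat.zero_le m, Nat.zero_le (m ^ 2), Nat.zero_le (m ^ 3)]

lemma card_filter_fst_mem_or_snd_mem_le (T : Finset (Fin n)) :
    ((univ : Finset (Fin n × Fin n)).filter fun p => p.1 ∈ T ∨ p.2 ∈ T).card
      ≤ 2 * T.card * n := by
  calc _ ≤ (T ×ˢ univ ∪ univ ×ˢ T).card := card_le_card fun p => by simp
    _ ≤ (T ×ˢ (univ : Finset (Fin n))).card + ((univ : Finset (Fin n)) ×ˢ T).card :=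
      card_union_le _ _
    _ = 2 * T.card * n := by simp only [card_product, card_univ, Fintype.card_fin]; ring

lemma inter_pair_nonempty_iff {T : Finset (Fin n)} {a b : Fin n} :
    (T ∩ {a, b}).Nonempty ↔ a ∈ T ∨ b ∈ T := by
  simp [Finset.Nonempty, and_or_left, exists_or]

lemma card_filter_embedding_le (T : Finset (Fin n)) :
    ((univ : Finset (Fin 4 ↪ Fin n)).filter fun e =>
      (T ∩ {e 0, e 1}).Nonempty ∧ (T ∩ {e 2, e 3}).Nonempty).card ≤ (2 * T.card * n) ^ 2 := by
  set A := (univ : Finset (Fin n × Fin n)).filter fun p => p.1 ∈ T ∨ p.2 ∈ T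
  calc _ ≤ (A ×ˢ A).card := by
        refine card_le_card_of_injOn (fun e => ((e 0, e 1), (e 2, e 3))) (fun e he => ?_)
          fun e _ e' _ h => ?_
        · simpa [A, inter_pair_nonempty_iff] using he
        · simp only [Prod.mk.injEq] at h
          exact DFunLike.ext _ _ fun i => by fin_cases i <;> simp [h]
    _ ≤ (2 * T.card * n) ^ 2 := by
        rw [card_product, ← pow_two]
        exact Nat.pow_le_pow_left (card_filter_fst_mem_or_snd_mem_le T) 2

end Counting

lemma Determines.cube_le_card {n l : ℕ} {Q : Finset (Finset (Fin n))} (hdet : Determines Q)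
    (hQ : ∀ T ∈ Q, T.card = 2 * l + 1) (hn : 12 ≤ n) :
    n ^ 3 ≤ 32 * (2 * l + 1) ^ 3 * Q.card := by
  set k := 2 * l + 1
  set r : (Fin 4 ↪ Fin n) → Finset (Fin n) → Prop := fun e T =>
    (T ∩ {e 0, e 1}).Nonempty ∧ (T ∩ {e 2, e 3}).Nonempty
  have habove (e : Fin 4 ↪ Fin n) : n ≤ 4 * k * (Q.bipartiteAbove r e).card := by
    have hne {i j : Fin 4} (h : i ≠ j) : e i ≠ e j := e.injective.ne h
    exact hdet.le_card_filter_inter_nonempty hQ hn (by simp [hne]) (card_pair (hne (by decide)))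
      (card_pair (hne (by decide)))
  have hbelow (T) (hT : T ∈ Q) : (univ.bipartiteBelow r T).card ≤ (2 * k * n) ^ 2 :=
    hQ T hT ▸ card_filter_embedding_le T
  have hcount : n.descFactorial 4 * n ≤ 4 * k * (Q.card * (2 * k * n) ^ 2) := by
    calc n.descFactorial 4 * n = ∑ _e : Fin 4 ↪ Fin n, n := by
          simp [Fintype.card_embedding_eq]
      _ ≤ ∑ e : Fin 4 ↪ Fin n, 4 * k * (Q.bipartiteAbove r e).card := sum_le_sum fun e _ => habove e
      _ = 4 * k * ∑ T ∈ Q, (univ.bipartiteBelow r T).card := by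
          rw [← mul_sum, sum_card_bipartiteAbove_eq_sum_card_bipartiteBelow]
      _ ≤ 4 * k * (Q.card * (2 * k * n) ^ 2) := by
          gcongr
          simpa using sum_le_card_nsmul Q _ _ hbelow
  have hfour := pow_four_le_two_mul_descFactorial hn
  refine Nat.le_of_mul_le_mul_left (?_ : n ^ 2 * _ ≤ n ^ 2 * _) (by positivity)
  calc n ^ 2 * n ^ 3 = n ^ 4 * n := by ring
    _ ≤ 2 * n.descFactorial 4 * n := by gcongr
    _ ≤ 2 * (4 * k * (Q.card * (2 * k * n) ^ 2)) := by rw [mul_assoc]; gcongr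
    _ = n ^ 2 * (32 * k ^ 3 * Q.card) := by ring

theorem stmt_8_general (l : ℕ) :
    ∃ c : ℝ, 0 < c ∧ ∀ n : ℕ, 3 ≤ n → ∀ Q : Finset (Finset (Fin n)),
      (∀ T ∈ Q, T.card = 2 * l + 1) → Determines Q →
      c * (n : ℝ) ^ 3 ≤ (Q.card : ℝ) := by
  refine ⟨1 / (11 ^ 3 * (2 * l + 1) ^ 3), by positivity, fun n hn Q hQ hdet => ?_⟩
  have hbound : n ^ 3 ≤ 11 ^ 3 * (2 * l + 1) ^ 3 * Q.card := by
    rcases lt_or_ge n 12 with hsmall | hlarge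
    · calc n ^ 3 ≤ 11 ^ 3 * 1 ^ 3 * 1 := by simpa using Nat.pow_le_pow_left (by omega : n ≤ 11) 3
        _ ≤ 11 ^ 3 * (2 * l + 1) ^ 3 * Q.card := by
          gcongr
          · omega
          · exact (hdet.nonempty hn).card_pos
    · exact (hdet.cube_le_card hQ hlarge).trans (by gcongr; norm_num)
  rw [one_div_mul_eq_div, div_le_iff₀ (by positivity), mul_comm]
  exact_mod_cast hbound

theorem stmt_8 (l : ℕ) (hl : 1 ≤ l) :
    ∃ c : ℝ, 0 < c ∧ ∀ n : ℕ, 3 ≤ n → ∀ Q : Finset (Finset (Fin n)),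
      (∀ T ∈ Q, T.card = 2 * l + 1) → Determines Q →
      c * (n : ℝ) ^ 3 ≤ (Q.card : ℝ) :=
  stmt_8_general l
end

section
/- For every integer l ≥ 1 and every n ≥ 2l+1 there exists a family Q of 2l-element subsets of [n] with |Q| ≤ n(n−2l) that determines a non-minority ball (in the even-size model where the answer to a query may also be that the query has no majority ball). -/
/-- Legality in the even-query-size model: the answer to a query is either a
majority ball of the query, or `none`, meaning that the query has no majority ball. -/
def LegalE {n : ℕ} (Q : Finset (Finset (Fin n))) (a : Finset (Fin n) → Option (Fin n))
    (c : Fin n → Bool) : Prop :=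
  ∀ T ∈ Q, (∀ b, a T = some b → majBall c T b) ∧ (a T = none → ∀ b ∈ T, ¬ majBall c T b)

/-- The query set `Q` determines a non-minority ball in the even-query-size model. -/
def DeterminesE {n : ℕ} (Q : Finset (Finset (Fin n))) : Prop :=
  ∀ a : Finset (Fin n) → Option (Fin n), (∀ T ∈ Q, ∀ b, a T = some b → b ∈ T) →
    (∃ c, LegalE Q a c) →
    ∃ b : Fin n, ∀ c : Fin n → Bool, LegalE Q a c → nonMinBall c Finset.univ b

/-! Queries: every cyclic arc of `2l - 1` consecutive balls together with one further ball that
is not the ball just before the arc; below `l = m + 1`, so arcs have length `2m + 1`.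

If some query `{x} ∪ A` is answered "no majority", `A` has `l - 1` balls of the color of `x`
and `l` of the other, so the answer to every other query on `A` reveals whether its extra ball
has the color of `x`. This fixes the sizes of both color classes up to one ball, which is enough
to name a non-minority ball.

If every query has a majority, the majority color of any query is the overall majority color.
Either some arc is nearly balanced (`l - 1` against `l`), and then every ball outside it has the
arc's majority color; or, since consecutive arcs differ in one ball, one color has at least
`l + 1` balls in every arc, and double counting shows that it wins overall. -/

open Finset

section Coloring

variable {α : Type*}

lemma card_filter_eq_add_card_filter_eq_not (c : α → Bool) (s : Finset α) (e : Bool) :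
    #(s.filter (c · = e)) + #(s.filter (c · = !e)) = #s := by
  simp_rw [Bool.eq_not]
  exact card_filter_add_card_filter_not _

lemma card_filter_insert_le [DecidableEq α] (p : α → Prop) [DecidablePred p] (x : α)
    (s : Finset α) :
    #((insert x s).filter p) ≤ #(s.filter p) + 1 := by
  rw [filter_insert]
  split
  · exact card_insert_le _ _
  · exact Nat.le_succ _

end Coloring

section Majority

variable {n : ℕ} {c : Fin n → Bool}

lemma forall_not_majBall_iff {T : Finset (Fin n)} :
    (∀ b ∈ T, ¬ majBall c T b) ↔ ∀ e, 2 * #(T.filter (c · = e)) ≤ #T := by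
  refine ⟨fun h e => ?_, fun h b _ hb => (h (c b)).not_gt hb.2⟩
  obtain ⟨b, hb⟩ | hempty := (T.filter (c · = e)).eq_empty_or_nonempty.symm
  · obtain ⟨hbT, rfl⟩ := mem_filter.1 hb
    exact not_lt.1 fun hlt => h b hbT ⟨hbT, hlt⟩
  · simp [hempty]

lemma forall_not_majBall_insert_iff {A : Finset (Fin n)} {x : Fin n} (hx : x ∉ A) :
    (∀ b ∈ insert x A, ¬ majBall c (insert x A) b) ↔
      2 * #(A.filter (c · = c x)) + 1 = #A := by
  have hsum := card_filter_eq_add_card_filter_eq_not c A (c x)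
  have hsame : #((insert x A).filter (c · = c x)) = #(A.filter (c · = c x)) + 1 := by
    rw [filter_insert, if_pos rfl, card_insert_of_notMem (fun h => hx (mem_filter.1 h).1)]
  have hother : #((insert x A).filter (c · = !c x)) = #(A.filter (c · = !c x)) := by
    rw [filter_insert, if_neg (by simp)]
  rw [forall_not_majBall_iff, card_insert_of_notMem hx]
  constructor
  · intro h
    have h₁ := h (c x)
    have h₂ := h (!c x)
    omega
  · intro h e
    obtain rfl | rfl : e = c x ∨ e = !c x := by cases e <;> cases c x <;> simp
    · omega
    · omega

lemma LegalE.forall_not_majBall_iff {Q : Finset (Finset (Fin n))}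
    {a : Finset (Fin n) → Option (Fin n)} (hc : LegalE Q a c) {T : Finset (Fin n)}
    (hT : T ∈ Q) :
    (∀ b ∈ T, ¬ majBall c T b) ↔ a T = none := by
  refine ⟨fun h => ?_, (hc T hT).2⟩
  cases hb : a T with
  | none => rfl
  | some b => exact absurd ((hc T hT).1 b hb) (h b ((hc T hT).1 b hb).1)

lemma nonMinBall_univ_iff {b : Fin n} :
    nonMinBall c univ b ↔ n ≤ 2 * #(univ.filter (c · = c b)) := by
  simp [nonMinBall]

lemma card_filter_univ_eq_card_filter_erase_add_one (z : Fin n) :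
    #(univ.filter (c · = c z)) = #((univ.erase z).filter (c · = c z)) + 1 := by
  have hz : z ∈ univ.filter (c · = c z) := mem_filter.2 ⟨mem_univ z, rfl⟩
  rw [filter_erase, card_erase_add_one hz]

end Majority

lemma forall_le_of_ne_add_one {f : ℕ → ℕ} {a : ℕ} (hstep : ∀ i, f (i + 1) ≤ f i + 1)
    (hne : ∀ i, f i ≠ a + 1) (h0 : f 0 ≤ a) (i : ℕ) : f i ≤ a := by
  induction i with
  | zero => exact h0
  | succ i ih => have := hstep i; have := hne (i + 1); omega

section Arc

open Fin.NatCast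

variable {n : ℕ} [NeZero n]

def arc (k : ℕ) (j : Fin n) : Finset (Fin n) :=
  (range k).image fun t : ℕ => j + (t : Fin n)

lemma card_arc {k : ℕ} (hk : k ≤ n) (j : Fin n) : #(arc k j) = k := by
  rw [arc, card_image_of_injOn, card_range]
  intro s hs t ht h
  have := congrArg Fin.val (add_left_cancel h)
  simp only [coe_range, Set.mem_Iio] at hs ht
  rwa [Fin.val_cast_of_lt (by omega), Fin.val_cast_of_lt (by omega)] at this

lemma arc_succ (k : ℕ) (j : Fin n) : arc (k + 1) j = insert (j + k) (arc k j) := by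
  rw [arc, range_add_one, image_insert, arc]

lemma arc_succ' (k : ℕ) (j : Fin n) : arc (k + 1) j = insert j (arc k (j + 1)) := by
  ext y
  simp only [arc, mem_insert, mem_image, mem_range]
  constructor
  · rintro ⟨_ | t, ht, rfl⟩
    · simp
    · exact Or.inr ⟨t, by omega, by push_cast; abel⟩
  · rintro (rfl | ⟨t, ht, rfl⟩)
    · exact ⟨0, by omega, by simp⟩
    · exact ⟨t + 1, by omega, by push_cast; abel⟩

lemma arc_subset_arc_succ (k : ℕ) (j : Fin n) : arc k (j + 1) ⊆ arc (k + 1) j :=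
  arc_succ' k j ▸ subset_insert _ _

lemma notMem_arc_add_one {k : ℕ} (hk : k < n) (j : Fin n) : j ∉ arc k (j + 1) := by
  intro h
  have := card_arc hk j
  rw [arc_succ', insert_eq_of_mem h, card_arc hk.le] at this
  omega

lemma card_filter_erase_eq_add (p : Fin n → Prop) [DecidablePred p] {k : ℕ} (hk : k < n)
    (j : Fin n) :
    #((univ.erase j).filter p) = #((arc (k + 1) j)ᶜ.filter p) + #((arc k (j + 1)).filter p) := by
  have hsplit : univ.erase j = (arc (k + 1) j)ᶜ ∪ arc k (j + 1) := by
    ext y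
    by_cases hy : y ∈ arc k (j + 1)
    · simpa [hy] using ne_of_mem_of_not_mem hy (notMem_arc_add_one hk j)
    · simp [arc_succ', hy]
  rw [hsplit, filter_union, card_union_of_disjoint
    (disjoint_filter_filter (disjoint_compl_left.mono_right (arc_subset_arc_succ k j)))]

lemma card_filter_arc_add_one_le (p : Fin n → Prop) [DecidablePred p] (k : ℕ) (j : Fin n) :
    #((arc k (j + 1)).filter p) ≤ #((arc k j).filter p) + 1 :=
  calc #((arc k (j + 1)).filter p) ≤ #((arc (k + 1) j).filter p) :=
        card_le_card (filter_subset_filter _ (arc_subset_arc_succ k j))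
    _ ≤ #((arc k j).filter p) + 1 := by
        rw [arc_succ]
        exact card_filter_insert_le p _ _

lemma card_filter_arc_le_of_ne (p : Fin n → Prop) [DecidablePred p] {k a : ℕ}
    (hne : ∀ j, #((arc k j).filter p) ≠ a + 1) (h0 : #((arc k 0).filter p) ≤ a) (j : Fin n) :
    #((arc k j).filter p) ≤ a := by
  have := forall_le_of_ne_add_one (f := fun i : ℕ => #((arc k (i : Fin n)).filter p))
    (fun i => by simpa only [Nat.cast_succ] using card_filter_arc_add_one_le p k (i : Fin n))
    (fun i => hne _) (by simpa using h0) j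
  simpa only [Fin.cast_val_eq_self] using this

lemma card_filter_mem_arc_le (k : ℕ) (y : Fin n) : #(univ.filter fun j => y ∈ arc k j) ≤ k :=
  calc #(univ.filter fun j => y ∈ arc k j)
      ≤ #((range k).image fun t : ℕ => y - (t : Fin n)) := card_le_card fun j hj => by
        obtain ⟨t, ht, rfl⟩ := mem_image.1 (mem_filter.1 hj).2
        exact mem_image.2 ⟨t, ht, by simp⟩
    _ ≤ k := card_image_le.trans (card_range k).le

/-- Double counting: each ball lies in at most `k` of the `n` arcs of length `k`. -/
lemma mul_le_mul_card_filter_of_le_card_filter_arc (p : Fin n → Prop) [DecidablePred p]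
    {k b : ℕ} (h : ∀ j, b ≤ #((arc k j).filter p)) : n * b ≤ k * #(univ.filter p) := by
  have := card_nsmul_le_card_nsmul (R := ℕ) (fun j y => y ∈ arc k j) (s := univ)
    (t := univ.filter p) (m := b) (n := k)
    (fun j _ => by
      have hj : bipartiteAbove (fun j y => y ∈ arc k j) (univ.filter p) j =
          (arc k j).filter p := by
        ext y
        simp [bipartiteAbove, and_comm]
      rw [Nat.cast_id, hj]
      exact h j)
    (fun y _ => card_filter_mem_arc_le k y)
  simpa [mul_comm] using this

end Arc

section Queries

variable {n : ℕ} [NeZero n]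

def query (k : ℕ) (j x : Fin n) : Finset (Fin n) :=
  insert x (arc k (j + 1))

def queryFamily (k n : ℕ) [NeZero n] : Finset (Finset (Fin n)) :=
  univ.biUnion fun j => (arc (k + 1) j)ᶜ.image (query k j)

lemma mem_queryFamily {k : ℕ} {T : Finset (Fin n)} :
    T ∈ queryFamily k n ↔ ∃ j x, x ∉ arc (k + 1) j ∧ query k j x = T := by
  simp [queryFamily]

lemma query_mem_queryFamily {k : ℕ} {j x : Fin n} (hx : x ∉ arc (k + 1) j) :
    query k j x ∈ queryFamily k n :=
  mem_queryFamily.2 ⟨j, x, hx, rfl⟩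

lemma notMem_arc_of_notMem_arc_succ {k : ℕ} {j x : Fin n} (hx : x ∉ arc (k + 1) j) :
    x ∉ arc k (j + 1) :=
  fun h => hx (arc_subset_arc_succ k j h)

lemma card_query {k : ℕ} (hk : k < n) {j x : Fin n} (hx : x ∉ arc (k + 1) j) :
    #(query k j x) = k + 1 := by
  rw [query, card_insert_of_notMem (notMem_arc_of_notMem_arc_succ hx), card_arc hk.le]

lemma card_queryFamily_le {k : ℕ} (hk : k < n) : #(queryFamily k n) ≤ n * (n - (k + 1)) :=
  calc #(queryFamily k n) ≤ ∑ j, #((arc (k + 1) j)ᶜ.image (query k j)) := card_biUnion_le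
    _ ≤ ∑ _j : Fin n, (n - (k + 1)) := sum_le_sum fun j _ => card_image_le.trans_eq <| by
        rw [card_compl, card_arc hk, Fintype.card_fin]
    _ = n * (n - (k + 1)) := by simp

end Queries

section Determination

variable {n m : ℕ} [NeZero n] {c : Fin n → Bool} {a : Finset (Fin n) → Option (Fin n)}
  {j x xh b : Fin n}

lemma le_card_filter_of_majBall_query (hn : 2 * m + 1 < n) (hx : x ∉ arc (2 * m + 2) j)
    (hb : majBall c (query (2 * m + 1) j x) b) :
    m + 2 ≤ #((query (2 * m + 1) j x).filter (c · = c b)) := by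
  have := hb.2
  rw [card_query hn hx] at this
  omega

lemma LegalE.card_filter_arc_of_query_eq_none (hn : 2 * m + 1 < n)
    (hc : LegalE (queryFamily (2 * m + 1) n) a c) (hxh : xh ∉ arc (2 * m + 2) j)
    (hnone : a (query (2 * m + 1) j xh) = none) :
    #((arc (2 * m + 1) (j + 1)).filter (c · = c xh)) = m := by
  have := (hc.forall_not_majBall_iff (query_mem_queryFamily hxh)).2 hnone
  rw [query, forall_not_majBall_insert_iff (notMem_arc_of_notMem_arc_succ hxh),
    card_arc hn.le] at this
  omega

lemma LegalE.color_eq_iff_query_eq_none (hn : 2 * m + 1 < n)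
    (hc : LegalE (queryFamily (2 * m + 1) n) a c) (hxh : xh ∉ arc (2 * m + 2) j)
    (hnone : a (query (2 * m + 1) j xh) = none) (hx : x ∉ arc (2 * m + 2) j) :
    c x = c xh ↔ a (query (2 * m + 1) j x) = none := by
  have hxh' := hc.card_filter_arc_of_query_eq_none hn hxh hnone
  have hsum := card_filter_eq_add_card_filter_eq_not c (arc (2 * m + 1) (j + 1)) (c xh)
  rw [card_arc hn.le] at hsum
  rw [← hc.forall_not_majBall_iff (query_mem_queryFamily hx), query,
    forall_not_majBall_insert_iff (notMem_arc_of_notMem_arc_succ hx), card_arc hn.le]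
  constructor
  · intro h
    rw [h]
    omega
  · intro h
    by_contra hne
    rw [Bool.eq_not.2 hne] at h
    omega

lemma LegalE.card_filter_erase_of_query_eq_none (hn : 2 * m + 1 < n)
    (hc : LegalE (queryFamily (2 * m + 1) n) a c) (hxh : xh ∉ arc (2 * m + 2) j)
    (hnone : a (query (2 * m + 1) j xh) = none) :
    #((univ.erase j).filter (c · = c xh)) =
      #((arc (2 * m + 2) j)ᶜ.filter fun x => a (query (2 * m + 1) j x) = none) + m := by
  rw [card_filter_erase_eq_add _ hn j, hc.card_filter_arc_of_query_eq_none hn hxh hnone]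
  congr 2
  exact filter_congr fun x hx => hc.color_eq_iff_query_eq_none hn hxh hnone (mem_compl.1 hx)

lemma exists_nonMinBall_of_query_eq_none (hn : 2 * m + 1 < n) (hxh : xh ∉ arc (2 * m + 2) j)
    (hnone : a (query (2 * m + 1) j xh) = none) :
    ∃ b, ∀ c, LegalE (queryFamily (2 * m + 1) n) a c → nonMinBall c univ b := by
  set N := (arc (2 * m + 2) j)ᶜ.filter fun x => a (query (2 * m + 1) j x) = none
  have hcount : ∀ c, LegalE (queryFamily (2 * m + 1) n) a c →
      #((univ.erase j).filter (c · = c xh)) = #N + m ∧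
      #((univ.erase j).filter (c · = !c xh)) + #N + m + 1 = n := fun c hc => by
    have h₁ : _ = #N + m := hc.card_filter_erase_of_query_eq_none hn hxh hnone
    have h₂ := card_filter_eq_add_card_filter_eq_not c (univ.erase j) (c xh)
    rw [card_erase_of_mem (mem_univ j), card_univ, Fintype.card_fin] at h₂
    omega
  obtain hr | hr | hr : n ≤ 2 * (#N + m) ∨ 2 * (#N + m) + 2 ≤ n ∨ n = 2 * (#N + m) + 1 := by
    omega
  · refine ⟨xh, fun c hc => ?_⟩
    have := card_le_card (filter_subset_filter (c · = c xh) (erase_subset j univ))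
    have := hcount c hc
    rw [nonMinBall_univ_iff]
    omega
  · have hN : 0 < #N := card_pos.2 ⟨xh, mem_filter.2 ⟨mem_compl.2 hxh, hnone⟩⟩
    have hcompl : #N < #(arc (2 * m + 2) j)ᶜ := by
      rw [card_compl, card_arc hn, Fintype.card_fin]
      omega
    obtain ⟨x₁, hx₁, hx₁N⟩ := exists_mem_notMem_of_card_lt_card hcompl
    refine ⟨x₁, fun c hc => ?_⟩
    have hcx₁ : c x₁ = !c xh := Bool.eq_not.2 fun h => hx₁N <| mem_filter.2
      ⟨hx₁, (hc.color_eq_iff_query_eq_none hn hxh hnone (mem_compl.1 hx₁)).1 h⟩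
    have := card_le_card (filter_subset_filter (c · = !c xh) (erase_subset j univ))
    have := hcount c hc
    rw [nonMinBall_univ_iff, hcx₁]
    omega
  · refine ⟨j, fun c hc => ?_⟩
    have := hcount c hc
    rw [nonMinBall_univ_iff, card_filter_univ_eq_card_filter_erase_add_one]
    obtain h | h : c j = c xh ∨ c j = !c xh := by cases c j <;> cases c xh <;> simp
    all_goals rw [h]; omega

lemma nonMinBall_of_card_filter_arc_eq (hn : 2 * m + 1 < n)
    (hall : ∀ j, ∀ x ∉ arc (2 * m + 2) j, ∃ b, majBall c (query (2 * m + 1) j x) b)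
    {i : Fin n} {e : Bool} (hi : #((arc (2 * m + 1) (i + 1)).filter (c · = e)) = m)
    (hx : x ∉ arc (2 * m + 2) j) (hb : majBall c (query (2 * m + 1) j x) b) :
    nonMinBall c univ b := by
  have hout : ∀ y ∉ arc (2 * m + 2) i, c y ≠ e := by
    intro y hy hye
    obtain ⟨b', hb'⟩ := hall i y hy
    refine (forall_not_majBall_insert_iff (notMem_arc_of_notMem_arc_succ hy)).2 ?_ b' hb'.1 hb'
    rw [hye, hi, card_arc hn.le]
  have hsmall : #(univ.filter (c · = e)) ≤ m + 1 :=
    calc #(univ.filter (c · = e)) ≤ #((arc (2 * m + 2) i).filter (c · = e)) :=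
          card_le_card fun y hy => by
            rw [mem_filter] at hy ⊢
            exact ⟨by_contra fun h => hout y h hy.2, hy.2⟩
      _ ≤ m + 1 := by
          rw [arc_succ']
          exact (card_filter_insert_le _ _ _).trans_eq (by rw [hi])
  have hbig : m + 2 ≤ #(univ.filter (c · = c b)) :=
    (le_card_filter_of_majBall_query hn hx hb).trans
      (card_le_card (filter_subset_filter _ (subset_univ _)))
  have hcb : c b = !e := Bool.eq_not.2 fun h => by rw [h] at hbig; omega
  have := card_filter_eq_add_card_filter_eq_not c univ e
  rw [card_univ, Fintype.card_fin] at this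
  rw [nonMinBall_univ_iff, hcb]
  omega

lemma nonMinBall_of_forall_card_filter_arc_ne (hn : 2 * m + 1 < n)
    (hne : ∀ i e, #((arc (2 * m + 1) i).filter (c · = e)) ≠ m)
    (hx : x ∉ arc (2 * m + 2) j) (hb : majBall c (query (2 * m + 1) j x) b) :
    nonMinBall c univ b := by
  have hsum : ∀ i e, #((arc (2 * m + 1) i).filter (c · = e)) +
      #((arc (2 * m + 1) i).filter (c · = !e)) = 2 * m + 1 := fun i e =>
    (card_filter_eq_add_card_filter_eq_not c _ e).trans (card_arc hn.le i)
  obtain ⟨δ, hδ₀⟩ : ∃ δ, #((arc (2 * m + 1) 0).filter (c · = δ)) ≤ m := by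
    by_cases h : #((arc (2 * m + 1) 0).filter (c · = true)) ≤ m
    · exact ⟨true, h⟩
    · exact ⟨false, by have := hsum 0 true; simp only [Bool.not_true] at this; omega⟩
  have hδ : ∀ i, m + 2 ≤ #((arc (2 * m + 1) i).filter (c · = !δ)) := fun i => by
    have := card_filter_arc_le_of_ne (c · = δ)
      (fun i h => hne i (!δ) (by have := hsum i δ; omega)) hδ₀ i
    have := hne i δ
    have := hsum i δ
    omega
  have hcb : c b = !δ := Bool.eq_not.2 fun h => by
    have h₁ := le_card_filter_of_majBall_query hn hx hb
    rw [h, query] at h₁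
    have := card_filter_insert_le (c · = δ) x (arc (2 * m + 1) (j + 1))
    have := hδ (j + 1)
    have := hsum (j + 1) δ
    omega
  have := mul_le_mul_card_filter_of_le_card_filter_arc (c · = !δ) hδ
  rw [nonMinBall_univ_iff, hcb]
  nlinarith

lemma nonMinBall_of_forall_exists_majBall (hn : 2 * m + 1 < n)
    (hall : ∀ j, ∀ x ∉ arc (2 * m + 2) j, ∃ b, majBall c (query (2 * m + 1) j x) b)
    (hx : x ∉ arc (2 * m + 2) j) (hb : majBall c (query (2 * m + 1) j x) b) :
    nonMinBall c univ b := by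
  by_cases h : ∀ i e, #((arc (2 * m + 1) i).filter (c · = e)) ≠ m
  · exact nonMinBall_of_forall_card_filter_arc_ne hn h hx hb
  · obtain ⟨i, e, hi⟩ : ∃ i e, #((arc (2 * m + 1) i).filter (c · = e)) = m := by
      simpa only [not_forall, not_not] using h
    exact nonMinBall_of_card_filter_arc_eq hn hall (i := i - 1) (by rwa [sub_add_cancel]) hx hb

end Determination

theorem stmt_9 (l n : ℕ) (hl : 1 ≤ l) (hn : 2 * l + 1 ≤ n) :
    ∃ Q : Finset (Finset (Fin n)), (∀ T ∈ Q, T.card = 2 * l) ∧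
      Q.card ≤ n * (n - 2 * l) ∧ DeterminesE Q := by
  obtain ⟨m, rfl⟩ : ∃ m, l = m + 1 := ⟨l - 1, by omega⟩
  have : NeZero n := ⟨by omega⟩
  have hk : 2 * m + 1 < n := by omega
  refine ⟨queryFamily (2 * m + 1) n, fun T hT => ?_, card_queryFamily_le hk, fun a _ _ => ?_⟩
  · obtain ⟨j, x, hx, rfl⟩ := mem_queryFamily.1 hT
    exact card_query hk hx
  by_cases hnone : ∃ j, ∃ x ∉ arc (2 * m + 2) j, a (query (2 * m + 1) j x) = none
  · obtain ⟨j, xh, hxh, hnone⟩ := hnone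
    exact exists_nonMinBall_of_query_eq_none hk hxh hnone
  · obtain ⟨x, -, hx⟩ : ∃ x ∈ univ, x ∉ arc (2 * m + 2) (0 : Fin n) :=
      exists_mem_notMem_of_card_lt_card (by rw [card_univ, Fintype.card_fin, card_arc hk]; omega)
    obtain ⟨β, hβ⟩ := Option.ne_none_iff_exists'.1 fun h => hnone ⟨0, x, hx, h⟩
    refine ⟨β, fun c hc => nonMinBall_of_forall_exists_majBall hk (fun j y hy => ?_) hx
      ((hc _ (query_mem_queryFamily hx)).1 β hβ)⟩
    obtain ⟨b, hb⟩ := Option.ne_none_iff_exists'.1 fun h => hnone ⟨j, y, hy, h⟩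
    exact ⟨b, (hc _ (query_mem_queryFamily hy)).1 b hb⟩
end

section
/- Let l ≥ 1 and n = 2l+3. The family of all (2l+1)-element subsets of [n] determines a non-minority ball; that is, for every answer function assigning to each (2l+1)-subset T of [n] a ball a(T)∈T such that some coloring is legal for a, there exists a ball b∈[n] that is a non-minority ball of [n] under every coloring legal for a. -/
section Aux

open Finset

lemma bool_aux {x u v : Bool} (h : u ≠ v) : x = u ↔ ¬ x = v := by
  cases x <;> cases u <;> cases v <;> simp_all

lemma bool_aux2 {x u v : Bool} (h1 : x ≠ u) (h2 : v ≠ u) : x = v := by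
  cases x <;> cases u <;> cases v <;> simp_all

lemma card_filter_sdiff' {α : Type*} [DecidableEq α] {s t : Finset α} (ht : t ⊆ s)
    (P : α → Prop) [DecidablePred P] :
    ((s \ t).filter P).card + (t.filter P).card = (s.filter P).card := by
  rw [← Finset.card_union_of_disjoint
    (Finset.disjoint_filter_filter (Finset.sdiff_disjoint (s := t) (t := s))),
    ← Finset.filter_union, Finset.sdiff_union_of_subset ht]

end Aux

theorem stmt_10 (l : ℕ) (hl : 1 ≤ l) :
    Determines ((Finset.univ : Finset (Fin (2 * l + 3))).powersetCard (2 * l + 1)) := by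
  classical
  intro a ha _hex
  have hcardU : (Finset.univ : Finset (Fin (2 * l + 3))).card = 2 * l + 3 := by simp
  -- complements of pairs are queries
  have hTmem : ∀ x y : Fin (2 * l + 3), x ≠ y →
      (Finset.univ \ {x, y}) ∈
        (Finset.univ : Finset (Fin (2 * l + 3))).powersetCard (2 * l + 1) := by
    intro x y hxy
    rw [Finset.mem_powersetCard]
    refine ⟨Finset.sdiff_subset, ?_⟩
    rw [Finset.card_sdiff_of_subset (Finset.subset_univ _), hcardU, Finset.card_pair hxy]
    omega
  -- answers avoid the removed pair
  have hans : ∀ x y : Fin (2 * l + 3), x ≠ y →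
      a (Finset.univ \ {x, y}) ∉ ({x, y} : Finset (Fin (2 * l + 3))) := by
    intro x y hxy
    have h := ha _ (hTmem x y hxy)
    exact (Finset.mem_sdiff.mp h).2
  -- the family of "tight" majority sets
  set Tight : Finset (Fin (2 * l + 3)) → Prop := fun M =>
    M.card = l + 2 ∧ ∀ x y : Fin (2 * l + 3), x ≠ y →
      (a (Finset.univ \ {x, y}) ∈ M ↔ ¬ ({x, y} : Finset (Fin (2 * l + 3))) ⊆ M)
    with hTightdef
  set Fam : Finset (Finset (Fin (2 * l + 3))) := Finset.univ.filter Tight with hFamdef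
  have hFamTight : ∀ M ∈ Fam, Tight M := by
    intro M hM; exact (Finset.mem_filter.mp hM).2
  -- any two tight sets intersect
  have htwo : ∀ M1 ∈ Fam, ∀ M2 ∈ Fam, (M1 ∩ M2).Nonempty := by
    intro M1 h1 M2 h2
    have c1 : M1.card = l + 2 := (hFamTight M1 h1).1
    have c2 : M2.card = l + 2 := (hFamTight M2 h2).1
    have hu : (M1 ∪ M2).card ≤ 2 * l + 3 := by
      calc (M1 ∪ M2).card ≤ (Finset.univ : Finset (Fin (2 * l + 3))).card :=
            Finset.card_le_card (Finset.subset_univ _)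
        _ = 2 * l + 3 := hcardU
    have hsum := Finset.card_union_add_card_inter M1 M2
    rw [← Finset.card_pos]
    omega
  -- Claim A: all tight sets have a common element
  have hz : Fam.Nonempty → ∃ z, ∀ M ∈ Fam, z ∈ M := by
    intro hFne
    by_contra hcon
    push_neg at hcon
    -- minimal subfamily with empty intersection
    obtain ⟨G, hG, hmin⟩ := Finset.exists_min_image
      (Fam.powerset.filter (fun G => ∀ z : Fin (2 * l + 3), ∃ M ∈ G, z ∉ M))
      Finset.card
      ⟨Fam, Finset.mem_filter.mpr ⟨Finset.mem_powerset_self _, hcon⟩⟩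
    rw [Finset.mem_filter, Finset.mem_powerset] at hG
    obtain ⟨hGsub, hGP⟩ := hG
    have hminP : ∀ M ∈ G, ∃ z : Fin (2 * l + 3), ∀ M' ∈ G, M' ≠ M → z ∈ M' := by
      intro M hM
      by_contra h
      push_neg at h
      have hmem : G.erase M ∈
          Fam.powerset.filter (fun G => ∀ z : Fin (2 * l + 3), ∃ M ∈ G, z ∉ M) := by
        refine Finset.mem_filter.mpr ⟨Finset.mem_powerset.mpr
          ((Finset.erase_subset _ _).trans hGsub), ?_⟩
        intro z
        obtain ⟨M', hM', hne, hz'⟩ := h z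
        exact ⟨M', Finset.mem_erase.mpr ⟨hne, hM'⟩, hz'⟩
      have h1 := hmin _ hmem
      have h2 : (G.erase M).card < G.card := Finset.card_erase_lt_of_mem hM
      omega
    have hmemFam : ∀ M ∈ G, M ∈ Fam := fun M hM => hGsub hM
    -- cases on whether some two distinct members fail to cover the universe
    by_cases hcase : ∃ M1 ∈ G, ∃ M2 ∈ G, M1 ≠ M2 ∧
        M1 ∪ M2 ≠ (Finset.univ : Finset (Fin (2 * l + 3)))
    · obtain ⟨M1, hM1, M2, hM2, hne12, huniv⟩ := hcase
      obtain ⟨z1, hz1⟩ := hminP M1 hM1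
      obtain ⟨z2, hz2⟩ := hminP M2 hM2
      have hz1M2 : z1 ∈ M2 := hz1 M2 hM2 (Ne.symm hne12)
      have hz2M1 : z2 ∈ M1 := hz2 M1 hM1 hne12
      have hz1M1 : z1 ∉ M1 := by
        intro hmem
        obtain ⟨M, hM, hzM⟩ := hGP z1
        by_cases hMM : M = M1
        · exact hzM (hMM ▸ hmem)
        · exact hzM (hz1 M hM hMM)
      have hz2M2 : z2 ∉ M2 := by
        intro hmem
        obtain ⟨M, hM, hzM⟩ := hGP z2
        by_cases hMM : M = M2
        · exact hzM (hMM ▸ hmem)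
        · exact hzM (hz2 M hM hMM)
      have hz12 : z1 ≠ z2 := by
        intro h; rw [h] at hz1M2; exact hz2M2 hz1M2
      set u := a (Finset.univ \ {z1, z2}) with hu
      have huM1 : u ∈ M1 := by
        have ht := (hFamTight M1 (hmemFam M1 hM1)).2 z1 z2 hz12
        rw [ht]
        intro hsub
        exact hz1M1 (hsub (Finset.mem_insert_self _ _))
      have huM2 : u ∈ M2 := by
        have ht := (hFamTight M2 (hmemFam M2 hM2)).2 z1 z2 hz12
        rw [ht]
        intro hsub
        exact hz2M2 (hsub (by simp))
      have huOther : ∀ M ∈ G, M ≠ M1 → M ≠ M2 → u ∉ M := by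
        intro M hM hne1 hne2
        have ht := (hFamTight M (hmemFam M hM)).2 z1 z2 hz12
        rw [ht]
        intro hns
        apply hns
        intro t htmem
        simp only [Finset.mem_insert, Finset.mem_singleton] at htmem
        rcases htmem with h | h
        · exact h ▸ hz1 M hM hne1
        · exact h ▸ hz2 M hM hne2
      -- element outside M1 ∪ M2
      have hβ : ∃ β : Fin (2 * l + 3), β ∉ M1 ∪ M2 := by
        by_contra h
        push_neg at h
        exact huniv (Finset.eq_univ_iff_forall.mpr h)
      obtain ⟨β, hβ⟩ := hβ
      rw [Finset.mem_union] at hβ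
      push_neg at hβ
      have huβ : u ≠ β := by
        intro h; exact hβ.1 (h ▸ huM1)
      set w := a (Finset.univ \ {u, β}) with hw
      have hwAll : ∀ M ∈ G, w ∈ M := by
        intro M hM
        have ht := (hFamTight M (hmemFam M hM)).2 u β huβ
        rw [ht]
        intro hsub
        by_cases h1 : M = M1
        · exact hβ.1 (h1 ▸ hsub (by simp))
        · by_cases h2 : M = M2
          · exact hβ.2 (h2 ▸ hsub (by simp))
          · exact huOther M hM h1 h2 (hsub (Finset.mem_insert_self _ _))
      obtain ⟨M, hM, hwM⟩ := hGP w
      exact hwM (hwAll M hM)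
    · push_neg at hcase
      -- all pairs of distinct members cover the universe; find three distinct members
      obtain ⟨M1, hM1, _⟩ := hGP 0
      have hM1card : M1.card = l + 2 := (hFamTight M1 (hmemFam M1 hM1)).1
      have hM1ne : M1.Nonempty := Finset.card_pos.mp (by omega)
      obtain ⟨t1, ht1⟩ := hM1ne
      obtain ⟨M2, hM2, ht1M2⟩ := hGP t1
      have hne12 : M2 ≠ M1 := by
        intro h; exact ht1M2 (h ▸ ht1)
      obtain ⟨t2, ht2⟩ := htwo M1 (hmemFam M1 hM1) M2 (hmemFam M2 hM2)
      rw [Finset.mem_inter] at ht2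
      obtain ⟨M3, hM3, ht2M3⟩ := hGP t2
      have hne13 : M3 ≠ M1 := by
        intro h; exact ht2M3 (h ▸ ht2.1)
      have hne23 : M3 ≠ M2 := by
        intro h; exact ht2M3 (h ▸ ht2.2)
      have hM2card : M2.card = l + 2 := (hFamTight M2 (hmemFam M2 hM2)).1
      have hM3card : M3.card = l + 2 := (hFamTight M3 (hmemFam M3 hM3)).1
      have hu23 : M2 ∪ M3 = Finset.univ := hcase M2 hM2 M3 hM3 (Ne.symm hne23)
      have hu12 : M1 ∪ M2 = Finset.univ := hcase M1 hM1 M2 hM2 (Ne.symm hne12)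
      have hu13 : M1 ∪ M3 = Finset.univ := hcase M1 hM1 M3 hM3 (Ne.symm hne13)
      have hsum23 := Finset.card_union_add_card_inter M2 M3
      rw [hu23, hcardU] at hsum23
      -- univ \ M1 ⊆ M2 ∩ M3
      have hsub : Finset.univ \ M1 ⊆ M2 ∩ M3 := by
        intro t htmem
        rw [Finset.mem_sdiff] at htmem
        rw [Finset.mem_inter]
        constructor
        · have ht' : t ∈ M1 ∪ M2 := by rw [hu12]; exact Finset.mem_univ t
          rcases Finset.mem_union.mp ht' with h | h
          · exact absurd h htmem.2
          · exact h
        · have ht' : t ∈ M1 ∪ M3 := by rw [hu13]; exact Finset.mem_univ t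
          rcases Finset.mem_union.mp ht' with h | h
          · exact absurd h htmem.2
          · exact h
      have hcard1 : (Finset.univ \ M1).card = l + 1 := by
        rw [Finset.card_sdiff_of_subset (Finset.subset_univ _), hcardU, hM1card]
        omega
      have := Finset.card_le_card hsub
      omega
  -- find a pair not contained in any tight set
  have hq : ∃ x w : Fin (2 * l + 3), x ≠ w ∧
      ∀ M ∈ Fam, ¬ ({x, w} : Finset (Fin (2 * l + 3))) ⊆ M := by
    rcases Fam.eq_empty_or_nonempty with hF | hF
    · refine ⟨⟨0, by omega⟩, ⟨1, by omega⟩, by simp, ?_⟩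
      intro M hM
      rw [hF] at hM
      exact absurd hM (Finset.notMem_empty M)
    · obtain ⟨z, hzall⟩ := hz hF
      obtain ⟨M1, hM1⟩ := hF
      have ht1 : Tight M1 := hFamTight M1 hM1
      have hzM1 : z ∈ M1 := hzall M1 hM1
      have hc1 : 1 < M1.card := by rw [ht1.1]; omega
      obtain ⟨x, hxM1, hxz⟩ := Finset.exists_mem_ne hc1 z
      have hzx : z ≠ x := Ne.symm hxz
      set w := a (Finset.univ \ {z, x}) with hw
      have hwzx : w ∉ ({z, x} : Finset (Fin (2 * l + 3))) := hans z x hzx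
      have hxw : x ≠ w := by
        intro h
        exact hwzx (by rw [← h]; simp)
      refine ⟨x, w, hxw, ?_⟩
      intro M hMF hsub
      have ht : Tight M := hFamTight M hMF
      have hxM : x ∈ M := hsub (Finset.mem_insert_self _ _)
      have hwM : w ∈ M := hsub (by simp)
      have hpz : ({z, x} : Finset (Fin (2 * l + 3))) ⊆ M := by
        intro t htm
        simp only [Finset.mem_insert, Finset.mem_singleton] at htm
        rcases htm with h | h
        · exact h ▸ hzall M hMF
        · exact h ▸ hxM
      exact ((ht.2 z x hzx).mp hwM) hpz
  obtain ⟨x0, w0, hxw0, hqprop⟩ := hq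
  refine ⟨a (Finset.univ \ {x0, w0}), ?_⟩
  intro c hc
  set b := a (Finset.univ \ {x0, w0}) with hb
  -- majority counting for answers to pair-complement queries
  have hpair : ∀ x y : Fin (2 * l + 3), x ≠ y →
      l + 1 ≤ ((Finset.univ \ {x, y}).filter
        (fun t => c t = c (a (Finset.univ \ {x, y})))).card := by
    intro x y hxy
    have hmaj := hc _ (hTmem x y hxy)
    obtain ⟨_, hcard⟩ := hmaj
    have hTcard : (Finset.univ \ ({x, y} : Finset (Fin (2 * l + 3)))).card = 2 * l + 1 := by
      rw [Finset.card_sdiff_of_subset (Finset.subset_univ _), hcardU, Finset.card_pair hxy]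
      omega
    rw [hTcard] at hcard
    omega
  have hpartition : ∀ v : Fin (2 * l + 3),
      (Finset.univ.filter (fun t => c t = c v)).card +
      (Finset.univ.filter (fun t => ¬ c t = c v)).card = 2 * l + 3 := by
    intro v
    rw [Finset.card_filter_add_card_filter_not, hcardU]
  -- find a ball in the (weak) majority class
  have hmaj : ∃ v0 : Fin (2 * l + 3),
      l + 2 ≤ (Finset.univ.filter (fun t => c t = c v0)).card := by
    by_cases h : l + 2 ≤ (Finset.univ.filter (fun t : Fin (2 * l + 3) => c t = true)).card
    · have hne : (Finset.univ.filter (fun t : Fin (2 * l + 3) => c t = true)).Nonempty :=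
        Finset.card_pos.mp (by omega)
      obtain ⟨v0, hv0⟩ := hne
      have hcv0 : c v0 = true := (Finset.mem_filter.mp hv0).2
      exact ⟨v0, by rw [hcv0]; exact h⟩
    · push_neg at h
      have hpart : (Finset.univ.filter (fun t : Fin (2 * l + 3) => c t = true)).card +
          (Finset.univ.filter (fun t : Fin (2 * l + 3) => ¬ c t = true)).card = 2 * l + 3 := by
        rw [Finset.card_filter_add_card_filter_not, hcardU]
      have hfalse : l + 2 ≤
          (Finset.univ.filter (fun t : Fin (2 * l + 3) => ¬ c t = true)).card := by omega
      have hne : (Finset.univ.filter (fun t : Fin (2 * l + 3) => ¬ c t = true)).Nonempty :=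
        Finset.card_pos.mp (by omega)
      obtain ⟨v0, hv0⟩ := hne
      have hcv0 : ¬ c v0 = true := (Finset.mem_filter.mp hv0).2
      refine ⟨v0, ?_⟩
      have heq : (Finset.univ.filter (fun t : Fin (2 * l + 3) => c t = c v0)) =
          (Finset.univ.filter (fun t : Fin (2 * l + 3) => ¬ c t = true)) := by
        apply Finset.filter_congr
        intro t _
        constructor
        · intro he hx; exact hcv0 (he ▸ hx)
        · intro hnt
          exact bool_aux2 hnt hcv0
      rw [heq]
      exact hfalse
  obtain ⟨v0, hv0⟩ := hmaj
  set M : Finset (Fin (2 * l + 3)) := Finset.univ.filter (fun t => c t = c v0) with hM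
  have hMcardle : M.card ≤ 2 * l + 3 := by
    calc M.card ≤ (Finset.univ : Finset (Fin (2 * l + 3))).card :=
          Finset.card_le_card (Finset.subset_univ _)
      _ = 2 * l + 3 := hcardU
  -- complement class characterization
  have hcompl : ∀ v : Fin (2 * l + 3), ¬ c v = c v0 →
      (Finset.univ.filter (fun t => c t = c v)) =
      (Finset.univ.filter (fun t => ¬ c t = c v0)) := by
    intro v hv
    apply Finset.filter_congr
    intro t _
    exact bool_aux hv
  -- Fact A: if the majority class is big, every answer lies in it
  have hFactA : l + 3 ≤ M.card → ∀ x y : Fin (2 * l + 3), x ≠ y →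
      a (Finset.univ \ {x, y}) ∈ M := by
    intro hbig x y hxy
    by_contra hv
    set v := a (Finset.univ \ {x, y}) with hvdef
    have hvc : ¬ c v = c v0 := by
      intro h
      exact hv (Finset.mem_filter.mpr ⟨Finset.mem_univ _, h⟩)
    have hclass := hcompl v hvc
    have hclasscard : (Finset.univ.filter (fun t => c t = c v)).card = 2 * l + 3 - M.card := by
      rw [hclass]
      have h2 := hpartition v0
      rw [← hM] at h2
      omega
    have hd := card_filter_sdiff' (Finset.subset_univ ({x, y} : Finset (Fin (2 * l + 3))))
      (fun t => c t = c v)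
    have hp := hpair x y hxy
    rw [← hvdef] at hp
    omega
  -- Fact B: if the majority class has exactly l+2 elements, it is tight
  have hFactB : M.card = l + 2 → Tight M := by
    intro hcard
    refine ⟨hcard, ?_⟩
    intro x y hxy
    set v := a (Finset.univ \ {x, y}) with hvdef
    constructor
    · intro hvM hsub
      have hvc : c v = c v0 := (Finset.mem_filter.mp hvM).2
      have hclass : (Finset.univ.filter (fun t => c t = c v)) = M := by
        rw [hM]
        apply Finset.filter_congr
        intro t _
        rw [hvc]
      have hfull : (({x, y} : Finset (Fin (2 * l + 3))).filter (fun t => c t = c v)) =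
          ({x, y} : Finset (Fin (2 * l + 3))) := by
        apply Finset.filter_true_of_mem
        intro t htm
        have : t ∈ M := hsub htm
        have := (Finset.mem_filter.mp this).2
        rw [hvc]
        exact this
      have hd := card_filter_sdiff' (Finset.subset_univ ({x, y} : Finset (Fin (2 * l + 3))))
        (fun t => c t = c v)
      rw [hclass, hfull, Finset.card_pair hxy, hcard] at hd
      have hp := hpair x y hxy
      rw [← hvdef] at hp
      omega
    · intro hns
      by_contra hvM
      -- v ∉ M would follow if {x,y} ⊈ M leads to... we show v ∉ M → {x,y} ⊆ M
      -- here hvM : ¬ v ∈ M is NOT what we have; we have hns : ¬ {x,y} ⊆ M and hvM : ¬ v ∈ M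
      have hvc : ¬ c v = c v0 := by
        intro h
        exact hvM (Finset.mem_filter.mpr ⟨Finset.mem_univ _, h⟩)
      have hclass := hcompl v hvc
      have hclasscard : (Finset.univ.filter (fun t => c t = c v)).card = l + 1 := by
        rw [hclass]
        have h2 := hpartition v0
        rw [← hM] at h2
        omega
      have hd := card_filter_sdiff' (Finset.subset_univ ({x, y} : Finset (Fin (2 * l + 3))))
        (fun t => c t = c v)
      have hp := hpair x y hxy
      rw [← hvdef] at hp
      have hzero : (({x, y} : Finset (Fin (2 * l + 3))).filter (fun t => c t = c v)).card = 0 := by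
        omega
      have hempty : (({x, y} : Finset (Fin (2 * l + 3))).filter (fun t => c t = c v)) = ∅ :=
        Finset.card_eq_zero.mp hzero
      apply hns
      intro t htm
      have htv : ¬ c t = c v := by
        intro h
        have : t ∈ (({x, y} : Finset (Fin (2 * l + 3))).filter (fun t => c t = c v)) :=
          Finset.mem_filter.mpr ⟨htm, h⟩
        rw [hempty] at this
        exact absurd this (Finset.notMem_empty t)
      have hct : c t = c v0 := bool_aux2 htv (fun h => hvc h.symm)
      exact Finset.mem_filter.mpr ⟨Finset.mem_univ _, hct⟩
  -- conclude: b ∈ M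
  have hbM : b ∈ M := by
    rcases Nat.lt_or_ge M.card (l + 3) with hsmall | hbig
    · have hcard : M.card = l + 2 := by omega
      have htight := hFactB hcard
      have hMFam : M ∈ Fam := Finset.mem_filter.mpr ⟨Finset.mem_univ _, htight⟩
      have := hqprop M hMFam
      exact (htight.2 x0 w0 hxw0).mpr this
    · exact hFactA hbig x0 w0 hxw0
  -- b is a non-minority ball
  have hcb : c b = c v0 := (Finset.mem_filter.mp hbM).2
  refine ⟨Finset.mem_univ _, ?_⟩
  have heq : (Finset.univ.filter (fun x => c x = c b)) = M := by
    rw [hM]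
    apply Finset.filter_congr
    intro t _
    rw [hcb]
  rw [heq, hcardU]
  omega
end
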